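/- arXiv:1108.2354 — 3 statements merged into one kernel-verified Lean document; each statement's English description precedes it below -/
import Mathlib

section
/- Let T be a tree (a uniquely arcwise connected continuum that is a union of finitely many arcs) and let A be a connected subset of T. Then the topological boundary ∂A of A in T is a finite set. -/
open Set Filter Metric Topology TopologicalSpace

/-- An arc: a subset homeomorphic to `[0,1]`. -/
def IsArc {T : Type*} [TopologicalSpace T] (A : Set T) : Prop :=
  Nonempty (↥(Set.Icc (0:ℝ) 1) ≃ₜ ↥A)

/-- An arc with endpoints `x` and `y`. -/
def IsArcBetween {T : Type*} [TopologicalSpace T] (A : Set T) (x y : T) : Prop :=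
  ∃ e : ↥(Set.Icc (0:ℝ) 1) ≃ₜ ↥A,
    ((e ⟨0, by norm_num⟩ : ↥A) : T) = x ∧ ((e ⟨1, by norm_num⟩ : ↥A) : T) = y

/-- A tree: a continuum which is uniquely arcwise connected and is a point or a
union of finitely many arcs. -/
structure IsTreeSpace (T : Type*) [MetricSpace T] : Prop where
  compact : CompactSpace T
  conn : ConnectedSpace T
  uniqueArc : ∀ x y : T, x ≠ y → ∃! A : Set T, IsArcBetween A x y
  finiteArcs : (∃ x : T, (Set.univ : Set T) = {x}) ∨
    ∃ s : Finset (Set T), (∀ A ∈ s, IsArc A) ∧ ⋃₀ (s : Set (Set T)) = Set.univ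

/-- The unique arc from `x` to `y` in a tree. -/
noncomputable def treeArc {T : Type*} [MetricSpace T] (hT : IsTreeSpace T) (x y : T) :
    Set T := by
  classical exact if h : x = y then {x} else (hT.uniqueArc x y h).choose

/-- `Comp B x` : the connected component of `x` in `B` if `x ∈ B`, else `{x}`. -/
noncomputable def Comp {T : Type*} [TopologicalSpace T] (B : Set T) (x : T) : Set T := by
  classical exact if x ∈ B then connectedComponentIn B x else {x}

/-- `x` is an endpoint of the whole space (valence one). -/
def IsEnd {T : Type*} [TopologicalSpace T] (x : T) : Prop :=
  IsConnected ({x}ᶜ : Set T)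

/-- `x` is a cut-point of the whole space (valence at least two). -/
def IsCut {T : Type*} [TopologicalSpace T] (x : T) : Prop :=
  ¬ IsPreconnected ({x}ᶜ : Set T)

/-- `x` is an endpoint of the subspace `S` (valence one in `S`). -/
def IsEndpointOf {T : Type*} [TopologicalSpace T] (S : Set T) (x : T) : Prop :=
  x ∈ S ∧ IsConnected (S \ {x})

/-- A subcontinuum: a nonempty compact connected subset. -/
def IsSubcontinuum {T : Type*} [TopologicalSpace T] (A : Set T) : Prop :=
  A.Nonempty ∧ IsCompact A ∧ IsConnected A

/-- Attracting fixed point. -/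
def IsAFP {T : Type*} [TopologicalSpace T] (f : T → T) (x : T) : Prop :=
  f x = x ∧ ∀ U : Set T, IsOpen U → x ∈ U →
    ∃ V : Set T, IsOpen V ∧ x ∈ V ∧ V ⊆ U ∧ f '' closure V ⊆ V

/-- `A` is asymptotically periodic under `f`: for some `p ≥ 1` the sequence
`f^{pn}(A)` converges in the Hausdorff metric (to a nonempty compact set). -/
def AsympPeriodic {T : Type*} [MetricSpace T] (f : T → T) (A : Set T) : Prop :=
  ∃ p : ℕ, 1 ≤ p ∧ ∃ L : Set T, L.Nonempty ∧ IsCompact L ∧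
    Tendsto (fun n : ℕ => hausdorffDist (f^[p * n] '' A) L) atTop (𝓝 0)

/-- Kuratowski lower limit of a sequence of sets. -/
def KLiminf {T : Type*} [TopologicalSpace T] (A : ℕ → Set T) : Set T :=
  {x | ∀ U : Set T, IsOpen U → x ∈ U → ∀ᶠ n in atTop, (U ∩ A n).Nonempty}

/-- Kuratowski upper limit of a sequence of sets. -/
def KLimsup {T : Type*} [TopologicalSpace T] (A : ℕ → Set T) : Set T :=
  {x | ∀ U : Set T, IsOpen U → x ∈ U → ∃ᶠ n in atTop, (U ∩ A n).Nonempty}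

/-- Convergence in the hyperspace: the Kuratowski lower and upper limits agree. -/
def KConv {T : Type*} [TopologicalSpace T] (A : ℕ → Set T) : Prop :=
  KLiminf A = KLimsup A

/-- Set-theoretic limit superior of the iterated images of `A`. -/
def Ls {T : Type*} (f : T → T) (A : Set T) : Set T :=
  ⋂ m : ℕ, ⋃ n : ℕ, ⋃ (_ : m ≤ n), f^[n] '' A

/-- The hyperspace of subcontinua of `T`, with the Hausdorff metric. -/
abbrev SubCon (T : Type*) [MetricSpace T] :=
  {A : NonemptyCompacts T // IsConnected (A.1 : Set T)}

/-- The induced map on the hyperspace of subcontinua. -/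
noncomputable def indCon {T : Type*} [MetricSpace T] (f : T → T) (hf : Continuous f) :
    SubCon T → SubCon T :=
  fun A => ⟨⟨⟨f '' (A.1 : Set T), A.1.isCompact.image hf⟩, A.1.nonempty.image f⟩,
    A.2.image f hf.continuousOn⟩

/-- Topological entropy (Bowen–Dinaburg) of `f` on the subset `S`. -/
noncomputable def entropyOn {X : Type*} [MetricSpace X] (f : X → X) (S : Set X) : EReal :=
  Dynamics.coverEntropy f S

/-- Topological entropy of `f`. -/
noncomputable def entropy {X : Type*} [MetricSpace X] (f : X → X) : EReal :=
  Dynamics.coverEntropy f Set.univ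

/-- Maximal cardinality of an `(n,f,ε)`-separated subset of `S`. -/
noncomputable def sepNumOn {X : Type*} [MetricSpace X] (f : X → X) (S : Set X)
    (n : ℕ) (ε : ℝ) : ℕ :=
  sSup {k : ℕ | ∃ E : Finset X, ↑E ⊆ S ∧
    (∀ x ∈ E, ∀ y ∈ E, x ≠ y → ∃ j < n, ε < dist (f^[j] x) (f^[j] y)) ∧ E.card = k}

/-- Minimal cardinality of an `(n,f,ε)`-spanning subset of `S`. -/
noncomputable def spanNumOn {X : Type*} [MetricSpace X] (f : X → X) (S : Set X)
    (n : ℕ) (ε : ℝ) : ℕ :=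
  sInf {k : ℕ | ∃ F : Finset X, ↑F ⊆ S ∧
    (∀ x ∈ S, ∃ y ∈ F, ∀ j < n, dist (f^[j] x) (f^[j] y) ≤ ε) ∧ F.card = k}

noncomputable def sepNum {X : Type*} [MetricSpace X] (f : X → X) (n : ℕ) (ε : ℝ) : ℕ :=
  sepNumOn f Set.univ n ε

noncomputable def spanNum {X : Type*} [MetricSpace X] (f : X → X) (n : ℕ) (ε : ℝ) : ℕ :=
  spanNumOn f Set.univ n ε

/-- The graph of a map. -/
def graphOf {X : Type*} (φ : X → X) : Set (X × X) := {p | p.2 = φ p.1}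

/-- The functional envelope: the closure, in the hyperspace of nonempty compact
subsets of `X × X` with the Hausdorff metric, of the set of graphs of continuous
self-maps of `X`. -/
def FunctionalEnvelope (X : Type*) [MetricSpace X] :
    Set (NonemptyCompacts (X × X)) :=
  closure {G : NonemptyCompacts (X × X) | ∃ φ : X → X, Continuous φ ∧
    (G : Set (X × X)) = graphOf φ}

/-- `F` is the map induced by `f` on the functional envelope:
`F(φ) = f ∘ φ`, i.e. on graphs, `F(G) = (id × f)(G)`. -/
def IsEnvelopeMap {X : Type*} [MetricSpace X] (f : X → X)
    (F : ↥(FunctionalEnvelope X) → ↥(FunctionalEnvelope X)) : Prop :=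
  ∀ G : ↥(FunctionalEnvelope X),
    ((F G : NonemptyCompacts (X × X)) : Set (X × X)) =
      Prod.map id f '' ((G : NonemptyCompacts (X × X)) : Set (X × X))

/-- The setoid on `T` identifying all points of `M` (so that `Quotient` is `T/M`). -/
def collapseSetoid {T : Type*} (M : Set T) : Setoid T where
  r a b := a = b ∨ (a ∈ M ∧ b ∈ M)
  iseqv := by
    refine ⟨fun a => Or.inl rfl, ?_, ?_⟩
    · rintro a b (rfl | ⟨h1, h2⟩)
      exacts [Or.inl rfl, Or.inr ⟨h2, h1⟩]
    · rintro a b c (rfl | ⟨h1, h2⟩) h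
      · exact h
      · rcases h with rfl | ⟨h3, h4⟩
        exacts [Or.inr ⟨h1, h2⟩, Or.inr ⟨h1, h4⟩]
section TreeAux
open unitInterval

section Aux
variable {T : Type*} [TopologicalSpace T]

/-- symm of an injective path is injective -/
theorem path_symm_inj {x y : T} {γ : Path x y} (h : Function.Injective ⇑γ) :
    Function.Injective ⇑γ.symm := by
  have : ⇑γ.symm = ⇑γ ∘ unitInterval.symm := by
    funext t; simp [Path.symm_apply]
  rw [this]
  exact h.comp (fun a b hab => by
    have := congrArg unitInterval.symm hab
    simpa [unitInterval.symm_symm] using this)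

theorem path_symm_range {x y : T} (γ : Path x y) : Set.range ⇑γ.symm = Set.range ⇑γ := by
  have : ⇑γ.symm = ⇑γ ∘ unitInterval.symm := by
    funext t; simp [Path.symm_apply]
  rw [this, Set.range_comp]
  have hsurj : Function.Surjective (unitInterval.symm) := fun t =>
    ⟨unitInterval.symm t, by simp [unitInterval.symm_symm]⟩
  rw [hsurj.range_eq, Set.image_univ]

/-- An injective path parametrizes an arc. -/
theorem isArcBetween_range [T2Space T] {a b : T} (γ : Path a b)
    (hinj : Function.Injective ⇑γ) : IsArcBetween (Set.range ⇑γ) a b := by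
  have hce : IsClosedEmbedding ⇑γ := γ.continuous.isClosedEmbedding hinj
  refine ⟨hce.isEmbedding.toHomeomorph, ?_, ?_⟩
  · exact γ.source
  · exact γ.target

/-- Conversely, an arc gives an injective path. -/
theorem isArcBetween_path {A : Set T} {a b : T} (h : IsArcBetween A a b) :
    ∃ γ : Path a b, Function.Injective ⇑γ ∧ Set.range ⇑γ = A := by
  obtain ⟨e, h0, h1⟩ := h
  refine ⟨⟨⟨fun t => ((e t : ↥A) : T), by continuity⟩, h0, h1⟩, ?_, ?_⟩
  · exact Subtype.val_injective.comp e.injective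
  · show Set.range (fun t => ((e t : ↥A) : T)) = A
    have : (fun t => ((e t : ↥A) : T)) = Subtype.val ∘ ⇑e := rfl
    rw [this, Set.range_comp, e.surjective.range_eq, Set.image_univ, Subtype.range_val]

end Aux

section Sub
variable {T : Type*} [TopologicalSpace T]

/-- Restriction of a continuous `f : I → T` to `[p,q]`, as a path. -/
noncomputable def subPathF (f : ↥(Set.Icc (0:ℝ) 1) → T) (hf : Continuous f)
    {p q : ℝ} (hp : p ∈ Set.Icc (0:ℝ) 1) (hq : q ∈ Set.Icc (0:ℝ) 1) (hpq : p ≤ q) :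
    Path (f ⟨p, hp⟩) (f ⟨q, hq⟩) where
  toFun := fun s => f ⟨p + (s : ℝ) * (q - p), by
    constructor
    · nlinarith [s.2.1, s.2.2, hp.1, hp.2, hq.1, hq.2]
    · nlinarith [s.2.1, s.2.2, hp.1, hp.2, hq.1, hq.2]⟩
  continuous_toFun := by
    apply hf.comp
    apply Continuous.subtype_mk
    continuity
  source' := by
    apply congrArg f
    apply Subtype.ext
    show p + ((0 : I) : ℝ) * (q - p) = p
    norm_num
  target' := by
    apply congrArg f
    apply Subtype.ext
    show p + ((1 : I) : ℝ) * (q - p) = q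
    norm_num

theorem subPathF_inj {f : ↥(Set.Icc (0:ℝ) 1) → T} {hf : Continuous f}
    {p q : ℝ} {hp : p ∈ Set.Icc (0:ℝ) 1} {hq : q ∈ Set.Icc (0:ℝ) 1} {hpq : p ≤ q}
    (hlt : p < q) (hinj : Function.Injective f) :
    Function.Injective ⇑(subPathF f hf hp hq hpq) := by
  intro s s' h
  have h2 := hinj h
  have h3 : p + (s : ℝ) * (q - p) = p + (s' : ℝ) * (q - p) := congrArg Subtype.val h2
  have hqp : q - p ≠ 0 := sub_ne_zero.mpr hlt.ne'
  apply Subtype.ext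
  have := mul_right_cancel₀ hqp (by linarith : (s : ℝ) * (q - p) = (s' : ℝ) * (q - p))
  exact this

theorem subPathF_range_subset {f : ↥(Set.Icc (0:ℝ) 1) → T} {hf : Continuous f}
    {p q : ℝ} {hp : p ∈ Set.Icc (0:ℝ) 1} {hq : q ∈ Set.Icc (0:ℝ) 1} {hpq : p ≤ q} :
    Set.range ⇑(subPathF f hf hp hq hpq) ⊆
      f '' {t : ↥(Set.Icc (0:ℝ) 1) | p ≤ (t : ℝ) ∧ (t : ℝ) ≤ q} := by
  rintro x ⟨s, rfl⟩
  refine ⟨⟨p + (s : ℝ) * (q - p), ?_⟩, ⟨?_, ?_⟩, rfl⟩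
  · constructor
    · nlinarith [s.2.1, s.2.2, hp.1, hp.2, hq.1, hq.2]
    · nlinarith [s.2.1, s.2.2, hp.1, hp.2, hq.1, hq.2]
  · show p ≤ p + (s : ℝ) * (q - p)
    nlinarith [s.2.1, s.2.2]
  · show p + (s : ℝ) * (q - p) ≤ q
    nlinarith [s.2.1, s.2.2]

theorem mem_range_subPathF {f : ↥(Set.Icc (0:ℝ) 1) → T} {hf : Continuous f}
    {p q : ℝ} {hp : p ∈ Set.Icc (0:ℝ) 1} {hq : q ∈ Set.Icc (0:ℝ) 1} {hpq : p ≤ q}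
    (hlt : p < q) (t : ↥(Set.Icc (0:ℝ) 1)) (h1 : p ≤ (t : ℝ)) (h2 : (t : ℝ) ≤ q) :
    f t ∈ Set.range ⇑(subPathF f hf hp hq hpq) := by
  have hqp : (0:ℝ) < q - p := by linarith
  refine ⟨⟨((t : ℝ) - p) / (q - p), ⟨div_nonneg (by linarith) hqp.le, ?_⟩⟩, ?_⟩
  · rw [div_le_one hqp]; linarith
  · show f _ = f t
    apply congrArg f
    apply Subtype.ext
    show p + (((t : ℝ) - p) / (q - p)) * (q - p) = (t : ℝ)
    field_simp
    ring

end Sub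

section Glue
variable {T : Type*} [TopologicalSpace T]

theorem trans_inj {a d b : T} {γ1 : Path a d} {γ2 : Path d b}
    (i1 : Function.Injective ⇑γ1) (i2 : Function.Injective ⇑γ2)
    (hint : Set.range ⇑γ1 ∩ Set.range ⇑γ2 ⊆ {d}) :
    Function.Injective ⇑(γ1.trans γ2) := by
  have key : ∀ x y : I, (x : ℝ) ≤ 1/2 → ¬((y : ℝ) ≤ 1/2) →
      (γ1.trans γ2) x = (γ1.trans γ2) y → False := by
    intro x y hx hy h
    have hx2 : 2 * (x:ℝ) ∈ Set.Icc (0:ℝ) 1 := ⟨by linarith [x.2.1], by linarith⟩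
    have hy2 : 2 * (y:ℝ) - 1 ∈ Set.Icc (0:ℝ) 1 := ⟨by linarith, by linarith [y.2.2]⟩
    rw [Path.trans_apply, Path.trans_apply] at h
    rw [dif_pos hx, dif_neg hy] at h
    have hmem : γ1 ⟨2 * (x:ℝ), hx2⟩ ∈ Set.range ⇑γ1 ∩ Set.range ⇑γ2 :=
      ⟨⟨_, rfl⟩, ⟨_, h.symm⟩⟩
    have hd : γ1 ⟨2 * (x:ℝ), hx2⟩ = d := hint hmem
    have h2 : γ2 ⟨2 * (y:ℝ) - 1, hy2⟩ = d := h.symm.trans hd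
    have e1 : (⟨2 * (y:ℝ) - 1, hy2⟩ : I) = (0 : I) := i2 (h2.trans γ2.source.symm)
    have : 2 * (y:ℝ) - 1 = 0 := congrArg Subtype.val e1
    have : (y : ℝ) = 1/2 := by linarith
    exact hy (by linarith)
  intro x y h
  rcases le_or_gt (x : ℝ) (1/2) with hx | hx <;> rcases le_or_gt (y : ℝ) (1/2) with hy | hy
  · rw [Path.trans_apply, Path.trans_apply, dif_pos hx, dif_pos hy] at h
    have := congrArg Subtype.val (i1 h)
    exact Subtype.ext (by dsimp at this; linarith)
  · exact absurd h (by intro h; exact key x y hx (not_le.mpr hy) h)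
  · exact absurd h.symm (by intro h; exact key y x hy (not_le.mpr hx) h)
  · rw [Path.trans_apply, Path.trans_apply, dif_neg (not_le.mpr hx), dif_neg (not_le.mpr hy)] at h
    have := congrArg Subtype.val (i2 h)
    exact Subtype.ext (by dsimp at this; linarith)

/-- Combining two injective paths avoiding a set's complement. -/
theorem combine_paths [T2Space T] {U : Set T} {a d b : T}
    (h1 : ∃ γ : Path a d, Function.Injective ⇑γ ∧ Set.range ⇑γ ⊆ U)
    (h2 : ∃ γ : Path d b, Function.Injective ⇑γ ∧ Set.range ⇑γ ⊆ U) :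
    a = b ∨ ∃ γ : Path a b, Function.Injective ⇑γ ∧ Set.range ⇑γ ⊆ U := by
  by_cases hab : a = b
  · exact Or.inl hab
  right
  obtain ⟨γ1, i1, s1⟩ := h1
  obtain ⟨γ2, i2, s2⟩ := h2
  by_cases hmem : a ∈ Set.range ⇑γ2
  · -- a is on γ2; take the subpath of γ2 from a to b
    obtain ⟨u, hu⟩ := hmem
    have hu1 : (u : ℝ) < 1 := by
      rcases lt_or_eq_of_le u.2.2 with h | h
      · exact h
      · exfalso; apply hab
        rw [← hu, show u = (1:I) from Subtype.ext h]
        exact γ2.target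
    have he1 : γ2 ⟨(u : ℝ), u.2⟩ = a := by rw [← hu]
    have he2 : γ2 ⟨(1 : ℝ), by norm_num⟩ = b := γ2.target
    refine ⟨(subPathF ⇑γ2 γ2.continuous u.2 (by norm_num) hu1.le).cast he1.symm he2.symm,
      ?_, ?_⟩
    · rw [Path.cast_coe]; exact subPathF_inj hu1 i2
    · rw [Path.cast_coe]
      refine subset_trans (subset_trans subPathF_range_subset ?_) s2
      exact Set.image_subset_range _ _
  · -- first hitting time of range γ2 along γ1
    classical
    set D : Set ℝ := Subtype.val '' (⇑γ1 ⁻¹' Set.range ⇑γ2) with hD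
    have hr2closed : IsClosed (Set.range ⇑γ2) := (isCompact_range γ2.continuous).isClosed
    have hDcpt : IsCompact D := by
      apply IsCompact.image _ continuous_subtype_val
      exact (hr2closed.preimage γ1.continuous).isCompact
    have hDne : D.Nonempty :=
      ⟨1, ⟨(1 : I), show γ1 (1:I) ∈ Set.range ⇑γ2 from ⟨(0:I), γ2.source.trans γ1.target.symm⟩,
        rfl⟩⟩
    obtain ⟨t0, ht0D, ht0min⟩ := hDcpt.exists_isLeast hDne
    obtain ⟨t0', ht0'mem, ht0'val⟩ := ht0D
    have ht0Icc : t0 ∈ Set.Icc (0:ℝ) 1 := ht0'val ▸ t0'.2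
    have ht0pos : 0 < t0 := by
      rcases lt_or_eq_of_le ht0Icc.1 with h | h
      · exact h
      · exfalso; apply hmem
        have : γ1 t0' ∈ Set.range ⇑γ2 := ht0'mem
        have h0 : t0' = ⟨0, by norm_num⟩ := Subtype.ext (by rw [ht0'val, ← h])
        rw [h0] at this
        rwa [show γ1 ⟨0, by norm_num⟩ = a from γ1.source] at this
    -- d' = γ1 t0
    obtain ⟨u, hu⟩ := (show γ1 t0' ∈ Set.range ⇑γ2 from ht0'mem)
    by_cases hu1 : (u : ℝ) = 1
    · -- γ1 hits b itself
      have hb : γ1 t0' = b := by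
        rw [← hu, show u = (1:I) from Subtype.ext hu1]; exact γ2.target
      have he1 : γ1 ⟨(0:ℝ), by norm_num⟩ = a := γ1.source
      have he2 : γ1 ⟨t0, ht0Icc⟩ = b := by
        rw [show (⟨t0, ht0Icc⟩ : I) = t0' from Subtype.ext ht0'val.symm]; exact hb
      refine ⟨(subPathF ⇑γ1 γ1.continuous (by norm_num) ht0Icc ht0pos.le).cast
        he1.symm he2.symm, ?_, ?_⟩
      · rw [Path.cast_coe]; exact subPathF_inj ht0pos i1
      · rw [Path.cast_coe]
        exact subset_trans (subset_trans subPathF_range_subset (Set.image_subset_range _ _)) s1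
    · have hu1' : (u : ℝ) < 1 := lt_of_le_of_ne u.2.2 hu1
      set d' := γ1 t0' with hd'
      have he1 : γ1 ⟨(0:ℝ), by norm_num⟩ = a := γ1.source
      have he2 : γ1 ⟨t0, ht0Icc⟩ = d' := by
        rw [show (⟨t0, ht0Icc⟩ : I) = t0' from Subtype.ext ht0'val.symm]
      have he3 : γ2 ⟨(u:ℝ), u.2⟩ = d' := by rw [← hu]
      have he4 : γ2 ⟨(1:ℝ), by norm_num⟩ = b := γ2.target
      set p1 : Path a d' := (subPathF ⇑γ1 γ1.continuous (by norm_num) ht0Icc ht0pos.le).cast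
        he1.symm he2.symm with hp1
      set p2 : Path d' b := (subPathF ⇑γ2 γ2.continuous u.2 (by norm_num) hu1'.le).cast
        he3.symm he4.symm with hp2
      have ip1 : Function.Injective ⇑p1 := by rw [hp1, Path.cast_coe]; exact subPathF_inj ht0pos i1
      have ip2 : Function.Injective ⇑p2 := by rw [hp2, Path.cast_coe]; exact subPathF_inj hu1' i2
      have rp1 : Set.range ⇑p1 ⊆ ⇑γ1 '' {t : I | 0 ≤ (t:ℝ) ∧ (t:ℝ) ≤ t0} := by
        rw [hp1, Path.cast_coe]; exact subPathF_range_subset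
      have rp2 : Set.range ⇑p2 ⊆ Set.range ⇑γ2 := by
        rw [hp2, Path.cast_coe]
        exact subset_trans subPathF_range_subset (Set.image_subset_range _ _)
      have hint : Set.range ⇑p1 ∩ Set.range ⇑p2 ⊆ {d'} := by
        rintro x ⟨hx1, hx2⟩
        obtain ⟨t, ⟨_, ht2⟩, rfl⟩ := rp1 hx1
        have htD : (t : ℝ) ∈ D := ⟨t, rp2 hx2, rfl⟩
        have : t0 ≤ (t : ℝ) := ht0min htD
        have : t = t0' := Subtype.ext (by rw [ht0'val]; linarith)
        rw [this]; rfl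
      refine ⟨p1.trans p2, trans_inj ip1 ip2 hint, ?_⟩
      rw [Path.trans_range]
      apply Set.union_subset
      · exact subset_trans rp1 (subset_trans (Set.image_subset_range _ _) s1)
      · exact subset_trans rp2 s2

end Glue

theorem arc_local {T : Type*} [MetricSpace T] {L : Set T} (hL : IsArc L) {W : Set T}
    (hW : IsOpen W) {y : T} (hyL : y ∈ L) (hyW : y ∈ W) :
    ∃ O V : Set T, IsOpen O ∧ y ∈ O ∧ O ∩ L ⊆ V ∧ V ⊆ W ∧
      ∀ z ∈ V, z = y ∨ ∃ γ : Path y z, Function.Injective ⇑γ ∧ Set.range ⇑γ ⊆ V := by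
  obtain ⟨e⟩ := hL
  set f : ↥(Set.Icc (0:ℝ) 1) → T := fun t => ((e t : ↥L) : T) with hf
  have hfc : Continuous f := continuous_subtype_val.comp e.continuous
  have hfi : Function.Injective f := Subtype.val_injective.comp e.injective
  have hfr : Set.range f = L := by
    have h1 : f = Subtype.val ∘ ⇑e := rfl
    rw [h1, Set.range_comp, e.surjective.range_eq, Set.image_univ, Subtype.range_val]
  set ty : ↥(Set.Icc (0:ℝ) 1) := e.symm ⟨y, hyL⟩ with hty
  have hfty : f ty = y := by rw [hf, hty]; simp
  have hU' : IsOpen (f ⁻¹' W) := hW.preimage hfc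
  have htyU' : ty ∈ f ⁻¹' W := by rw [Set.mem_preimage, hfty]; exact hyW
  obtain ⟨ε, hε, hball⟩ := Metric.isOpen_iff.mp hU' ty htyU'
  have hZc : IsClosed {t : ↥(Set.Icc (0:ℝ) 1) | ε ≤ dist t ty} :=
    isClosed_le continuous_const (continuous_id.dist continuous_const)
  refine ⟨(f '' {t | ε ≤ dist t ty})ᶜ, f '' Metric.ball ty ε, ?_, ?_, ?_, ?_, ?_⟩
  · exact ((hZc.isCompact.image hfc).isClosed).isOpen_compl
  · intro hmem
    obtain ⟨t, hts, hfeq⟩ := hmem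
    have ht : t = ty := hfi (hfeq.trans hfty.symm)
    have h2 : ε ≤ dist t ty := hts
    rw [ht, dist_self] at h2
    linarith
  · rintro z ⟨hzO, hzL⟩
    rw [← hfr] at hzL
    obtain ⟨t, rfl⟩ := hzL
    have hno : ¬ ε ≤ dist t ty := fun h => hzO ⟨t, h, rfl⟩
    exact ⟨t, not_le.mp hno, rfl⟩
  · exact Set.image_subset_iff.mpr hball
  · rintro z ⟨t, htb, rfl⟩
    by_cases ht : t = ty
    · left; rw [ht, hfty]
    right
    have hdist : dist t ty < ε := htb
    have hband : ∀ u : ↥(Set.Icc (0:ℝ) 1),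
        ((ty:ℝ) ≤ (u:ℝ) ∧ (u:ℝ) ≤ (t:ℝ)) ∨ ((t:ℝ) ≤ (u:ℝ) ∧ (u:ℝ) ≤ (ty:ℝ)) →
        u ∈ Metric.ball ty ε := by
      intro u hu
      have h1 : dist u ty ≤ dist t ty := by
        rw [Subtype.dist_eq, Subtype.dist_eq, Real.dist_eq, Real.dist_eq]
        rcases hu with ⟨h1, h2⟩ | ⟨h1, h2⟩
        · rw [abs_of_nonneg (by linarith), abs_of_nonneg (by linarith)]; linarith
        · rw [abs_of_nonpos (by linarith), abs_of_nonpos (by linarith)]; linarith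
      exact lt_of_le_of_lt h1 hdist
    have htne : (t : ℝ) ≠ (ty : ℝ) := fun h => ht (Subtype.ext h)
    rcases lt_or_gt_of_ne htne with hlt | hgt
    · -- t < ty : path from f t to f ty, then symm
      have he1 : f ⟨(t:ℝ), t.2⟩ = f t := rfl
      have he2 : f ⟨(ty:ℝ), ty.2⟩ = y := hfty
      set γ0 : Path (f t) y :=
        (subPathF f hfc t.2 ty.2 hlt.le).cast he1.symm he2.symm with hγ0
      have hi0 : Function.Injective ⇑γ0 := by
        rw [hγ0, Path.cast_coe]; exact subPathF_inj hlt hfi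
      have hr0 : Set.range ⇑γ0 ⊆ f '' Metric.ball ty ε := by
        rw [hγ0, Path.cast_coe]
        refine subset_trans subPathF_range_subset ?_
        rintro x ⟨u, ⟨hu1, hu2⟩, rfl⟩
        exact ⟨u, hband u (Or.inr ⟨hu1, hu2⟩), rfl⟩
      exact ⟨γ0.symm, path_symm_inj hi0, by rw [path_symm_range]; exact hr0⟩
    · -- ty < t
      have he1 : f ⟨(ty:ℝ), ty.2⟩ = y := hfty
      have he2 : f ⟨(t:ℝ), t.2⟩ = f t := rfl
      set γ0 : Path y (f t) :=
        (subPathF f hfc ty.2 t.2 hgt.le).cast he1.symm he2.symm with hγ0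
      have hi0 : Function.Injective ⇑γ0 := by
        rw [hγ0, Path.cast_coe]; exact subPathF_inj hgt hfi
      have hr0 : Set.range ⇑γ0 ⊆ f '' Metric.ball ty ε := by
        rw [hγ0, Path.cast_coe]
        refine subset_trans subPathF_range_subset ?_
        rintro x ⟨u, ⟨hu1, hu2⟩, rfl⟩
        exact ⟨u, hband u (Or.inl ⟨hu1, hu2⟩), rfl⟩
      exact ⟨γ0, hi0, hr0⟩

theorem chain_to_path {T : Type*} [TopologicalSpace T] [T2Space T] {C : Set T} {a y : T}
    (h : Relation.ReflTransGen
      (fun u v => u = v ∨ ∃ γ : Path u v, Function.Injective ⇑γ ∧ Set.range ⇑γ ⊆ C) a y) :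
    a = y ∨ ∃ γ : Path a y, Function.Injective ⇑γ ∧ Set.range ⇑γ ⊆ C := by
  induction h with
  | refl => exact Or.inl rfl
  | tail h1 h2 ih =>
    rcases h2 with rfl | h2
    · exact ih
    rcases ih with rfl | h1'
    · exact Or.inr h2
    · exact combine_paths h1' h2

theorem arc_isClosed {T : Type*} [MetricSpace T] {L : Set T} (hL : IsArc L) : IsClosed L := by
  obtain ⟨e⟩ := hL
  have hfc : Continuous (fun t : ↥(Set.Icc (0:ℝ) 1) => ((e t : ↥L) : T)) :=
    continuous_subtype_val.comp e.continuous
  have hfr : Set.range (fun t : ↥(Set.Icc (0:ℝ) 1) => ((e t : ↥L) : T)) = L := by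
    have h1 : (fun t : ↥(Set.Icc (0:ℝ) 1) => ((e t : ↥L) : T)) = Subtype.val ∘ ⇑e := rfl
    rw [h1, Set.range_comp, e.surjective.range_eq, Set.image_univ, Subtype.range_val]
  rw [← hfr]
  exact (isCompact_range hfc).isClosed

theorem key_sep {T : Type*} [MetricSpace T] (hT : IsTreeSpace T) {A : Set T}
    (hA : IsPreconnected A) {a b c : T} (ha : a ∈ A) (hb : b ∈ A) (hc : c ∉ A)
    (hab : a ≠ b) (hca : c ≠ a) (hcb : c ≠ b)
    (η : Path a b) (hη : Function.Injective ⇑η) (hcη : c ∈ Set.range ⇑η) : False := by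
  classical
  rcases hT.finiteArcs with ⟨x, hx⟩ | ⟨s, harcs, hcover⟩
  · apply hab
    have h1 : a ∈ ({x} : Set T) := hx ▸ Set.mem_univ a
    have h2 : b ∈ ({x} : Set T) := hx ▸ Set.mem_univ b
    exact (Set.mem_singleton_iff.mp h1).trans (Set.mem_singleton_iff.mp h2).symm
  set R : T → T → Prop := fun y z =>
    y = z ∨ ∃ γ : Path y z, Function.Injective ⇑γ ∧ Set.range ⇑γ ⊆ {c}ᶜ with hR
  have hRsymm : ∀ {y z}, R y z → R z y := by
    rintro y z (rfl | ⟨γ, hi, hr⟩)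
    · exact Or.inl rfl
    · exact Or.inr ⟨γ.symm, path_symm_inj hi, by rw [path_symm_range]; exact hr⟩
  have hloc : ∀ y, y ≠ c → ∃ O : Set T, IsOpen O ∧ y ∈ O ∧ ∀ z ∈ O, R y z ∧ z ≠ c := by
    intro y hyc
    have hchoice : ∀ L ∈ s, ∃ O : Set T, IsOpen O ∧ y ∈ O ∧
        ∀ z, z ∈ O → z ∈ L → R y z ∧ z ≠ c := by
      intro L hL
      by_cases hyL : y ∈ L
      · obtain ⟨O, V, hO, hyO, hOL, hVW, hV⟩ :=
          arc_local (harcs L hL) (isOpen_compl_singleton (x := c)) hyL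
            (by simpa using hyc)
        refine ⟨O, hO, hyO, fun z hzO hzL => ?_⟩
        have hzV : z ∈ V := hOL ⟨hzO, hzL⟩
        refine ⟨?_, by simpa using hVW hzV⟩
        rcases hV z hzV with h | ⟨γ, hi, hr⟩
        · exact Or.inl h.symm
        · exact Or.inr ⟨γ, hi, subset_trans hr hVW⟩
      · exact ⟨Lᶜ, (arc_isClosed (harcs L hL)).isOpen_compl, hyL,
          fun z hz hzL => absurd hzL hz⟩
    choose O hO1 hO2 hO3 using hchoice
    refine ⟨⋂ L ∈ s, (if h : L ∈ s then O L h else Set.univ), ?_, ?_, ?_⟩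
    · exact isOpen_biInter_finset fun L hL => by rw [dif_pos hL]; exact hO1 L hL
    · exact Set.mem_iInter₂.mpr fun L hL => by rw [dif_pos hL]; exact hO2 L hL
    · intro z hz
      have hzuniv : z ∈ ⋃₀ (s : Set (Set T)) := hcover ▸ Set.mem_univ z
      obtain ⟨L, hLs, hzL⟩ := hzuniv
      have hLs' : L ∈ s := hLs
      have hzO : z ∈ O L hLs' := by
        have := Set.mem_iInter₂.mp hz L hLs'
        rwa [dif_pos hLs'] at this
      exact hO3 L hLs' z hzO hzL
  set K : Set T := {y | Relation.ReflTransGen R a y} ∩ {c}ᶜ with hK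
  have hKopen : IsOpen K := by
    rw [isOpen_iff_forall_mem_open]
    rintro y ⟨hychain, hyc⟩
    obtain ⟨O, hO, hyO, hOprop⟩ := hloc y (by simpa using hyc)
    refine ⟨O, fun z hz => ⟨?_, ?_⟩, hO, hyO⟩
    · exact hychain.tail (hOprop z hz).1
    · simpa using (hOprop z hz).2
  set V : Set T := {c}ᶜ \ K with hV
  have hVopen : IsOpen V := by
    rw [isOpen_iff_forall_mem_open]
    rintro y ⟨hyc, hyK⟩
    obtain ⟨O, hO, hyO, hOprop⟩ := hloc y (by simpa using hyc)
    refine ⟨O, fun z hz => ⟨by simpa using (hOprop z hz).2, fun hzK => hyK ?_⟩, hO, hyO⟩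
    · exact ⟨hzK.1.tail (hRsymm (hOprop z hz).1), hyc⟩
  have haK : a ∈ K := ⟨Relation.ReflTransGen.refl, by simpa using hca.symm⟩
  have hbK : b ∉ K := by
    rintro ⟨hchain, -⟩
    rcases chain_to_path hchain with rfl | ⟨θ, hθi, hθr⟩
    · exact hab rfl
    have arc1 := isArcBetween_range η hη
    have arc2 := isArcBetween_range θ hθi
    obtain ⟨Au, hAu, huniq⟩ := hT.uniqueArc a b hab
    have heq : Set.range ⇑θ = Set.range ⇑η := (huniq _ arc2).trans (huniq _ arc1).symm
    have : c ∈ Set.range ⇑θ := heq ▸ hcη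
    exact (hθr this) rfl
  have hbV : b ∈ V := ⟨by simpa using hcb.symm, hbK⟩
  have hsub : A ⊆ K ∪ V := by
    intro z hz
    have hzc : z ≠ c := fun h => hc (h ▸ hz)
    by_cases hzK : z ∈ K
    · exact Or.inl hzK
    · exact Or.inr ⟨by simpa using hzc, hzK⟩
  obtain ⟨w, hwA, hwK, hwV⟩ := hA K V hKopen hVopen hsub ⟨a, ha, haK⟩ ⟨b, hb, hbV⟩
  exact hwV.2 hwK

theorem ordConnected_frontier_finite {S : Set ℝ} (hsub : S ⊆ Set.Icc 0 1)
    (hord : Set.OrdConnected S) : (frontier S).Finite := by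
  rcases S.eq_empty_or_nonempty with rfl | hne
  · simp
  have hbb : BddBelow S := ⟨0, fun z hz => (hsub hz).1⟩
  have hba : BddAbove S := ⟨1, fun z hz => (hsub hz).2⟩
  apply Set.Finite.subset ((Set.finite_singleton (sSup S)).insert (sInf S))
  intro x hx
  have hxcl : x ∈ closure S := hx.1
  have h1 : closure S ⊆ Set.Icc (sInf S) (sSup S) :=
    closure_minimal (fun z hz => ⟨csInf_le hbb hz, le_csSup hba hz⟩) isClosed_Icc
  by_contra hmem
  simp only [Set.mem_insert_iff, Set.mem_singleton_iff, not_or] at hmem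
  have hlt1 : sInf S < x := lt_of_le_of_ne (h1 hxcl).1 (Ne.symm hmem.1)
  have hlt2 : x < sSup S := lt_of_le_of_ne (h1 hxcl).2 hmem.2
  obtain ⟨u, huS, hux⟩ := exists_lt_of_csInf_lt hne hlt1
  obtain ⟨v, hvS, hxv⟩ := exists_lt_of_lt_csSup hne hlt2
  have : x ∈ interior S := mem_interior.mpr
    ⟨Set.Ioo u v, subset_trans Set.Ioo_subset_Icc_self (hord.out huS hvS),
      isOpen_Ioo, ⟨hux, hxv⟩⟩
  exact hx.2 this


end TreeAux

open unitInterval in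
/-- The boundary of a connected subset of a tree is finite. -/
theorem frontier_finite_of_connected_subset {T : Type*} [MetricSpace T]
    (hT : IsTreeSpace T) (A : Set T) (hA : IsPreconnected A) :
    (frontier A).Finite := by
  classical
  rcases hT.finiteArcs with ⟨x, hx⟩ | ⟨s, harcs, hcover⟩
  · exact Set.Finite.subset (Set.finite_singleton x)
      (by rw [← hx]; exact Set.subset_univ _)
  have hf : ∀ L ∈ s, ∃ f : ↥(Set.Icc (0:ℝ) 1) → T,
      Continuous f ∧ Function.Injective f ∧ Set.range f = L := by
    intro L hL; obtain ⟨e⟩ := harcs L hL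
    refine ⟨fun t => ((e t : ↥L) : T), continuous_subtype_val.comp e.continuous,
      Subtype.val_injective.comp e.injective, ?_⟩
    have h1 : (fun t => ((e t : ↥L) : T)) = Subtype.val ∘ ⇑e := rfl
    rw [h1, Set.range_comp, e.surjective.range_eq, Set.image_univ, Subtype.range_val]
  choose f hfc hfi hfr using hf
  -- ordConnectedness of the parameter sets
  have hord : ∀ L (hL : L ∈ s), Set.OrdConnected (Subtype.val '' (f L hL ⁻¹' A)) := by
    intro L hL
    constructor
    rintro p ⟨tp, htpA, rfl⟩ r ⟨tr, htrA, rfl⟩ q hq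
    have hq01 : q ∈ Set.Icc (0:ℝ) 1 := ⟨le_trans tp.2.1 hq.1, le_trans hq.2 tr.2.2⟩
    refine ⟨⟨q, hq01⟩, ?_, rfl⟩
    by_contra hqA
    have hqp : (tp : ℝ) ≠ q := fun h => hqA (by
      rw [show (⟨q, hq01⟩ : ↥(Set.Icc (0:ℝ) 1)) = tp from Subtype.ext h.symm]; exact htpA)
    have hqr : q ≠ (tr : ℝ) := fun h => hqA (by
      rw [show (⟨q, hq01⟩ : ↥(Set.Icc (0:ℝ) 1)) = tr from Subtype.ext h]; exact htrA)
    have hlt1 : (tp : ℝ) < q := lt_of_le_of_ne hq.1 hqp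
    have hlt2 : q < (tr : ℝ) := lt_of_le_of_ne hq.2 hqr
    have hptr : (tp : ℝ) < (tr : ℝ) := hlt1.trans hlt2
    set η : Path (f L hL ⟨(tp:ℝ), tp.2⟩) (f L hL ⟨(tr:ℝ), tr.2⟩) :=
      subPathF (f L hL) (hfc L hL) tp.2 tr.2 hptr.le with hη
    have hcmem : f L hL ⟨q, hq01⟩ ∈ Set.range ⇑η :=
      mem_range_subPathF hptr ⟨q, hq01⟩ hq.1 hq.2
    have hab : f L hL ⟨(tp:ℝ), tp.2⟩ ≠ f L hL ⟨(tr:ℝ), tr.2⟩ := fun h =>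
      absurd (congrArg Subtype.val (hfi L hL h)) (by simpa using hptr.ne)
    have hca : f L hL ⟨q, hq01⟩ ≠ f L hL ⟨(tp:ℝ), tp.2⟩ := fun h =>
      absurd (congrArg Subtype.val (hfi L hL h)) (by simpa using hlt1.ne')
    have hcb : f L hL ⟨q, hq01⟩ ≠ f L hL ⟨(tr:ℝ), tr.2⟩ := fun h =>
      absurd (congrArg Subtype.val (hfi L hL h)) (by simpa using hlt2.ne)
    exact key_sep hT hA htpA htrA hqA hab hca hcb η
      (subPathF_inj hptr (hfi L hL)) hcmem
  -- the finite candidate set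
  set B : Set T := ⋃ L ∈ s, (if h : L ∈ s then
      f L h '' (Subtype.val ⁻¹' frontier (Subtype.val '' (f L h ⁻¹' A))) else ∅) with hB
  have hBfin : B.Finite := by
    apply Set.Finite.biUnion s.finite_toSet
    intro L hL
    rw [dif_pos (Finset.mem_coe.mp hL)]
    apply Set.Finite.image
    apply Set.Finite.preimage (Set.injOn_of_injective Subtype.val_injective)
    exact ordConnected_frontier_finite
      (by rintro z ⟨t, -, rfl⟩; exact t.2) (hord L hL)
  refine Set.Finite.subset hBfin ?_
  intro x hx
  by_contra hxB
  have hxc1 : x ∈ closure A := frontier_subset_closure hx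
  have hxc2 : x ∈ closure Aᶜ := frontier_subset_closure (by rwa [frontier_compl])
  -- x ∈ A side
  have hxA : x ∈ A := by
    have hAeq : A = ⋃ L ∈ (s : Set (Set T)), A ∩ L := by
      ext z
      simp only [Set.mem_iUnion, Set.mem_inter_iff, exists_prop]
      constructor
      · intro hz
        obtain ⟨L, hLs, hzL⟩ := (hcover ▸ Set.mem_univ z : z ∈ ⋃₀ (s : Set (Set T)))
        exact ⟨L, hLs, hz, hzL⟩
      · rintro ⟨L, -, hz, -⟩; exact hz
    rw [hAeq, Set.Finite.closure_biUnion s.finite_toSet] at hxc1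
    obtain ⟨L, hLs, hxcl1⟩ := Set.mem_iUnion₂.mp hxc1
    have hLs' : L ∈ s := Finset.mem_coe.mp hLs
    have hAL : A ∩ L = f L hLs' '' (f L hLs' ⁻¹' A) := by
      rw [Set.image_preimage_eq_inter_range, hfr]
    have hce : Topology.IsClosedEmbedding (f L hLs') :=
      (hfc L hLs').isClosedEmbedding (hfi L hLs')
    rw [hAL, hce.closure_image_eq] at hxcl1
    obtain ⟨t, htcl, rfl⟩ := hxcl1
    have hval : (t : ℝ) ∈ closure (Subtype.val '' (f L hLs' ⁻¹' A)) := by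
      have := Topology.IsEmbedding.subtypeVal.closure_eq_preimage_closure_image
        (f L hLs' ⁻¹' A)
      rw [this] at htcl
      exact htcl
    have htfr : (t : ℝ) ∉ frontier (Subtype.val '' (f L hLs' ⁻¹' A)) := by
      intro hcon
      apply hxB
      refine Set.mem_iUnion₂.mpr ⟨L, hLs', ?_⟩
      rw [dif_pos hLs']
      exact ⟨t, hcon, rfl⟩
    have htint : (t : ℝ) ∈ interior (Subtype.val '' (f L hLs' ⁻¹' A)) := by
      by_contra h
      exact htfr ⟨hval, h⟩
    obtain ⟨t', ht'A, ht'val⟩ := interior_subset htint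
    rwa [show t' = t from Subtype.ext ht'val] at ht'A
  -- x ∉ A side
  have hxA' : x ∉ A := by
    have hAeq : Aᶜ = ⋃ L ∈ (s : Set (Set T)), Aᶜ ∩ L := by
      ext z
      simp only [Set.mem_iUnion, Set.mem_inter_iff, exists_prop]
      constructor
      · intro hz
        obtain ⟨L, hLs, hzL⟩ := (hcover ▸ Set.mem_univ z : z ∈ ⋃₀ (s : Set (Set T)))
        exact ⟨L, hLs, hz, hzL⟩
      · rintro ⟨L, -, hz, -⟩; exact hz
    rw [hAeq, Set.Finite.closure_biUnion s.finite_toSet] at hxc2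
    obtain ⟨L, hLs, hxcl2⟩ := Set.mem_iUnion₂.mp hxc2
    have hLs' : L ∈ s := Finset.mem_coe.mp hLs
    have hAL : Aᶜ ∩ L = f L hLs' '' (f L hLs' ⁻¹' Aᶜ) := by
      rw [Set.image_preimage_eq_inter_range, hfr]
    have hce : Topology.IsClosedEmbedding (f L hLs') :=
      (hfc L hLs').isClosedEmbedding (hfi L hLs')
    rw [hAL, hce.closure_image_eq] at hxcl2
    obtain ⟨t, htcl, rfl⟩ := hxcl2
    have hval : (t : ℝ) ∈ closure (Subtype.val '' (f L hLs' ⁻¹' Aᶜ)) := by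
      have := Topology.IsEmbedding.subtypeVal.closure_eq_preimage_closure_image
        (f L hLs' ⁻¹' Aᶜ)
      rw [this] at htcl
      exact htcl
    have htint : (t : ℝ) ∉ interior (Subtype.val '' (f L hLs' ⁻¹' A)) := by
      intro hcon
      obtain ⟨z, hzint, hzW⟩ := mem_closure_iff.mp hval _ isOpen_interior hcon
      obtain ⟨u, huA, huval⟩ := interior_subset hzint
      obtain ⟨u', hu'A, hu'val⟩ := hzW
      rw [show u' = u from Subtype.ext (hu'val.trans huval.symm)] at hu'A
      exact hu'A huA
    have htfr : (t : ℝ) ∉ frontier (Subtype.val '' (f L hLs' ⁻¹' A)) := by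
      intro hcon
      apply hxB
      refine Set.mem_iUnion₂.mpr ⟨L, hLs', ?_⟩
      rw [dif_pos hLs']
      exact ⟨t, hcon, rfl⟩
    have htncl : (t : ℝ) ∉ closure (Subtype.val '' (f L hLs' ⁻¹' A)) := by
      intro hcon
      exact htfr ⟨hcon, htint⟩
    intro hxA2
    exact htncl (subset_closure ⟨t, hxA2, rfl⟩)
  exact hxA' hxA
end

section
/- Let T be a tree, A a connected subset of T, and x ∈ T. Then the set cl(Comp(T\A, x)) ∩ cl(A) is a singleton, where Comp(T\A, x) denotes the connected component of T\A containing x if x ∉ A, and {x} if x ∈ A. -/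
open Set Filter Metric Topology TopologicalSpace

namespace TreeAux

noncomputable section

abbrev D := ↥(Set.Icc (0:ℝ) 1)

instance : CompactSpace D := isCompact_iff_compactSpace.mp isCompact_Icc

variable {T : Type*} [MetricSpace T]

/-- `u` and `v` are joined by an arc inside `W` (or equal, and in `W`). -/
def ArcConn (W : Set T) (u v : T) : Prop :=
  (u = v ∧ u ∈ W) ∨ ∃ f : D → T, Continuous f ∧ Function.Injective f ∧
    Set.range f ⊆ W ∧ f 0 = u ∧ f 1 = v

lemma ArcConn.mem_left {W : Set T} {u v : T} (h : ArcConn W u v) : u ∈ W := by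
  rcases h with ⟨_, hu⟩ | ⟨f, _, _, hr, h0, _⟩
  · exact hu
  · exact h0 ▸ hr (mem_range_self _)

lemma ArcConn.refl {W : Set T} {u : T} (hu : u ∈ W) : ArcConn W u u := Or.inl ⟨rfl, hu⟩

lemma ArcConn.mono {W W' : Set T} {u v : T} (h : ArcConn W u v) (hW : W ⊆ W') :
    ArcConn W' u v := by
  rcases h with ⟨rfl, hu⟩ | ⟨f, hc, hi, hr, h0, h1⟩
  · exact Or.inl ⟨rfl, hW hu⟩
  · exact Or.inr ⟨f, hc, hi, hr.trans hW, h0, h1⟩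

/-- The flip `t ↦ 1 - t` of the parameter interval. -/
def sigmaD : D → D := fun t => ⟨1 - t.1, by
  constructor
  · linarith [t.2.2]
  · linarith [t.2.1]⟩

lemma continuous_sigmaD : Continuous (sigmaD) :=
  (continuous_const.sub continuous_subtype_val).subtype_mk _

lemma sigmaD_surj : Function.Surjective sigmaD := fun t =>
  ⟨sigmaD t, by simp [sigmaD]⟩

lemma sigmaD_zero : sigmaD 0 = 1 := by
  ext; simp [sigmaD]

lemma sigmaD_one : sigmaD 1 = 0 := by
  ext; simp [sigmaD]

lemma ArcConn.symm {W : Set T} {u v : T} (h : ArcConn W u v) : ArcConn W v u := by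
  rcases h with ⟨rfl, hu⟩ | ⟨f, hc, hi, hr, h0, h1⟩
  · exact Or.inl ⟨rfl, hu⟩
  · refine Or.inr ⟨f ∘ sigmaD, hc.comp continuous_sigmaD,
      hi.comp (fun a b hab => ?_), ?_, ?_, ?_⟩
    · have : (1:ℝ) - a.1 = 1 - b.1 := congrArg Subtype.val hab
      ext; linarith
    · rw [Set.range_comp, sigmaD_surj.range_eq, Set.image_univ]; exact hr
    · simp [Function.comp, sigmaD_zero, h1]
    · simp [Function.comp, sigmaD_one, h0]

/-- Arc connectivity from `f 0` to any point `f s` inside the range of an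
injective continuous `f`. -/
lemma arcConn_range_zero {f : D → T} (hc : Continuous f) (hi : Function.Injective f)
    (s : D) : ArcConn (Set.range f) (f 0) (f s) := by
  rcases eq_or_ne s 0 with rfl | hs
  · exact ArcConn.refl (mem_range_self _)
  · have hs' : s.1 ≠ 0 := fun h => hs (Subtype.ext h)
    refine Or.inr ⟨f ∘ (fun t : D => s * t), hc.comp ?_, hi.comp (fun a b hab => ?_), ?_, ?_, ?_⟩
    · exact (continuous_const.mul continuous_subtype_val).subtype_mk _
    · have : s.1 * a.1 = s.1 * b.1 := congrArg Subtype.val hab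
      exact Subtype.ext (by
        have := mul_left_cancel₀ hs' this
        exact this)
    · rintro _ ⟨t, rfl⟩; exact mem_range_self _
    · simp [Function.comp]
    · simp [Function.comp]

/-- Arc connectivity from `f s` to `f 1`. -/
lemma arcConn_range_one {f : D → T} (hc : Continuous f) (hi : Function.Injective f)
    (s : D) : ArcConn (Set.range f) (f s) (f 1) := by
  have h := arcConn_range_zero (hc.comp continuous_sigmaD)
      (hi.comp (fun a b hab => by
        have : (1:ℝ) - a.1 = 1 - b.1 := congrArg Subtype.val hab
        ext; linarith)) (sigmaD s)
  have hrange : Set.range (f ∘ sigmaD) = Set.range f := by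
    rw [Set.range_comp, sigmaD_surj.range_eq, Set.image_univ]
  rw [hrange] at h
  have e0 : (f ∘ sigmaD) 0 = f 1 := by simp [Function.comp, sigmaD_zero]
  have es : (f ∘ sigmaD) (sigmaD s) = f s := by
    simp only [Function.comp]
    congr 1
    ext
    simp [sigmaD]
  rw [e0, es] at h
  exact h.symm

/-- The range of an injective continuous map from the interval is an arc. -/
lemma isArcBetween_range {f : D → T} (hc : Continuous f) (hi : Function.Injective f) :
    IsArcBetween (Set.range f) (f 0) (f 1) := by
  let e : D ≃ Set.range f := Equiv.ofInjective f hi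
  have hce : Continuous e := hc.subtype_mk _
  let h : D ≃ₜ Set.range f := Continuous.homeoOfEquivCompactToT2 hce
  exact ⟨h, rfl, rfl⟩

/-- Extract a parametrization from an arc with given endpoints. -/
lemma isArcBetween_exists_param {A : Set T} {x y : T} (h : IsArcBetween A x y) :
    ∃ f : D → T, Continuous f ∧ Function.Injective f ∧ Set.range f = A ∧
      f 0 = x ∧ f 1 = y := by
  obtain ⟨e, h0, h1⟩ := h
  refine ⟨fun t => (e t : T), continuous_subtype_val.comp e.continuous,
    Subtype.coe_injective.comp e.injective, ?_, h0, h1⟩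
  ext a
  constructor
  · rintro ⟨t, rfl⟩; exact (e t).2
  · intro ha; exact ⟨e.symm ⟨a, ha⟩, by simp⟩

lemma ArcConn.isArcBetween {W : Set T} {u v : T} (h : ArcConn W u v) (huv : u ≠ v) :
    ∃ A : Set T, IsArcBetween A u v ∧ A ⊆ W := by
  rcases h with ⟨rfl, _⟩ | ⟨f, hc, hi, hr, h0, h1⟩
  · exact absurd rfl huv
  · exact ⟨Set.range f, h0 ▸ h1 ▸ isArcBetween_range hc hi, hr⟩

lemma arcConn_of_isArcBetween {W A : Set T} {u v : T} (h : IsArcBetween A u v)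
    (hAW : A ⊆ W) : ArcConn W u v := by
  obtain ⟨f, hc, hi, hr, h0, h1⟩ := isArcBetween_exists_param h
  exact Or.inr ⟨f, hc, hi, hr ▸ hAW, h0, h1⟩

/-- Transitivity of arc connectivity, via the first-hitting-time trick. -/
lemma ArcConn.trans {W : Set T} {u y z : T} (h1 : ArcConn W u y) (h2 : ArcConn W y z) :
    ArcConn W u z := by
  rcases h1 with ⟨rfl, _⟩ | ⟨α, hαc, hαi, hαr, hα0, hα1⟩
  · exact h2
  rcases h2 with ⟨rfl, _⟩ | ⟨β, hβc, hβi, hβr, hβ0, hβ1⟩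
  · exact Or.inr ⟨α, hαc, hαi, hαr, hα0, hα1⟩
  by_cases hu : u ∈ Set.range β
  · -- go within β
    obtain ⟨r, hr⟩ := hu
    have h := arcConn_range_one hβc hβi r
    rw [hr, hβ1] at h
    exact h.mono hβr
  · -- first hitting time of `range β` along `α`
    have hβcpt : IsCompact (Set.range β) := isCompact_range hβc
    have hScl : IsClosed (α ⁻¹' Set.range β) :=
      hβcpt.isClosed.preimage hαc
    have hScpt : IsCompact (Subtype.val '' (α ⁻¹' Set.range β) : Set ℝ) :=
      (hScl.isCompact).image continuous_subtype_val
    have hSne : (Subtype.val '' (α ⁻¹' Set.range β) : Set ℝ).Nonempty := by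
      refine ⟨1, ⟨1, ?_, rfl⟩⟩
      simp only [Set.mem_preimage, hα1, ← hβ0]
      exact mem_range_self _
    obtain ⟨r₀, hr₀S, hr₀least⟩ := hScpt.exists_isLeast hSne
    obtain ⟨t₀, ht₀S, ht₀val⟩ := hr₀S
    -- r₀ = t₀.1
    obtain ⟨r₁, hr₁⟩ := ht₀S
    have hr₀pos : 0 < r₀ := by
      rcases lt_or_eq_of_le t₀.2.1 with h | h
      · exact ht₀val ▸ h
      · exfalso
        apply hu
        have : t₀ = 0 := Subtype.ext (by simpa using h.symm)
        rw [this] at hr₁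
        exact ⟨r₁, by rw [hr₁, hα0]⟩
    by_cases hr₁1 : r₁ = 1
    · -- α t₀ = z : just take the initial piece of α
      have h := arcConn_range_zero hαc hαi t₀
      rw [hα0, ← hr₁, hr₁1, hβ1] at h
      exact h.mono hαr
    have hr₁lt : r₁.1 < 1 := lt_of_le_of_ne r₁.2.2 (fun h => hr₁1 (Subtype.ext h))
    -- glue
    set g₁ : ℝ → T := fun r => α (Set.projIcc 0 1 zero_le_one (2 * r * r₀)) with hg₁
    set g₂ : ℝ → T := fun r => β (Set.projIcc 0 1 zero_le_one (r₁.1 + (2 * r - 1) * (1 - r₁.1)))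
      with hg₂
    have hg₁c : Continuous g₁ :=
      hαc.comp (continuous_projIcc.comp (by continuity))
    have hg₂c : Continuous g₂ :=
      hβc.comp (continuous_projIcc.comp (by continuity))
    have ht₀mem : (2 * (1/2 : ℝ) * r₀) ∈ Set.Icc (0:ℝ) 1 := by
      norm_num
      rw [← ht₀val]; exact ⟨t₀.2.1, t₀.2.2⟩
    have hmid : g₁ (1/2) = g₂ (1/2) := by
      have e1 : Set.projIcc 0 1 zero_le_one (2 * (1/2 : ℝ) * r₀) = t₀ := by
        rw [Set.projIcc_of_mem _ ht₀mem]
        exact Subtype.ext (by rw [ht₀val]; ring_nf)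
      have e2 : Set.projIcc 0 1 zero_le_one (r₁.1 + (2 * (1/2 : ℝ) - 1) * (1 - r₁.1)) = r₁ := by
        have : (r₁.1 + (2 * (1/2 : ℝ) - 1) * (1 - r₁.1)) = r₁.1 := by ring
        rw [this, Set.projIcc_val]
      simp only [hg₁, hg₂, e1, e2]
      exact hr₁.symm
    set F : D → T := fun t => if t.1 ≤ 1/2 then g₁ t.1 else g₂ t.1 with hF
    have hFc : Continuous F := by
      have : Continuous fun r : ℝ => if r ≤ 1/2 then g₁ r else g₂ r := by
        apply Continuous.if_le hg₁c hg₂c continuous_id continuous_const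
        intro a ha; simp only [id_eq] at ha; rw [ha]; exact hmid
      exact this.comp continuous_subtype_val
    -- helper describing F on each side
    have hmem₁ : ∀ t : D, t.1 ≤ 1/2 → (2 * t.1 * r₀) ∈ Set.Icc (0:ℝ) 1 := by
      intro t ht
      constructor
      · nlinarith [t.2.1, hr₀pos.le]
      · have h1 : r₀ ≤ 1 := ht₀val ▸ t₀.2.2
        nlinarith [t.2.1, hr₀pos.le]
    have hmem₂ : ∀ t : D, 1/2 ≤ t.1 → (r₁.1 + (2 * t.1 - 1) * (1 - r₁.1)) ∈ Set.Icc (0:ℝ) 1 := by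
      intro t ht
      constructor
      · nlinarith [r₁.2.1, r₁.2.2, t.2.2]
      · nlinarith [r₁.2.1, r₁.2.2, t.2.2]
    have hF₁ : ∀ t : D, (ht : t.1 ≤ 1/2) → F t = α ⟨2 * t.1 * r₀, hmem₁ t ht⟩ := by
      intro t ht
      have : F t = g₁ t.1 := if_pos ht
      rw [this]
      simp only [hg₁]
      rw [Set.projIcc_of_mem _ (hmem₁ t ht)]
    have hF₂ : ∀ t : D, (ht : 1/2 ≤ t.1) → t.1 ≠ 1/2 →
        F t = β ⟨r₁.1 + (2 * t.1 - 1) * (1 - r₁.1), hmem₂ t ht⟩ := by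
      intro t ht ht'
      have hn : ¬ (t.1 ≤ 1/2) := fun h => ht' (le_antisymm h ht)
      have : F t = g₂ t.1 := if_neg hn
      rw [this]
      simp only [hg₂]
      rw [Set.projIcc_of_mem _ (hmem₂ t ht)]
    refine Or.inr ⟨F, hFc, ?_, ?_, ?_, ?_⟩
    · -- injectivity
      intro a b hab
      by_contra hne
      -- wlog via cases
      have key : ∀ s t : D, s.1 ≤ 1/2 → F s = F t → s ≠ t → False := by
        intro s t hs heq hst
        by_cases ht : t.1 ≤ 1/2
        · rw [hF₁ s hs, hF₁ t ht] at heq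
          have := congrArg Subtype.val (hαi heq)
          simp only at this
          have h2 : 2 * s.1 * r₀ = 2 * t.1 * r₀ := this
          have h3 : (s.1 - t.1) * (2 * r₀) = 0 := by linear_combination h2
          rcases mul_eq_zero.mp h3 with h4 | h4
          · exact hst (Subtype.ext (by linarith))
          · exact absurd h4 (by positivity)
        · push_neg at ht
          -- F t ∈ range β, so α hits range β at parameter 2*s*r₀ ≤ r₀, hence = r₀
          have htmem : F t ∈ Set.range β := by
            rw [hF₂ t ht.le (ne_of_gt ht)]
            exact mem_range_self _
          have hsS : (2 * s.1 * r₀) ∈ Subtype.val '' (α ⁻¹' Set.range β) := by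
            refine ⟨⟨2 * s.1 * r₀, hmem₁ s hs⟩, ?_, rfl⟩
            simp only [Set.mem_preimage]
            rw [← hF₁ s hs, heq]; exact htmem
          have hge := hr₀least hsS
          have hle : 2 * s.1 * r₀ ≤ r₀ := by nlinarith [s.2.1, hr₀pos]
          have heq2 : 2 * s.1 * r₀ = r₀ := le_antisymm hle hge
          have hs2 : s.1 = 1/2 := by
            have h' : (2 * s.1 - 1) * r₀ = 0 := by linear_combination heq2
            rcases mul_eq_zero.mp h' with h | h
            · linarith
            · exact absurd h (ne_of_gt hr₀pos)
          -- then F s = α t₀ = β r₁ and F t = β (...), injectivity of β gives t = 1/2, contra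
          have hFs : F s = β r₁ := by
            rw [hF₁ s hs, hr₁]
            congr 1
            refine Subtype.ext ?_
            show 2 * s.1 * r₀ = t₀.1
            rw [heq2]; exact ht₀val.symm
          have hFt := hF₂ t ht.le (ne_of_gt ht)
          have hb : β ⟨r₁.1 + (2 * t.1 - 1) * (1 - r₁.1), hmem₂ t ht.le⟩ = β r₁ := by
            rw [← hFt, ← heq, hFs]
          have hval := congrArg Subtype.val (hβi hb)
          simp only at hval
          have hz : (2 * t.1 - 1) * (1 - r₁.1) = 0 := by linarith
          rcases mul_eq_zero.mp hz with h | h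
          · exact (ne_of_gt ht) (by linarith)
          · exact hr₁1 (Subtype.ext (by linarith))
      by_cases ha : a.1 ≤ 1/2
      · exact key a b ha hab hne
      · by_cases hb : b.1 ≤ 1/2
        · exact key b a hb hab.symm (Ne.symm hne)
        · push_neg at ha hb
          rw [hF₂ a ha.le (ne_of_gt ha), hF₂ b hb.le (ne_of_gt hb)] at hab
          have hval := congrArg Subtype.val (hβi hab)
          simp only at hval
          have : a.1 = b.1 := by
            have h1r : (1:ℝ) - r₁.1 ≠ 0 := by linarith
            have : (2 * a.1 - 1) * (1 - r₁.1) = (2 * b.1 - 1) * (1 - r₁.1) := by linarith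
            have := mul_right_cancel₀ h1r this
            linarith
          exact hne (Subtype.ext this)
    · -- range
      rintro _ ⟨t, rfl⟩
      by_cases ht : t.1 ≤ 1/2
      · rw [hF₁ t ht]; exact hαr (mem_range_self _)
      · push_neg at ht
        rw [hF₂ t ht.le (ne_of_gt ht)]; exact hβr (mem_range_self _)
    · -- F 0 = u
      have h0 : ((0:D)).1 ≤ 1/2 := by norm_num
      rw [hF₁ 0 h0, ← hα0]
      congr 1
      exact Subtype.ext (by simp)
    · -- F 1 = z
      have h1 : ¬ (((1:D)).1 ≤ 1/2) := by norm_num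
      have : F 1 = β ⟨r₁.1 + (2 * ((1:D)).1 - 1) * (1 - r₁.1), hmem₂ 1 (by norm_num)⟩ :=
        hF₂ 1 (by norm_num) (by norm_num)
      rw [this, ← hβ1]
      congr 1
      exact Subtype.ext (by simp; ring)

instance : PreconnectedSpace D := Subtype.preconnectedSpace isPreconnected_Icc

lemma isPreconnected_of_arcConn {N : Set T} {x : T} (h : ∀ z ∈ N, ArcConn N x z) :
    IsPreconnected N := by
  apply isPreconnected_of_forall x
  intro y hy
  rcases h y hy with ⟨rfl, hxN⟩ | ⟨f, hc, hi, hr, h0, h1⟩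
  · exact ⟨Set.singleton x, Set.singleton_subset_iff.mpr hxN, rfl, rfl,
      isPreconnected_singleton⟩
  · exact ⟨Set.range f, hr, h0 ▸ mem_range_self _, h1 ▸ mem_range_self _,
      isPreconnected_range hc⟩

lemma isArc_isClosed {A : Set T} (hA : IsArc A) : IsClosed A := by
  obtain ⟨e⟩ := hA
  haveI : CompactSpace ↥A := e.compactSpace
  exact (isCompact_iff_compactSpace.mpr this).isClosed

/-- Star neighborhood inside a single arc. -/
lemma petal {A : Set T} (hA : IsArc A) {x : T} (hx : x ∈ A) {U : Set T} (hU : U ∈ 𝓝 x) :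
    ∃ N : Set T, x ∈ N ∧ N ⊆ U ∧ N ⊆ A ∧
      (∃ O : Set T, IsOpen O ∧ x ∈ O ∧ O ∩ A ⊆ N) ∧
      (∀ z ∈ N, ArcConn N x z) := by
  obtain ⟨e⟩ := hA
  set γ : D → T := fun t => (e t : T) with hγ
  have hγc : Continuous γ := continuous_subtype_val.comp e.continuous
  have hγi : Function.Injective γ := Subtype.coe_injective.comp e.injective
  have hγA : ∀ t, γ t ∈ A := fun t => (e t).2
  set tx : D := e.symm ⟨x, hx⟩ with htx
  have hγtx : γ tx = x := by
    rw [hγ]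
    simp only [htx, Homeomorph.apply_symm_apply]
  have hUtx : γ ⁻¹' U ∈ 𝓝 tx := hγc.continuousAt.preimage_mem_nhds (hγtx ▸ hU)
  obtain ⟨ε, hεpos, hball⟩ := Metric.nhds_basis_closedBall.mem_iff.mp hUtx
  have hballU : ∀ t : D, |t.1 - tx.1| ≤ ε → γ t ∈ U := by
    intro t ht
    apply hball
    rw [Metric.mem_closedBall, Subtype.dist_eq, Real.dist_eq]
    exact ht
  set τ := tx.1 with hτ
  set b := min 1 (τ + ε) with hb
  set a := max 0 (τ - ε) with ha
  have hb1 : b ≤ 1 := min_le_left _ _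
  have hb2 : b ≤ τ + ε := min_le_right _ _
  have hbτ : τ ≤ b := le_min tx.2.2 (by linarith)
  have ha0 : 0 ≤ a := le_max_left _ _
  have ha2 : τ - ε ≤ a := le_max_right _ _
  have haτ : a ≤ τ := max_le tx.2.1 (by linarith)
  have hmemp : ∀ t : D, τ + t.1 * (b - τ) ∈ Set.Icc (0:ℝ) 1 := by
    intro t
    constructor
    · nlinarith [t.2.1, tx.2.1, mul_nonneg t.2.1 (sub_nonneg.mpr hbτ)]
    · nlinarith [mul_nonneg (sub_nonneg.mpr t.2.2) (sub_nonneg.mpr hbτ)]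
  have hmemm : ∀ t : D, τ - t.1 * (τ - a) ∈ Set.Icc (0:ℝ) 1 := by
    intro t
    constructor
    · nlinarith [mul_nonneg (sub_nonneg.mpr t.2.2) (sub_nonneg.mpr haτ)]
    · nlinarith [tx.2.2, mul_nonneg t.2.1 (sub_nonneg.mpr haτ)]
  set δp : D → T := fun t => γ ⟨τ + t.1 * (b - τ), hmemp t⟩ with hδp
  set δm : D → T := fun t => γ ⟨τ - t.1 * (τ - a), hmemm t⟩ with hδm
  have hδpc : Continuous δp :=
    hγc.comp ((continuous_const.add (continuous_subtype_val.mul continuous_const)).subtype_mk _)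
  have hδmc : Continuous δm :=
    hγc.comp ((continuous_const.sub (continuous_subtype_val.mul continuous_const)).subtype_mk _)
  have hδp0 : δp 0 = x := by
    rw [← hγtx]
    exact congrArg γ (Subtype.ext (by
      show τ + ((0:D):ℝ) * (b - τ) = tx.1
      rw [show ((0:D):ℝ) = 0 from rfl, hτ]; ring))
  have hδm0 : δm 0 = x := by
    rw [← hγtx]
    exact congrArg γ (Subtype.ext (by
      show τ - ((0:D):ℝ) * (τ - a) = tx.1
      rw [show ((0:D):ℝ) = 0 from rfl, hτ]; ring))
  set N : Set T := Set.range δp ∪ Set.range δm with hN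
  have hxN : x ∈ N := Or.inl ⟨0, hδp0⟩
  have hNU : N ⊆ U := by
    rintro _ (⟨t, rfl⟩ | ⟨t, rfl⟩)
    · refine hballU _ ?_
      show |(τ + t.1 * (b - τ)) - τ| ≤ ε
      have h1 : (0:ℝ) ≤ t.1 * (b - τ) := mul_nonneg t.2.1 (sub_nonneg.mpr hbτ)
      have h2 : t.1 * (b - τ) ≤ b - τ := by
        nlinarith [mul_nonneg (sub_nonneg.mpr t.2.2) (sub_nonneg.mpr hbτ)]
      rw [abs_le]
      constructor <;> linarith
    · refine hballU _ ?_
      show |(τ - t.1 * (τ - a)) - τ| ≤ ε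
      have h1 : (0:ℝ) ≤ t.1 * (τ - a) := mul_nonneg t.2.1 (sub_nonneg.mpr haτ)
      have h2 : t.1 * (τ - a) ≤ τ - a := by
        nlinarith [mul_nonneg (sub_nonneg.mpr t.2.2) (sub_nonneg.mpr haτ)]
      rw [abs_le]
      constructor <;> linarith
  have hNA : N ⊆ A := by
    rintro _ (⟨t, rfl⟩ | ⟨t, rfl⟩) <;> apply hγA
  have hin : ∀ t : D, |t.1 - τ| ≤ ε → γ t ∈ N := by
    intro t ht
    rcases le_total τ t.1 with hc1 | hc1
    · -- use δp
      have htb : t.1 ≤ b := le_min t.2.2 (by rw [abs_le] at ht; linarith)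
      rcases eq_or_lt_of_le hbτ with hbeq | hblt
      · -- b = τ, so t = τ, γ t = x
        have : t = tx := Subtype.ext (le_antisymm (htb.trans hbeq.ge) hc1)
        rw [this, hγtx]; exact hxN
      · left
        have hne : b - τ ≠ 0 := by intro h; linarith [sub_eq_zero.mp h]
        refine ⟨⟨(t.1 - τ) / (b - τ), ⟨div_nonneg (by linarith) (by linarith), ?_⟩⟩, ?_⟩
        · rw [div_le_one (by linarith)]; linarith
        · refine congrArg γ (Subtype.ext ?_)
          show τ + (t.1 - τ) / (b - τ) * (b - τ) = t.1
          field_simp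
          ring
    · -- use δm
      have hta : a ≤ t.1 := max_le t.2.1 (by rw [abs_le] at ht; linarith)
      rcases eq_or_lt_of_le haτ with haeq | halt
      · have : t = tx := Subtype.ext (le_antisymm hc1 (hta.trans' haeq.ge))
        rw [this, hγtx]; exact hxN
      · right
        have hne : τ - a ≠ 0 := by intro h; linarith [sub_eq_zero.mp h]
        refine ⟨⟨(τ - t.1) / (τ - a), ⟨div_nonneg (by linarith) (by linarith), ?_⟩⟩, ?_⟩
        · rw [div_le_one (by linarith)]; linarith
        · refine congrArg γ (Subtype.ext ?_)
          show τ - (τ - t.1) / (τ - a) * (τ - a) = t.1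
          field_simp
          ring
  refine ⟨N, hxN, hNU, hNA, ?_, ?_⟩
  · -- relative neighborhood
    have hV : (e.symm) ⁻¹' (Metric.closedBall tx ε) ∈ 𝓝 (⟨x, hx⟩ : ↥A) := by
      apply e.symm.continuous.continuousAt.preimage_mem_nhds
      rw [← htx]
      exact Metric.closedBall_mem_nhds _ hεpos
    obtain ⟨O', hO'nhds, hO'sub⟩ := (mem_nhds_subtype A ⟨x, hx⟩ _).mp hV
    refine ⟨interior O', isOpen_interior, mem_interior_iff_mem_nhds.mpr hO'nhds, ?_⟩
    rintro w ⟨hwO, hwA⟩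
    have hwO' : w ∈ O' := interior_subset hwO
    have h2 := hO'sub (show (⟨w, hwA⟩ : ↥A) ∈ Subtype.val ⁻¹' O' from hwO')
    rw [Set.mem_preimage, Metric.mem_closedBall, Subtype.dist_eq, Real.dist_eq] at h2
    have h3 := hin (e.symm ⟨w, hwA⟩) h2
    have h4 : γ (e.symm ⟨w, hwA⟩) = w := by
      show ((e (e.symm ⟨w, hwA⟩) : ↥A) : T) = w
      rw [Homeomorph.apply_symm_apply]
    rwa [h4] at h3
  · -- arc connectivity to the center
    rintro z (⟨t, rfl⟩ | ⟨t, rfl⟩)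
    · rcases eq_or_lt_of_le hbτ with hbeq | hblt
      · have : δp t = x := by
          rw [← hγtx]
          refine congrArg γ (Subtype.ext ?_)
          show τ + t.1 * (b - τ) = tx.1
          rw [← hbeq, hτ]; ring
        rw [this]; exact ArcConn.refl hxN
      · have hδpi : Function.Injective δp := by
          intro s t hst
          have := congrArg Subtype.val (hγi hst)
          simp only at this
          refine Subtype.ext ?_
          have h' : (s.1 - t.1) * (b - τ) = 0 := by linear_combination this
          rcases mul_eq_zero.mp h' with h | h
          · linarith
          · linarith
        have h := arcConn_range_zero hδpc hδpi t
        rw [hδp0] at h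
        exact h.mono subset_union_left
    · rcases eq_or_lt_of_le haτ with haeq | halt
      · have : δm t = x := by
          rw [← hγtx]
          refine congrArg γ (Subtype.ext ?_)
          show τ - t.1 * (τ - a) = tx.1
          rw [haeq, hτ]; ring
        rw [this]; exact ArcConn.refl hxN
      · have hδmi : Function.Injective δm := by
          intro s t hst
          have := congrArg Subtype.val (hγi hst)
          simp only at this
          refine Subtype.ext ?_
          have h' : (s.1 - t.1) * (τ - a) = 0 := by linear_combination - this
          rcases mul_eq_zero.mp h' with h | h
          · linarith
          · linarith
        have h := arcConn_range_zero hδmc hδmi t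
        rw [hδm0] at h
        exact h.mono subset_union_right

/-- Star neighborhoods: every neighborhood contains an arcwise-star neighborhood. -/
lemma star_lemma
    (hfin : (∃ x₀ : T, (Set.univ : Set T) = {x₀}) ∨
      ∃ s : Finset (Set T), (∀ A ∈ s, IsArc A) ∧ ⋃₀ (s : Set (Set T)) = Set.univ)
    (x : T) {U : Set T} (hU : U ∈ 𝓝 x) :
    ∃ N : Set T, N ∈ 𝓝 x ∧ N ⊆ U ∧ (∀ z ∈ N, ArcConn N x z) ∧ IsPreconnected N := by
  classical
  rcases hfin with ⟨x₀, hx₀⟩ | ⟨s, harc, hcov⟩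
  · refine ⟨U, hU, le_refl _, fun z hz => ?_, ?_⟩
    · have hxx : x ∈ ({x₀} : Set T) := hx₀ ▸ Set.mem_univ x
      have hzz : z ∈ ({x₀} : Set T) := hx₀ ▸ Set.mem_univ z
      have : z = x := by rw [Set.mem_singleton_iff.mp hxx, Set.mem_singleton_iff.mp hzz]
      rw [this]
      exact ArcConn.refl (mem_of_mem_nhds hU)
    · apply Set.Subsingleton.isPreconnected
      intro p hp q hq
      have hpp : p ∈ ({x₀} : Set T) := hx₀ ▸ Set.mem_univ p
      have hqq : q ∈ ({x₀} : Set T) := hx₀ ▸ Set.mem_univ q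
      rw [Set.mem_singleton_iff.mp hpp, Set.mem_singleton_iff.mp hqq]
  · have hsel : ∀ A : Set T, ∃ NO : Set T × Set T, A ∈ s → x ∈ A →
        (x ∈ NO.1 ∧ NO.1 ⊆ U ∧ NO.1 ⊆ A ∧ IsOpen NO.2 ∧ x ∈ NO.2 ∧ NO.2 ∩ A ⊆ NO.1 ∧
        (∀ z ∈ NO.1, ArcConn NO.1 x z)) := by
      intro A
      by_cases hAs : A ∈ s
      · by_cases hxA : x ∈ A
        · obtain ⟨N, h1, h2, h3, ⟨O, hO1, hO2, hO3⟩, h5⟩ := petal (harc A hAs) hxA hU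
          exact ⟨(N, O), fun _ _ => ⟨h1, h2, h3, hO1, hO2, hO3, h5⟩⟩
        · exact ⟨(∅, ∅), fun _ h => absurd h hxA⟩
      · exact ⟨(∅, ∅), fun h => absurd h hAs⟩
    choose NO hNO using hsel
    set N : Set T := ⋃ A ∈ (s : Set (Set T)), ⋃ (_ : x ∈ A), (NO A).1 with hNdef
    set O : Set T := ⋂ A ∈ (s : Set (Set T)), (if x ∈ A then (NO A).2 else Aᶜ) with hOdef
    have hOopen : IsOpen O := by
      apply s.finite_toSet.isOpen_biInter
      intro A hAs
      by_cases hxA : x ∈ A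
      · rw [if_pos hxA]; exact (hNO A hAs hxA).2.2.2.1
      · rw [if_neg hxA]; exact (isArc_isClosed (harc A hAs)).isOpen_compl
    have hxO : x ∈ O := by
      apply Set.mem_iInter₂.mpr
      intro A hAs
      by_cases hxA : x ∈ A
      · rw [if_pos hxA]; exact (hNO A hAs hxA).2.2.2.2.1
      · rw [if_neg hxA]; exact hxA
    have hON : O ⊆ N := by
      intro w hw
      have hwuniv : w ∈ ⋃₀ (s : Set (Set T)) := hcov ▸ Set.mem_univ w
      obtain ⟨A, hAs, hwA⟩ := hwuniv
      have hw' := Set.mem_iInter₂.mp hw A hAs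
      by_cases hxA : x ∈ A
      · rw [if_pos hxA] at hw'
        exact Set.mem_biUnion hAs (Set.mem_iUnion.mpr ⟨hxA, (hNO A hAs hxA).2.2.2.2.2.1 ⟨hw', hwA⟩⟩)
      · rw [if_neg hxA] at hw'
        exact absurd hwA hw'
    have hmemN : ∀ z, z ∈ N ↔ ∃ A, A ∈ s ∧ x ∈ A ∧ z ∈ (NO A).1 := by
      intro z
      simp only [hNdef, Set.mem_iUnion, exists_prop, Finset.mem_coe]
    have hxN : x ∈ N := by
      have hxuniv : x ∈ ⋃₀ (s : Set (Set T)) := hcov ▸ Set.mem_univ x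
      obtain ⟨A, hAs, hxA⟩ := hxuniv
      exact (hmemN x).mpr ⟨A, hAs, hxA, (hNO A hAs hxA).1⟩
    have harcN : ∀ z ∈ N, ArcConn N x z := by
      intro z hz
      obtain ⟨A, hAs, hxA, hz'⟩ := (hmemN z).mp hz
      refine ((hNO A hAs hxA).2.2.2.2.2.2 z hz').mono ?_
      intro w hw
      exact (hmemN w).mpr ⟨A, hAs, hxA, hw⟩
    refine ⟨N, mem_nhds_iff.mpr ⟨O, hON, hOopen, hxO⟩, ?_, harcN,
      isPreconnected_of_arcConn harcN⟩
    intro z hz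
    obtain ⟨A, hAs, hxA, hz'⟩ := (hmemN z).mp hz
    exact (hNO A hAs hxA).2.1 hz' 

lemma locallyConnected_of
    (hfin : (∃ x₀ : T, (Set.univ : Set T) = {x₀}) ∨
      ∃ s : Finset (Set T), (∀ A ∈ s, IsArc A) ∧ ⋃₀ (s : Set (Set T)) = Set.univ) :
    LocallyConnectedSpace T :=
  locallyConnectedSpace_iff_connected_subsets.mpr fun x U hU => by
    obtain ⟨N, hN1, hN2, _, hN4⟩ := star_lemma hfin x hU
    exact ⟨N, hN1, hN4, hN2⟩

/-- In a finite union of arcs, open preconnected sets are arcwise connected. -/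
lemma arcConn_of_preconnected_open
    (hfin : (∃ x₀ : T, (Set.univ : Set T) = {x₀}) ∨
      ∃ s : Finset (Set T), (∀ A ∈ s, IsArc A) ∧ ⋃₀ (s : Set (Set T)) = Set.univ)
    {W : Set T} (hWo : IsOpen W) (hW : IsPreconnected W)
    {u v : T} (hu : u ∈ W) (hv : v ∈ W) : ArcConn W u v := by
  classical
  have hstar : ∀ y : T, y ∈ W → ∃ N : Set T, N ∈ 𝓝 y ∧ N ⊆ W ∧ ∀ z ∈ N, ArcConn N y z := by
    intro y hy
    obtain ⟨N, h1, h2, h3, _⟩ := star_lemma hfin y (hWo.mem_nhds hy)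
    exact ⟨N, h1, h2, h3⟩
  choose! N hN1 hN2 hN3 using hstar
  set E : Set T := {y | y ∈ W ∧ ArcConn W u y} with hE
  set U₁ : Set T := ⋃ y ∈ E, interior (N y) with hU₁
  set U₂ : Set T := ⋃ y ∈ W \ E, interior (N y) with hU₂
  by_contra hcon
  have hconn : ∀ y₁, y₁ ∈ E → ∀ z ∈ N y₁, ArcConn W u z := by
    intro y₁ hy₁ z hz
    exact hy₁.2.trans ((hN3 y₁ hy₁.1 z hz).mono (hN2 y₁ hy₁.1))
  have hWsub : W ⊆ U₁ ∪ U₂ := by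
    intro y hy
    by_cases hyE : y ∈ E
    · exact Or.inl (Set.mem_biUnion hyE (mem_interior_iff_mem_nhds.mpr (hN1 y hy)))
    · exact Or.inr (Set.mem_biUnion ⟨hy, hyE⟩ (mem_interior_iff_mem_nhds.mpr (hN1 y hy)))
  have hne1 : (W ∩ U₁).Nonempty := by
    refine ⟨u, hu, Set.mem_biUnion ⟨hu, ArcConn.refl hu⟩
      (mem_interior_iff_mem_nhds.mpr (hN1 u hu))⟩
  have hvE : v ∉ E := fun h => hcon h.2
  have hne2 : (W ∩ U₂).Nonempty := by
    refine ⟨v, hv, Set.mem_biUnion ⟨hv, hvE⟩ (mem_interior_iff_mem_nhds.mpr (hN1 v hv))⟩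
  obtain ⟨z, hzW, hz1, hz2⟩ := hW U₁ U₂ (isOpen_biUnion fun _ _ => isOpen_interior)
    (isOpen_biUnion fun _ _ => isOpen_interior) hWsub hne1 hne2
  obtain ⟨y₁, hy₁, hz1'⟩ := Set.mem_iUnion₂.mp hz1
  obtain ⟨y₂, hy₂, hz2'⟩ := Set.mem_iUnion₂.mp hz2
  have h1 : ArcConn W u z := hconn y₁ hy₁ z (interior_subset hz1')
  have h2 : ArcConn W z y₂ :=
    ((hN3 y₂ hy₂.1 z (interior_subset hz2')).mono (hN2 y₂ hy₂.1)).symm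
  exact hy₂.2 ⟨hy₂.1, h1.trans h2⟩

lemma exists_cut_point (hT : IsTreeSpace T) {u v : T} (huv : u ≠ v) :
    ∃ m : T, m ≠ u ∧ m ≠ v ∧ v ∉ connectedComponentIn ({m}ᶜ : Set T) u := by
  obtain ⟨J, hJ, hJuniq⟩ := hT.uniqueArc u v huv
  obtain ⟨f, hc, hi, hrange, h0, h1⟩ := isArcBetween_exists_param hJ
  have hhalf : (1/2 : ℝ) ∈ Set.Icc (0:ℝ) 1 := by norm_num
  have hm0 : f ⟨1/2, hhalf⟩ ≠ u := by
    rw [← h0]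
    intro h
    have hv := congrArg Subtype.val (hi h)
    norm_num [show ((0:D):ℝ) = 0 from rfl] at hv
  have hm1 : f ⟨1/2, hhalf⟩ ≠ v := by
    rw [← h1]
    intro h
    have hv := congrArg Subtype.val (hi h)
    norm_num [show ((1:D):ℝ) = 1 from rfl] at hv
  refine ⟨f ⟨1/2, hhalf⟩, hm0, hm1, fun hvmem => ?_⟩
  haveI := locallyConnected_of hT.finiteArcs
  set m := f ⟨1/2, hhalf⟩ with hm
  have hWo : IsOpen (connectedComponentIn ({m}ᶜ : Set T) u) :=
    isOpen_compl_singleton.connectedComponentIn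
  have hu : u ∈ connectedComponentIn ({m}ᶜ : Set T) u :=
    mem_connectedComponentIn (Set.mem_compl_singleton_iff.mpr hm0.symm)
  have harc := arcConn_of_preconnected_open hT.finiteArcs hWo
    isPreconnected_connectedComponentIn hu hvmem
  obtain ⟨A', hA', hA'W⟩ := harc.isArcBetween huv
  have heq : A' = J := hJuniq A' hA'
  have hmJ : m ∈ J := hrange ▸ mem_range_self _
  have hmW : m ∈ connectedComponentIn ({m}ᶜ : Set T) u := hA'W (heq ▸ hmJ)
  have := connectedComponentIn_subset ({m}ᶜ : Set T) u hmW
  exact this rfl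

lemma mem_cc_of_closure
    (hfin : (∃ x₀ : T, (Set.univ : Set T) = {x₀}) ∨
      ∃ s : Finset (Set T), (∀ A ∈ s, IsArc A) ∧ ⋃₀ (s : Set (Set T)) = Set.univ)
    {D' : Set T} {m u v : T}
    (hD : IsPreconnected D') (hDne : D'.Nonempty) (hDm : m ∉ D')
    (hu : u ∈ closure D') (hv : v ∈ closure D') (hum : u ≠ m) (hvm : v ≠ m) :
    v ∈ connectedComponentIn ({m}ᶜ : Set T) u := by
  haveI := locallyConnected_of hfin
  obtain ⟨d, hd⟩ := hDne
  have hDsub : D' ⊆ ({m}ᶜ : Set T) := fun y hy =>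
    Set.mem_compl_singleton_iff.mpr (fun h => hDm (h ▸ hy))
  have hDW : D' ⊆ connectedComponentIn ({m}ᶜ : Set T) d :=
    hD.subset_connectedComponentIn hd hDsub
  have hclW : closure (connectedComponentIn ({m}ᶜ : Set T) d) ⊆
      connectedComponentIn ({m}ᶜ : Set T) d ∪ {m} := by
    intro y hy
    by_cases hym : y = m
    · exact Or.inr (by simp [hym])
    · left
      have hyc : y ∈ ({m}ᶜ : Set T) := Set.mem_compl_singleton_iff.mpr hym
      have hWy : IsOpen (connectedComponentIn ({m}ᶜ : Set T) y) :=
        isOpen_compl_singleton.connectedComponentIn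
      have hne : (connectedComponentIn ({m}ᶜ : Set T) y ∩
          connectedComponentIn ({m}ᶜ : Set T) d).Nonempty :=
        mem_closure_iff.mp hy _ hWy (mem_connectedComponentIn hyc)
      obtain ⟨w, hw1, hw2⟩ := hne
      have e1 := connectedComponentIn_eq hw1
      have e2 := connectedComponentIn_eq hw2
      rw [e2, ← e1]
      exact mem_connectedComponentIn hyc
  have huW : u ∈ connectedComponentIn ({m}ᶜ : Set T) d := by
    rcases hclW (closure_mono hDW hu) with h | h
    · exact h
    · exact absurd (Set.mem_singleton_iff.mp h) hum
  have hvW : v ∈ connectedComponentIn ({m}ᶜ : Set T) d := by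
    rcases hclW (closure_mono hDW hv) with h | h
    · exact h
    · exact absurd (Set.mem_singleton_iff.mp h) hvm
  have hcc : connectedComponentIn ({m}ᶜ : Set T) d = connectedComponentIn ({m}ᶜ : Set T) u :=
    connectedComponentIn_eq huW
  exact hcc ▸ hvW

end

end TreeAux

/-- `cl(Comp(T\A,x)) ∩ cl(A)` is a singleton. -/
theorem closure_comp_inter_closure_singleton {T : Type*} [MetricSpace T]
    (hT : IsTreeSpace T) (A : Set T) (hA : IsConnected A) (x : T) :
    ∃ z : T, closure (Comp Aᶜ x) ∩ closure A = {z} := by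
  classical
  by_cases hx : x ∈ A
  · refine ⟨x, ?_⟩
    have hxc : x ∉ Aᶜ := fun h => h hx
    have h1 : Comp Aᶜ x = {x} := by
      simp only [Comp]
      rw [if_neg hxc]
    rw [h1, closure_singleton]
    exact Set.inter_eq_left.mpr (Set.singleton_subset_iff.mpr (subset_closure hx))
  · have hxc : x ∈ Aᶜ := hx
    have hComp : Comp Aᶜ x = connectedComponentIn Aᶜ x := by
      simp only [Comp]
      rw [if_pos hxc]
    rw [hComp]
    have huniq : ∀ u ∈ closure (connectedComponentIn Aᶜ x) ∩ closure A,
        ∀ v ∈ closure (connectedComponentIn Aᶜ x) ∩ closure A, u = v := by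
      intro u hu v hv
      by_contra huv
      obtain ⟨m, hmu, hmv, hsep⟩ := TreeAux.exists_cut_point hT huv
      by_cases hmA : m ∈ A
      · have hmC : m ∉ connectedComponentIn Aᶜ x := fun h =>
          (connectedComponentIn_subset Aᶜ x h) hmA
        exact hsep (TreeAux.mem_cc_of_closure hT.finiteArcs
          isPreconnected_connectedComponentIn
          ⟨x, mem_connectedComponentIn hxc⟩ hmC hu.1 hv.1 hmu.symm hmv.symm)
      · exact hsep (TreeAux.mem_cc_of_closure hT.finiteArcs hA.isPreconnected hA.nonempty
          hmA hu.2 hv.2 hmu.symm hmv.symm)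
    obtain ⟨a, ha⟩ := hA.nonempty
    have hxa : x ≠ a := fun h => hx (h ▸ ha)
    obtain ⟨J, hJ, -⟩ := hT.uniqueArc x a hxa
    obtain ⟨f, hc, hi, hrange, h0, h1⟩ := TreeAux.isArcBetween_exists_param hJ
    set S : Set ℝ := Subtype.val '' (f ⁻¹' closure A) with hS
    have hScpt : IsCompact S :=
      ((isClosed_closure.preimage hc).isCompact).image continuous_subtype_val
    have hSne : S.Nonempty := by
      refine ⟨1, 1, ?_, rfl⟩
      simp only [Set.mem_preimage, h1]
      exact subset_closure ha
    obtain ⟨r₀, hr₀S, hleast⟩ := hScpt.exists_isLeast hSne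
    obtain ⟨t₀, ht₀mem, ht₀val⟩ := hr₀S
    have hzA : f t₀ ∈ closure A := ht₀mem
    have hzC : f t₀ ∈ closure (connectedComponentIn Aᶜ x) := by
      by_cases hr0 : r₀ = 0
      · have ht00 : t₀ = 0 := Subtype.ext (by rw [ht₀val, hr0]; rfl)
        rw [ht00, h0]
        exact subset_closure (mem_connectedComponentIn hxc)
      · have hr0pos : 0 < r₀ := lt_of_le_of_ne (ht₀val ▸ t₀.2.1) (Ne.symm hr0)
        set g : ℝ → T := fun r => f (Set.projIcc 0 1 zero_le_one r) with hg
        have hgc : Continuous g := hc.comp continuous_projIcc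
        have hgr : ∀ r (hr : r ∈ Set.Icc (0:ℝ) 1), g r = f ⟨r, hr⟩ := by
          intro r hr
          simp only [hg]
          rw [Set.projIcc_of_mem _ hr]
        have hr₀I : r₀ ∈ Set.Icc (0:ℝ) 1 := ht₀val ▸ t₀.2
        have hKA : g '' (Set.Ico 0 r₀) ⊆ Aᶜ := by
          rintro _ ⟨r, hr, rfl⟩
          have hrI : r ∈ Set.Icc (0:ℝ) 1 := ⟨hr.1, hr.2.le.trans hr₀I.2⟩
          rw [hgr r hrI]
          intro hmem
          have hrS : r ∈ S := ⟨⟨r, hrI⟩, subset_closure hmem, rfl⟩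
          exact absurd (hleast hrS) (not_le.mpr hr.2)
        have hxK : x ∈ g '' (Set.Ico 0 r₀) := by
          refine ⟨0, ⟨le_refl _, hr0pos⟩, ?_⟩
          rw [hgr 0 ⟨le_refl _, zero_le_one⟩, ← h0]
          exact congrArg f (Subtype.ext rfl)
        have hKC : g '' (Set.Ico 0 r₀) ⊆ connectedComponentIn Aᶜ x :=
          (isPreconnected_Ico.image g hgc.continuousOn).subset_connectedComponentIn hxK hKA
        have hzcl : f t₀ ∈ closure (g '' (Set.Ico 0 r₀)) := by
          have hz : f t₀ = g r₀ := by
            rw [hgr r₀ hr₀I]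
            exact congrArg f (Subtype.ext ht₀val)
          rw [hz]
          have h5 : g r₀ ∈ g '' (closure (Set.Ico 0 r₀)) := by
            refine ⟨r₀, ?_, rfl⟩
            rw [closure_Ico (ne_of_lt hr0pos)]
            exact ⟨hr0pos.le, le_refl _⟩
          exact (image_closure_subset_closure_image hgc) h5
        exact closure_mono hKC hzcl
    refine ⟨f t₀, ?_⟩
    apply Set.eq_singleton_iff_unique_mem.mpr
    exact ⟨⟨hzC, hzA⟩, fun w hw => huniq w hw (f t₀) ⟨hzC, hzA⟩⟩
end

section
/- Let T be a tree, x ∈ T, and let (x_n)_{n≥0} be a sequence in T consistent with x, meaning x_m ∈ Comp(T\{x_n}, x) whenever m > n ≥ 0. Then there is a finite partition of the nonnegative integers into sets L_1, …, L_k such that for each i, and all m > n with m, n ∈ L_i, the arc [x, x_m] is contained in the arc [x, x_n]. In particular, each subsequence (x_n)_{n∈L_i} converges. -/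
open Set Filter Metric Topology TopologicalSpace

namespace TreeAux

variable {T : Type*} [MetricSpace T]

local notation "I01" => Set.Icc (0:ℝ) 1

/-- A (pre-)parametrization of an arc: continuous and injective on `[0,1]`. -/
structure ArcP (γ : ℝ → T) : Prop where
  cont : Continuous γ
  inj : Set.InjOn γ I01

theorem ArcP.image_compact {γ : ℝ → T} (h : ArcP γ) : IsCompact (γ '' I01) :=
  isCompact_Icc.image h.cont

theorem ArcP.image_closed {γ : ℝ → T} (h : ArcP γ) : IsClosed (γ '' I01) :=
  h.image_compact.isClosed

/-- The homeomorphism from `[0,1]` onto the image of an `ArcP`. -/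
noncomputable def ArcP.homeo {γ : ℝ → T} (h : ArcP γ) :
    ↥I01 ≃ₜ ↥(γ '' I01) := by
  have hc : Continuous (fun t : ↥I01 => (⟨γ t, Set.mem_image_of_mem _ t.2⟩ : ↥(γ '' I01))) := by
    exact Continuous.subtype_mk (h.cont.comp continuous_subtype_val) _
  have hbij : Function.Bijective
      (fun t : ↥I01 => (⟨γ t, Set.mem_image_of_mem _ t.2⟩ : ↥(γ '' I01))) := by
    constructor
    · rintro ⟨a, ha⟩ ⟨b, hb⟩ hab
      simp only [Subtype.mk.injEq] at hab
      exact Subtype.ext (h.inj ha hb hab)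
    · rintro ⟨p, t, ht, rfl⟩
      exact ⟨⟨t, ht⟩, rfl⟩
  exact Continuous.homeoOfEquivCompactToT2 (f := Equiv.ofBijective _ hbij) hc

@[simp] theorem ArcP.homeo_apply {γ : ℝ → T} (h : ArcP γ) (t : ↥I01) :
    (h.homeo t : T) = γ t := rfl

theorem ArcP.isArcBetween {γ : ℝ → T} (h : ArcP γ) :
    IsArcBetween (γ '' I01) (γ 0) (γ 1) := by
  refine ⟨h.homeo, ?_, ?_⟩ <;> simp

theorem exists_arcP_of_isArcBetween {A : Set T} {a b : T} (h : IsArcBetween A a b) :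
    ∃ γ : ℝ → T, ArcP γ ∧ γ '' I01 = A ∧ γ 0 = a ∧ γ 1 = b := by
  obtain ⟨e, he0, he1⟩ := h
  refine ⟨fun t => e (Set.projIcc 0 1 zero_le_one t), ⟨?_, ?_⟩, ?_, ?_, ?_⟩
  · exact continuous_subtype_val.comp (e.continuous.comp continuous_projIcc)
  · intro s hs t ht hst
    have h1 : Set.projIcc (0:ℝ) 1 zero_le_one s = ⟨s, hs⟩ := Set.projIcc_of_mem _ hs
    have h2 : Set.projIcc (0:ℝ) 1 zero_le_one t = ⟨t, ht⟩ := Set.projIcc_of_mem _ ht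
    simp only [h1, h2] at hst
    have := e.injective (Subtype.ext hst)
    simpa using congrArg Subtype.val this
  · ext p
    constructor
    · rintro ⟨t, ht, rfl⟩
      exact (e _).2
    · intro hp
      refine ⟨(e.symm ⟨p, hp⟩ : ℝ), (e.symm ⟨p, hp⟩).2, ?_⟩
      show (e (Set.projIcc 0 1 zero_le_one _) : T) = p
      rw [Set.projIcc_val]
      simp
  · show (e (Set.projIcc 0 1 zero_le_one 0) : T) = a
    rw [Set.projIcc_of_mem _ (Set.left_mem_Icc.2 zero_le_one)]
    exact he0
  · show (e (Set.projIcc 0 1 zero_le_one 1) : T) = b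
    rw [Set.projIcc_of_mem _ (Set.right_mem_Icc.2 zero_le_one)]
    exact he1

theorem exists_arcP_of_isArc {A : Set T} (h : IsArc A) :
    ∃ γ : ℝ → T, ArcP γ ∧ γ '' I01 = A := by
  obtain ⟨e⟩ := h
  obtain ⟨γ, h1, h2, -, -⟩ := exists_arcP_of_isArcBetween (A := A)
    (a := ((e ⟨0, by norm_num⟩ : ↥A) : T)) (b := ((e ⟨1, by norm_num⟩ : ↥A) : T))
    ⟨e, rfl, rfl⟩
  exact ⟨γ, h1, h2⟩

variable (hT : IsTreeSpace T)

theorem treeArc_self (x : T) : treeArc hT x x = {x} := by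
  simp [treeArc]

theorem treeArc_isArcBetween {x y : T} (h : x ≠ y) :
    IsArcBetween (treeArc hT x y) x y := by
  rw [treeArc, dif_neg h]
  exact (hT.uniqueArc x y h).choose_spec.1

theorem treeArc_unique {A : Set T} {x y : T} (h : x ≠ y) (hA : IsArcBetween A x y) :
    A = treeArc hT x y := by
  rw [treeArc, dif_neg h]
  exact (hT.uniqueArc x y h).choose_spec.2 A hA

theorem exists_arcP_treeArc {x y : T} (h : x ≠ y) :
    ∃ γ : ℝ → T, ArcP γ ∧ γ '' I01 = treeArc hT x y ∧ γ 0 = x ∧ γ 1 = y :=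
  exists_arcP_of_isArcBetween (treeArc_isArcBetween hT h)

theorem left_mem_treeArc (x y : T) : x ∈ treeArc hT x y := by
  rcases eq_or_ne x y with rfl | h
  · simp [treeArc_self]
  · obtain ⟨γ, hγ, hIm, h0, h1⟩ := exists_arcP_treeArc hT h
    rw [← hIm, ← h0]
    exact Set.mem_image_of_mem _ (by norm_num)

theorem right_mem_treeArc (x y : T) : y ∈ treeArc hT x y := by
  rcases eq_or_ne x y with rfl | h
  · simp [treeArc_self]
  · obtain ⟨γ, hγ, hIm, h0, h1⟩ := exists_arcP_treeArc hT h
    rw [← hIm, ← h1]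
    exact Set.mem_image_of_mem _ (by norm_num)

theorem treeArc_isClosed (x y : T) : IsClosed (treeArc hT x y) := by
  rcases eq_or_ne x y with rfl | h
  · simp [treeArc_self]
  · obtain ⟨γ, hγ, hIm, -, -⟩ := exists_arcP_treeArc hT h
    rw [← hIm]; exact hγ.image_closed

end TreeAux
namespace TreeAux

variable {T : Type*} [MetricSpace T]

local notation "I01" => Set.Icc (0:ℝ) 1

theorem image_affine01 {a b : ℝ} (h : a ≠ b) :
    (fun u : ℝ => a + u * (b - a)) '' I01 = Set.uIcc a b := by
  have hba : b - a ≠ 0 := sub_ne_zero.2 (Ne.symm h)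
  ext r
  constructor
  · rintro ⟨u, ⟨hu0, hu1⟩, rfl⟩
    dsimp only
    rcases lt_or_gt_of_ne h with hab | hab
    · rw [Set.uIcc_of_le hab.le]
      constructor <;> nlinarith
    · rw [Set.uIcc_of_ge hab.le]
      constructor <;> nlinarith
  · intro hr
    refine ⟨(r - a) / (b - a), ⟨?_, ?_⟩, ?_⟩
    · rcases lt_or_gt_of_ne h with hab | hab
      · rw [Set.uIcc_of_le hab.le] at hr
        apply div_nonneg (by linarith [hr.1]) (by linarith)
      · rw [Set.uIcc_of_ge hab.le] at hr
        rw [div_nonneg_iff]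
        exact Or.inr ⟨by linarith [hr.2], by linarith⟩
    · rcases lt_or_gt_of_ne h with hab | hab
      · rw [Set.uIcc_of_le hab.le] at hr
        rw [div_le_one (by linarith)]; linarith [hr.2]
      · rw [Set.uIcc_of_ge hab.le] at hr
        rw [div_le_one_of_neg (by linarith)]; linarith [hr.1]
    · dsimp only
      field_simp
      ring

theorem ArcP.affine {γ : ℝ → T} (hγ : ArcP γ) {a b : ℝ} (ha : a ∈ I01) (hb : b ∈ I01)
    (hab : a ≠ b) :
    ArcP (fun u : ℝ => γ (a + u * (b - a))) ∧
      (fun u : ℝ => γ (a + u * (b - a))) '' I01 = γ '' Set.uIcc a b ∧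
      γ (a + (0:ℝ) * (b - a)) = γ a ∧ γ (a + (1:ℝ) * (b - a)) = γ b := by
  have hsub : Set.uIcc a b ⊆ I01 := Set.uIcc_subset_Icc ha hb
  have him : (fun u : ℝ => γ (a + u * (b - a))) '' I01 = γ '' Set.uIcc a b := by
    rw [show (fun u : ℝ => γ (a + u * (b - a))) = γ ∘ (fun u : ℝ => a + u * (b - a)) from rfl,
      Set.image_comp, image_affine01 hab]
  refine ⟨⟨?_, ?_⟩, him, by norm_num, by ring_nf⟩
  · exact hγ.cont.comp (by continuity)
  · intro s hs t ht hst
    have hs' : a + s * (b - a) ∈ Set.uIcc a b := by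
      rw [← image_affine01 hab]; exact Set.mem_image_of_mem _ hs
    have ht' : a + t * (b - a) ∈ Set.uIcc a b := by
      rw [← image_affine01 hab]; exact Set.mem_image_of_mem _ ht
    have := hγ.inj (hsub hs') (hsub ht') hst
    have hba : b - a ≠ 0 := sub_ne_zero.2 (Ne.symm hab)
    have h2 : (s - t) * (b - a) = 0 := by linear_combination this
    rcases mul_eq_zero.1 h2 with h | h
    · linarith
    · exact absurd h hba

variable (hT : IsTreeSpace T)

/-- The unique arc between two points of a parametrized arc is the corresponding
sub-interval's image. -/
theorem treeArc_params {γ : ℝ → T} (hγ : ArcP γ) {a b : ℝ} (ha : a ∈ I01) (hb : b ∈ I01) :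
    treeArc hT (γ a) (γ b) = γ '' Set.uIcc a b := by
  rcases eq_or_ne a b with rfl | hab
  · rw [Set.uIcc_self, Set.image_singleton, treeArc_self]
  · obtain ⟨hA, him, h0, h1⟩ := hγ.affine ha hb hab
    have hne : γ a ≠ γ b := fun h => hab (hγ.inj ha hb h)
    have := hA.isArcBetween
    rw [h0, h1, him] at this
    exact (treeArc_unique hT hne this).symm

theorem treeArc_subset_arc {γ : ℝ → T} (hγ : ArcP γ) {p q : T}
    (hp : p ∈ γ '' I01) (hq : q ∈ γ '' I01) : treeArc hT p q ⊆ γ '' I01 := by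
  obtain ⟨a, ha, rfl⟩ := hp
  obtain ⟨b, hb, rfl⟩ := hq
  rw [treeArc_params hT hγ ha hb]
  exact Set.image_mono (Set.uIcc_subset_Icc ha hb)

theorem treeArc_comm (x y : T) : treeArc hT x y = treeArc hT y x := by
  rcases eq_or_ne x y with rfl | h
  · rfl
  · obtain ⟨γ, hγ, him, h0, h1⟩ := exists_arcP_treeArc hT h
    have := treeArc_params hT hγ (Set.right_mem_Icc.2 zero_le_one) (Set.left_mem_Icc.2 zero_le_one)
    rw [h0, h1] at this
    rw [this, Set.uIcc_comm, Set.uIcc_of_le zero_le_one, him]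

/-- A closed, nonempty, arc-convex subset of an arc is the image of a closed
subinterval. -/
theorem interval_of_convex {γ : ℝ → T} (hγ : ArcP γ) {S : Set T}
    (hSsub : S ⊆ γ '' I01) (hScl : IsClosed S) (hSne : S.Nonempty)
    (hconv : ∀ p ∈ S, ∀ q ∈ S, treeArc hT p q ⊆ S) :
    ∃ u v : ℝ, u ∈ I01 ∧ v ∈ I01 ∧ u ≤ v ∧ S = γ '' Set.Icc u v := by
  set J : Set ℝ := I01 ∩ γ ⁻¹' S with hJ
  have hJcl : IsClosed J := isClosed_Icc.inter (hScl.preimage hγ.cont)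
  have hJcp : IsCompact J := isCompact_Icc.of_isClosed_subset hJcl Set.inter_subset_left
  have hJne : J.Nonempty := by
    obtain ⟨p, hp⟩ := hSne
    obtain ⟨t, ht, rfl⟩ := hSsub hp
    exact ⟨t, ht, hp⟩
  have hJconv : ∀ a ∈ J, ∀ b ∈ J, ∀ r, a ≤ r → r ≤ b → r ∈ J := by
    rintro a ⟨ha, haS⟩ b ⟨hb, hbS⟩ r har hrb
    have hr : r ∈ I01 := ⟨le_trans ha.1 har, le_trans hrb hb.2⟩
    refine ⟨hr, ?_⟩
    have : γ r ∈ γ '' Set.uIcc a b := Set.mem_image_of_mem _ (by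
      rw [Set.uIcc_of_le (le_trans har hrb)]; exact ⟨har, hrb⟩)
    rw [← treeArc_params hT hγ ha hb] at this
    exact hconv _ haS _ hbS this
  have huJ : sInf J ∈ J := hJcp.sInf_mem hJne
  have hvJ : sSup J ∈ J := hJcp.sSup_mem hJne
  refine ⟨sInf J, sSup J, huJ.1, hvJ.1,
    csInf_le_csSup hJne hJcp.bddBelow hJcp.bddAbove, ?_⟩
  · ext p
    constructor
    · intro hp
      obtain ⟨t, ht, rfl⟩ := hSsub hp
      have htJ : t ∈ J := ⟨ht, hp⟩
      exact Set.mem_image_of_mem _ ⟨csInf_le hJcp.bddBelow htJ, le_csSup hJcp.bddAbove htJ⟩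
    · rintro ⟨r, ⟨hr1, hr2⟩, rfl⟩
      exact (hJconv _ huJ _ hvJ r hr1 hr2).2

end TreeAux
namespace TreeAux

variable {T : Type*} [MetricSpace T]

local notation "I01" => Set.Icc (0:ℝ) 1

open Set

/-- Gluing two arcs that meet only at a common endpoint. -/
theorem glue {γ₁ γ₂ : ℝ → T} (h1 : ArcP γ₁) (h2 : ArcP γ₂) (hw : γ₁ 1 = γ₂ 0)
    (hinter : γ₁ '' I01 ∩ γ₂ '' I01 ⊆ {γ₁ 1}) (hne : γ₁ 0 ≠ γ₂ 1) :
    IsArcBetween (γ₁ '' I01 ∪ γ₂ '' I01) (γ₁ 0) (γ₂ 1) := by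
  classical
  set δ : ℝ → T := fun u => if u ≤ 1/2 then γ₁ (2*u) else γ₂ (2*u - 1) with hδ
  have hδcont : Continuous δ := by
    apply Continuous.if_le (h1.cont.comp (by continuity)) (h2.cont.comp (by continuity))
      continuous_id continuous_const
    intro u hu
    subst hu
    norm_num [hw]
  have hmem1 : ∀ u : ℝ, u ∈ Icc (0:ℝ) (1/2) → δ u = γ₁ (2*u) := by
    intro u hu; show (if u ≤ 1/2 then γ₁ (2*u) else γ₂ (2*u - 1)) = γ₁ (2*u)
    rw [if_pos hu.2]
  have hmem2 : ∀ u : ℝ, u ∈ Icc (1/2 : ℝ) 1 → δ u = γ₂ (2*u - 1) := by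
    intro u hu
    show (if u ≤ 1/2 then γ₁ (2*u) else γ₂ (2*u - 1)) = γ₂ (2*u - 1)
    rcases eq_or_lt_of_le hu.1 with h | h
    · rw [if_pos h.ge, ← h]
      norm_num [hw]
    · rw [if_neg (not_le.2 h)]
  have hinj : Set.InjOn δ I01 := by
    intro u hu v hv huv
    rcases le_or_gt u (1/2) with hu2 | hu2 <;> rcases le_or_gt v (1/2) with hv2 | hv2
    · rw [hmem1 u ⟨hu.1, hu2⟩, hmem1 v ⟨hv.1, hv2⟩] at huv
      have := h1.inj ⟨by linarith [hu.1], by linarith⟩ ⟨by linarith [hv.1], by linarith⟩ huv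
      linarith
    · rw [hmem1 u ⟨hu.1, hu2⟩, hmem2 v ⟨hv2.le, hv.2⟩] at huv
      have hmem : γ₁ (2*u) ∈ γ₁ '' I01 ∩ γ₂ '' I01 := by
        constructor
        · exact mem_image_of_mem _ ⟨by linarith [hu.1], by linarith⟩
        · rw [huv]; exact mem_image_of_mem _ ⟨by linarith, by linarith [hv.2]⟩
      have h1' := hinter hmem
      simp only [mem_singleton_iff] at h1'
      have hv' : γ₂ (2*v - 1) = γ₂ 0 := by rw [← huv, h1', hw]
      have := h2.inj ⟨by linarith, by linarith [hv.2]⟩ (left_mem_Icc.2 zero_le_one) hv'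
      linarith
    · rw [hmem2 u ⟨hu2.le, hu.2⟩, hmem1 v ⟨hv.1, hv2⟩] at huv
      have hmem : γ₁ (2*v) ∈ γ₁ '' I01 ∩ γ₂ '' I01 := by
        constructor
        · exact mem_image_of_mem _ ⟨by linarith [hv.1], by linarith⟩
        · rw [← huv]; exact mem_image_of_mem _ ⟨by linarith, by linarith [hu.2]⟩
      have h1' := hinter hmem
      simp only [mem_singleton_iff] at h1'
      have hu' : γ₂ (2*u - 1) = γ₂ 0 := by rw [huv, h1', hw]
      have := h2.inj ⟨by linarith, by linarith [hu.2]⟩ (left_mem_Icc.2 zero_le_one) hu'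
      linarith
    · rw [hmem2 u ⟨hu2.le, hu.2⟩, hmem2 v ⟨hv2.le, hv.2⟩] at huv
      have := h2.inj ⟨by linarith, by linarith [hu.2]⟩ ⟨by linarith, by linarith [hv.2]⟩ huv
      linarith
  have him : δ '' I01 = γ₁ '' I01 ∪ γ₂ '' I01 := by
    apply Set.Subset.antisymm
    · rintro p ⟨u, hu, rfl⟩
      rcases le_or_gt u (1/2) with h | h
      · exact Or.inl (by rw [hmem1 u ⟨hu.1, h⟩]; exact mem_image_of_mem _ ⟨by linarith [hu.1], by linarith⟩)
      · exact Or.inr (by rw [hmem2 u ⟨h.le, hu.2⟩]; exact mem_image_of_mem _ ⟨by linarith, by linarith [hu.2]⟩)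
    · rintro p (⟨t, ht, rfl⟩ | ⟨t, ht, rfl⟩)
      · refine ⟨t/2, ⟨by linarith [ht.1], by linarith [ht.2]⟩, ?_⟩
        rw [hmem1 (t/2) ⟨by linarith [ht.1], by linarith [ht.2]⟩]
        ring_nf
      · refine ⟨(t+1)/2, ⟨by linarith [ht.1], by linarith [ht.2]⟩, ?_⟩
        rw [hmem2 ((t+1)/2) ⟨by linarith [ht.1], by linarith [ht.2]⟩]
        ring_nf
  have hδa : ArcP δ := ⟨hδcont, hinj⟩
  have h0 : δ 0 = γ₁ 0 := by rw [hmem1 0 ⟨le_refl _, by norm_num⟩]; norm_num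
  have h1' : δ 1 = γ₂ 1 := by rw [hmem2 1 ⟨by norm_num, le_refl _⟩]; norm_num
  have := hδa.isArcBetween
  rw [h0, h1', him] at this
  exact this

variable (hT : IsTreeSpace T)

/-- The triangle property: the arc `[x,q]` lies inside `[x,y] ∪ [y,q]`. -/
theorem treeArc_triangle (x y q : T) :
    treeArc hT x q ⊆ treeArc hT x y ∪ treeArc hT y q := by
  rcases eq_or_ne x y with rfl | hxy
  · exact fun p hp => Or.inr hp
  rcases eq_or_ne y q with rfl | hyq
  · exact fun p hp => Or.inl hp
  rcases eq_or_ne x q with rfl | hxq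
  · rw [treeArc_self]
    exact fun p hp => Or.inl (by rw [mem_singleton_iff] at hp; rw [hp]; exact left_mem_treeArc hT x y)
  obtain ⟨β, hβ, hβim, hβ0, hβ1⟩ := exists_arcP_treeArc hT hyq
  set K : Set ℝ := I01 ∩ β ⁻¹' (treeArc hT x y) with hK
  have hKcl : IsClosed K := isClosed_Icc.inter ((treeArc_isClosed hT x y).preimage hβ.cont)
  have hKcp : IsCompact K := isCompact_Icc.of_isClosed_subset hKcl inter_subset_left
  have hKne : K.Nonempty := ⟨0, ⟨le_refl _, zero_le_one⟩, by
    simp only [mem_preimage, hβ0]; exact right_mem_treeArc hT x y⟩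
  have htK : sSup K ∈ K := hKcp.sSup_mem hKne
  set t : ℝ := sSup K with ht
  set w : T := β t with hwdef
  have htmem : t ∈ I01 := htK.1
  have hwxy : w ∈ treeArc hT x y := htK.2
  rcases eq_or_lt_of_le htmem.2 with ht1 | ht1
  · -- t = 1 : q ∈ [x,y]
    have hq : q ∈ treeArc hT x y := by rw [← hβ1, ← ht1]; exact hwxy
    have : treeArc hT x q ⊆ treeArc hT x y := by
      obtain ⟨γ, hγ, hγim, hγ0, hγ1⟩ := exists_arcP_treeArc hT hxy
      rw [← hγim]
      refine treeArc_subset_arc hT hγ ?_ ?_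
      · rw [hγim]; exact left_mem_treeArc hT x y
      · rw [hγim]; exact hq
    exact fun p hp => Or.inl (this hp)
  · -- t < 1
    obtain ⟨hA2, hA2im, hA20, hA21⟩ := hβ.affine htmem (right_mem_Icc.2 zero_le_one) (ne_of_lt ht1)
    set β' : ℝ → T := fun u => β (t + u * (1 - t)) with hβ'
    have hβ'0 : β' 0 = w := by show β (t + 0 * (1-t)) = w; norm_num [hwdef]
    have hβ'1 : β' 1 = q := by show β (t + 1 * (1-t)) = q; rw [← hβ1]; ring_nf
    have hβ'im : β' '' I01 = β '' Icc t 1 := by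
      rw [hA2im, uIcc_of_le (le_of_lt ht1)]
    have hsubβ' : β' '' I01 ⊆ treeArc hT y q := by
      rw [hβ'im, ← hβim]
      exact image_mono (Icc_subset_Icc htmem.1 le_rfl)
    rcases eq_or_ne x w with hxw | hxw
    · -- w = x : [x,q] = A2 ⊆ [y,q]
      have harc : IsArcBetween (β' '' I01) x q := by
        have h := hA2.isArcBetween
        rw [hβ'0, hβ'1] at h
        rw [hxw]
        exact h
      have : treeArc hT x q = β' '' I01 := (treeArc_unique hT hxq harc).symm
      rw [this]
      exact fun p hp => Or.inr (hsubβ' hp)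
    · -- w ≠ x : glue [x,w] and [w,q]
      obtain ⟨γ₁, hγ₁, hγ₁im, hγ₁0, hγ₁1⟩ := exists_arcP_treeArc hT hxw
      have hsub1 : γ₁ '' I01 ⊆ treeArc hT x y := by
        rw [hγ₁im]
        obtain ⟨γ, hγ, hγim, hγ0, hγ1⟩ := exists_arcP_treeArc hT hxy
        rw [← hγim]
        refine treeArc_subset_arc hT hγ ?_ ?_
        · rw [hγim]; exact left_mem_treeArc hT x y
        · rw [hγim]; exact hwxy
      have hwq : w ≠ q := by
        intro h
        rw [← hβ1] at h
        have := hβ.inj htmem (right_mem_Icc.2 zero_le_one) h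
        exact (ne_of_lt ht1) this
      have hint : γ₁ '' I01 ∩ β' '' I01 ⊆ {γ₁ 1} := by
        rintro p ⟨hp1, hp2⟩
        rw [hβ'im] at hp2
        obtain ⟨r, hr, rfl⟩ := hp2
        have hrK : r ∈ K := by
          refine ⟨⟨le_trans htmem.1 hr.1, hr.2⟩, ?_⟩
          exact mem_preimage.2 (hsub1 hp1)
        have hrt : r ≤ t := le_csSup hKcp.bddAbove hrK
        have : r = t := le_antisymm hrt hr.1
        rw [this, hγ₁1]
        rfl
      have hglue := glue hγ₁ ⟨hA2.cont, hA2.inj⟩ (by rw [hγ₁1, hβ'0]) hint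
        (by rw [hγ₁0, hβ'1]; exact hxq)
      rw [hγ₁0, hβ'1] at hglue
      have : treeArc hT x q = γ₁ '' I01 ∪ β' '' I01 := (treeArc_unique hT hxq hglue).symm
      rw [this]
      rintro p (hp | hp)
      · exact Or.inl (hsub1 hp)
      · exact Or.inr (hsubβ' hp)

end TreeAux
namespace TreeAux

variable {T : Type*} [MetricSpace T]

local notation "I01" => Set.Icc (0:ℝ) 1

open Set

variable (hT : IsTreeSpace T)

section Cover

variable {s : Finset (Set T)} {g : Set T → ℝ → T}

theorem arc_closed (hg : ∀ A ∈ s, ArcP (g A) ∧ (g A) '' I01 = A)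
    {A : Set T} (hA : A ∈ s) : IsClosed A := by
  obtain ⟨h1, h2⟩ := hg A hA
  rw [← h2]; exact h1.image_closed

variable (hg : ∀ A ∈ s, ArcP (g A) ∧ (g A) '' I01 = A)
  (hcov : ⋃₀ (s : Set (Set T)) = Set.univ)

include hT hg hcov

/-- Any arc continues, right after any non-final parameter,
inside a single one of the covering arcs. -/
theorem cover_right {γ : ℝ → T} (hγ : ArcP γ) {t0 : ℝ} (ht0 : t0 ∈ I01) (ht1 : t0 < 1) :
    ∃ A ∈ s, ∃ δ : ℝ, 0 < δ ∧ t0 + δ ≤ 1 ∧ γ '' Icc t0 (t0 + δ) ⊆ A := by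
  classical
  set J : Set T → Set ℝ := fun A => I01 ∩ γ ⁻¹' ((γ '' I01) ∩ A) with hJ
  have hJcl : ∀ A ∈ s, IsClosed (J A) := fun A hA =>
    isClosed_Icc.inter ((hγ.image_closed.inter (arc_closed hg hA)).preimage hγ.cont)
  have hJconv : ∀ A ∈ s, ∀ a ∈ J A, ∀ b ∈ J A, ∀ r, a ≤ r → r ≤ b → r ∈ J A := by
    rintro A hA a ⟨ha, ha1, ha2⟩ b ⟨hb, hb1, hb2⟩ r har hrb
    have hr : r ∈ I01 := ⟨le_trans ha.1 har, le_trans hrb hb.2⟩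
    refine ⟨hr, mem_image_of_mem _ hr, ?_⟩
    have hmem : γ r ∈ treeArc hT (γ a) (γ b) := by
      rw [treeArc_params hT hγ ha hb]
      exact mem_image_of_mem _ (by rw [uIcc_of_le (le_trans har hrb)]; exact ⟨har, hrb⟩)
    obtain ⟨hgA, hgAim⟩ := hg A hA
    have := treeArc_subset_arc hT hgA (p := γ a) (q := γ b) (by rw [hgAim]; exact ha2)
      (by rw [hgAim]; exact hb2)
    rw [hgAim] at this
    exact this hmem
  by_cases hP : ∃ A ∈ s, t0 ∈ J A ∧ ∃ r, t0 < r ∧ r ∈ J A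
  · obtain ⟨A, hA, ht0A, r, hrt0, hrA⟩ := hP
    refine ⟨A, hA, r - t0, by linarith, by linarith [hrA.1.2], ?_⟩
    rintro p ⟨ρ, hρ, rfl⟩
    have : ρ ∈ J A := hJconv A hA t0 ht0A r hrA ρ hρ.1 (by linarith [hρ.2])
    exact this.2.2
  · exfalso
    push_neg at hP
    set U : Set ℝ := ⋃ A ∈ s.filter (fun A => t0 ∉ J A), J A with hU
    have hUcl : IsClosed U := by
      apply Set.Finite.isClosed_biUnion (Finset.finite_toSet _)
      intro A hA
      exact hJcl A (Finset.mem_of_mem_filter A hA)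
    have hsub : Ioc t0 1 ⊆ U := by
      intro r hr
      have hrI : r ∈ I01 := ⟨le_trans ht0.1 hr.1.le, hr.2⟩
      have : γ r ∈ ⋃₀ (s : Set (Set T)) := by rw [hcov]; trivial
      obtain ⟨A, hA, hrA⟩ := this
      have hAs : A ∈ s := hA
      have hrJ : r ∈ J A := ⟨hrI, mem_image_of_mem _ hrI, hrA⟩
      have ht0A : t0 ∉ J A := fun h => hP A hAs h r hr.1 hrJ
      exact Set.mem_biUnion (Finset.mem_filter.2 ⟨hAs, ht0A⟩) hrJ
    have : t0 ∈ U := by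
      have h1 : t0 ∈ closure (Ioc t0 1) := by
        rw [closure_Ioc (ne_of_lt ht1)]
        exact ⟨le_refl _, ht1.le⟩
      have := closure_mono hsub h1
      rwa [hUcl.closure_eq] at this
    obtain ⟨JA, ⟨A, rfl⟩, h2⟩ := this
    simp only [Set.mem_iUnion] at h2
    obtain ⟨hA, h3⟩ := h2
    exact (Finset.mem_filter.1 hA).2 h3

/-- Arc-convex neighbourhoods inside any open set. -/
theorem local_nbhd (p : T) {U : Set T} (hU : IsOpen U) (hp : p ∈ U) :
    ∃ N : Set T, N ∈ 𝓝 p ∧ N ⊆ U ∧ ∀ q ∈ N, treeArc hT p q ⊆ N := by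
  classical
  have hwin : ∀ A : Set T, ∃ NA : Set T, NA ⊆ U ∧
      (∀ q ∈ NA, treeArc hT p q ⊆ NA) ∧
      (A ∈ s → p ∈ A → ∃ ε : ℝ, 0 < ε ∧ ∀ q ∈ A, dist q p < ε → q ∈ NA) := by
    intro A
    by_cases hA : A ∈ s ∧ p ∈ A
    · obtain ⟨hAs, hpA⟩ := hA
      obtain ⟨hgA, hgAim⟩ := hg A hAs
      obtain ⟨c, hc, hcp⟩ : ∃ c ∈ I01, g A c = p := by
        have : p ∈ (g A) '' I01 := by rw [hgAim]; exact hpA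
        obtain ⟨c, hc, hcp⟩ := this; exact ⟨c, hc, hcp⟩
      obtain ⟨δ, hδpos, hδ⟩ : ∃ δ : ℝ, 0 < δ ∧ ∀ r : ℝ, dist r c < δ → g A r ∈ U := by
        have := (hgA.cont.tendsto c).eventually (hU.mem_nhds (by rw [hcp]; exact hp))
        rw [Metric.eventually_nhds_iff] at this
        obtain ⟨δ, hδpos, hδ⟩ := this
        exact ⟨δ, hδpos, fun r hr => hδ hr⟩
      set W : Set ℝ := Icc (c - δ/2) (c + δ/2) ∩ I01 with hW
      refine ⟨g A '' W, ?_, ?_, fun _ _ => ?_⟩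
      · rintro q ⟨r, hr, rfl⟩
        apply hδ
        have h1 := hr.1
        rw [Real.dist_eq, abs_lt]
        constructor <;> [linarith [h1.1]; linarith [h1.2]]
      · rintro q ⟨r, hr, rfl⟩
        rw [← hcp, treeArc_params hT hgA hc hr.2]
        apply image_mono
        intro ρ hρ
        have h1 : ρ ∈ uIcc c r := hρ
        rcases le_total c r with h | h
        · rw [uIcc_of_le h] at h1
          exact ⟨⟨by linarith [h1.1], by linarith [hr.1.2, h1.2]⟩,
            ⟨le_trans hc.1 h1.1, le_trans h1.2 hr.2.2⟩⟩
        · rw [uIcc_of_ge h] at h1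
          exact ⟨⟨by linarith [hr.1.1, h1.1], by linarith [h1.2]⟩,
            ⟨le_trans hr.2.1 h1.1, le_trans h1.2 hc.2⟩⟩
      · set K : Set T := g A '' (I01 \ Ioo (c - δ/2) (c + δ/2)) with hKdef
        have hKcp : IsCompact K := by
          apply IsCompact.image _ hgA.cont
          exact isCompact_Icc.of_isClosed_subset (isClosed_Icc.sdiff isOpen_Ioo) diff_subset
        have hpK : p ∉ K := by
          rintro ⟨r, hr, hrp⟩
          have : r = c := hgA.inj hr.1 hc (by rw [hrp, hcp])
          exact hr.2 (by rw [this]; exact ⟨by linarith, by linarith⟩)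
        by_cases hKne : K.Nonempty
        · refine ⟨Metric.infDist p K, (hKcp.isClosed.notMem_iff_infDist_pos hKne).1 hpK, ?_⟩
          intro q hq hdist
          have hqim : q ∈ (g A) '' I01 := by rw [hgAim]; exact hq
          obtain ⟨r, hr, rfl⟩ := hqim
          by_cases hrW : r ∈ Ioo (c - δ/2) (c + δ/2)
          · exact mem_image_of_mem _ ⟨⟨hrW.1.le, hrW.2.le⟩, hr⟩
          · exfalso
            have : g A r ∈ K := mem_image_of_mem _ ⟨hr, hrW⟩
            have h9 := Metric.infDist_le_dist_of_mem (x := p) this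
            rw [dist_comm] at hdist
            linarith
        · refine ⟨1, one_pos, ?_⟩
          intro q hq hdist
          have hqim : q ∈ (g A) '' I01 := by rw [hgAim]; exact hq
          obtain ⟨r, hr, rfl⟩ := hqim
          by_cases hrW : r ∈ Ioo (c - δ/2) (c + δ/2)
          · exact mem_image_of_mem _ ⟨⟨hrW.1.le, hrW.2.le⟩, hr⟩
          · exact absurd ⟨g A r, mem_image_of_mem _ ⟨hr, hrW⟩⟩ hKne
    · refine ⟨∅, empty_subset _, fun q hq => absurd hq (notMem_empty q), fun h1 h2 => ?_⟩
      exact absurd ⟨h1, h2⟩ hA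
  choose NA hNA1 hNA2 hNA3 using hwin
  have hsne : s.Nonempty := by
    by_contra h
    rw [Finset.not_nonempty_iff_eq_empty] at h
    have : p ∈ ⋃₀ (s : Set (Set T)) := by rw [hcov]; trivial
    rw [h] at this
    simp at this
  have hmiss : ∀ A : Set T, ∃ ε : ℝ, 0 < ε ∧
      (A ∈ s → ∀ q ∈ A, dist q p < ε → q ∈ ⋃ B ∈ s, NA B) := by
    intro A
    by_cases hA : A ∈ s ∧ p ∈ A
    · obtain ⟨ε, hε, hε2⟩ := hNA3 A hA.1 hA.2
      exact ⟨ε, hε, fun hAs q hq hd => Set.mem_biUnion hAs (hε2 q hq hd)⟩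
    · by_cases hAs : A ∈ s
      · have hpA : p ∉ A := fun h => hA ⟨hAs, h⟩
        by_cases hAne : A.Nonempty
        · refine ⟨Metric.infDist p A,
            ((arc_closed hg hAs).notMem_iff_infDist_pos hAne).1 hpA, ?_⟩
          intro _ q hq hd
          exfalso
          have h9 := Metric.infDist_le_dist_of_mem (x := p) hq
          rw [dist_comm] at hd
          linarith
        · exact ⟨1, one_pos, fun _ q hq _ => absurd ⟨q, hq⟩ hAne⟩
      · exact ⟨1, one_pos, fun h => absurd h hAs⟩
  choose ε hε1 hε2 using hmiss
  set εm : ℝ := s.inf' hsne ε with hεm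
  have hεmpos : 0 < εm := by
    rw [hεm, Finset.lt_inf'_iff]
    exact fun A _ => hε1 A
  refine ⟨⋃ B ∈ s, NA B, ?_, ?_, ?_⟩
  · apply Filter.mem_of_superset (Metric.ball_mem_nhds p hεmpos)
    intro q hq
    have : q ∈ ⋃₀ (s : Set (Set T)) := by rw [hcov]; trivial
    obtain ⟨A, hAs, hqA⟩ := this
    apply hε2 A hAs q hqA
    have hd : dist q p < εm := Metric.mem_ball.1 hq
    exact lt_of_lt_of_le hd (Finset.inf'_le _ hAs)
  · intro q hq
    obtain ⟨NB, ⟨B, rfl⟩, hq2⟩ := hq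
    simp only [Set.mem_iUnion] at hq2
    obtain ⟨hBs, hq3⟩ := hq2
    exact hNA1 B hq3
  · intro q hq
    obtain ⟨NB, ⟨B, rfl⟩, hq2⟩ := hq
    simp only [Set.mem_iUnion] at hq2
    obtain ⟨hBs, hq3⟩ := hq2
    intro r hr
    exact Set.mem_biUnion hBs (hNA2 B q hq3 hr)

/-- The cut-point lemma: if `y` is in the same component of `T \ {z}` as `x`,
then `z` is not on the arc `[x,y]`. -/
theorem cutpoint {x z : T} (hzx : z ≠ x) {y : T}
    (hy : y ∈ connectedComponentIn ({z}ᶜ : Set T) x) : z ∉ treeArc hT x y := by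
  classical
  intro hzxy
  set C : Set T := connectedComponentIn ({z}ᶜ : Set T) x with hC
  have hxz : x ∈ ({z}ᶜ : Set T) := by simp [Ne.symm hzx]
  have hCz : C ⊆ {z}ᶜ := connectedComponentIn_subset _ _
  have hVn : ∀ y' : T, ∃ V : Set T, IsOpen V ∧ (y' ∈ C → y' ∈ V ∧ V ⊆ {z}ᶜ ∧
      ∀ q ∈ V, treeArc hT y' q ⊆ {z}ᶜ) := by
    intro y'
    by_cases hy' : y' ∈ C
    · obtain ⟨N, hN1, hN2, hN3⟩ := local_nbhd hT hg hcov y' (U := {z}ᶜ)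
        (isClosed_singleton.isOpen_compl) (hCz hy')
      refine ⟨interior N, isOpen_interior, fun _ => ⟨mem_interior_iff_mem_nhds.2 hN1, ?_, ?_⟩⟩
      · exact interior_subset.trans hN2
      · intro q hq
        exact (hN3 q (interior_subset hq)).trans hN2
    · exact ⟨∅, isOpen_empty, fun h => absurd h hy'⟩
  choose V hVopen hVprop using hVn
  set U1 : Set T := ⋃ y' ∈ {y' : T | y' ∈ C ∧ z ∉ treeArc hT x y'}, V y' with hU1
  set U2 : Set T := ⋃ y' ∈ {y' : T | y' ∈ C ∧ z ∈ treeArc hT x y'}, V y' with hU2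
  have hU1open : IsOpen U1 := isOpen_biUnion fun y' _ => hVopen y'
  have hU2open : IsOpen U2 := isOpen_biUnion fun y' _ => hVopen y'
  have hkey1 : ∀ y' : T, (y' ∈ C ∧ z ∉ treeArc hT x y') → ∀ q ∈ V y', z ∉ treeArc hT x q := by
    rintro y' ⟨hy'C, hy'z⟩ q hq hzq
    obtain ⟨-, -, hV3⟩ := hVprop y' hy'C
    have := treeArc_triangle hT x y' q hzq
    rcases this with h | h
    · exact hy'z h
    · exact (hV3 q hq h) rfl
  have hkey2 : ∀ y' : T, (y' ∈ C ∧ z ∈ treeArc hT x y') → ∀ q ∈ V y', z ∈ treeArc hT x q := by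
    rintro y' ⟨hy'C, hy'z⟩ q hq
    obtain ⟨-, -, hV3⟩ := hVprop y' hy'C
    have := treeArc_triangle hT x q y' hy'z
    rcases this with h | h
    · exact h
    · exfalso
      rw [treeArc_comm] at h
      exact (hV3 q hq h) rfl
  have hpc : IsPreconnected C := isPreconnected_connectedComponentIn
  have hcover : C ⊆ U1 ∪ U2 := by
    intro y' hy'
    obtain ⟨hV1, -, -⟩ := hVprop y' hy'
    by_cases hz : z ∈ treeArc hT x y'
    · exact Or.inr (Set.mem_biUnion ⟨hy', hz⟩ hV1)
    · exact Or.inl (Set.mem_biUnion ⟨hy', hz⟩ hV1)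
  have hne1 : (C ∩ U1).Nonempty := by
    refine ⟨x, mem_connectedComponentIn hxz, ?_⟩
    have hx1 : x ∈ C ∧ z ∉ treeArc hT x x := by
      refine ⟨mem_connectedComponentIn hxz, ?_⟩
      rw [treeArc_self]
      simp [hzx]
    exact Set.mem_biUnion hx1 (hVprop x hx1.1).1
  have hne2 : (C ∩ U2).Nonempty := by
    refine ⟨y, hy, ?_⟩
    have hy2 : y ∈ C ∧ z ∈ treeArc hT x y := ⟨hy, hzxy⟩
    exact Set.mem_biUnion hy2 (hVprop y hy).1
  obtain ⟨q, hqC, hq1, hq2⟩ := hpc U1 U2 hU1open hU2open hcover hne1 hne2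
  obtain ⟨W1, ⟨y1, rfl⟩, hq1'⟩ := hq1
  simp only [Set.mem_iUnion] at hq1'
  obtain ⟨hy1, hqV1⟩ := hq1'
  obtain ⟨W2, ⟨y2, rfl⟩, hq2'⟩ := hq2
  simp only [Set.mem_iUnion] at hq2'
  obtain ⟨hy2, hqV2⟩ := hq2'
  exact hkey1 y1 hy1 q hqV1 (hkey2 y2 hy2 q hqV2)

end Cover

end TreeAux
namespace TreeAux

variable {T : Type*} [MetricSpace T]

local notation "I01" => Set.Icc (0:ℝ) 1

open Set

theorem image_Icc_inj {g : ℝ → T} (hg : ArcP g) {u v u' v' : ℝ}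
    (hu : u ∈ I01) (hv : v ∈ I01) (hu' : u' ∈ I01) (hv' : v' ∈ I01)
    (huv : u ≤ v) (huv' : u' ≤ v')
    (h : g '' Icc u v = g '' Icc u' v') : u = u' ∧ v = v' := by
  have hIcc : Icc u v = Icc u' v' := by
    apply Set.Subset.antisymm
    · intro t ht
      have htI : t ∈ I01 := ⟨le_trans hu.1 ht.1, le_trans ht.2 hv.2⟩
      have : g t ∈ g '' Icc u' v' := h ▸ mem_image_of_mem _ ht
      obtain ⟨t', ht', htt'⟩ := this
      have ht'I : t' ∈ I01 := ⟨le_trans hu'.1 ht'.1, le_trans ht'.2 hv'.2⟩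
      rwa [← hg.inj ht'I htI htt']
    · intro t ht
      have htI : t ∈ I01 := ⟨le_trans hu'.1 ht.1, le_trans ht.2 hv'.2⟩
      have : g t ∈ g '' Icc u v := h ▸ mem_image_of_mem _ ht
      obtain ⟨t', ht', htt'⟩ := this
      have ht'I : t' ∈ I01 := ⟨le_trans hu.1 ht'.1, le_trans ht'.2 hv.2⟩
      rwa [← hg.inj ht'I htI htt']
  constructor
  · have h1 : u' ∈ Icc u v := hIcc ▸ left_mem_Icc.2 huv'
    have h2 : u ∈ Icc u' v' := hIcc.symm ▸ left_mem_Icc.2 huv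
    exact le_antisymm h1.1 h2.1
  · have h1 : v' ∈ Icc u v := hIcc ▸ right_mem_Icc.2 huv'
    have h2 : v ∈ Icc u' v' := hIcc.symm ▸ right_mem_Icc.2 huv
    exact le_antisymm h2.2 h1.2

/-- Transfer of preconnectedness along the inverse of an arc parametrization. -/
theorem preconn_pullback {g : ℝ → T} (hg : ArcP g) {S' : Set ℝ} (hS' : S' ⊆ I01)
    (hpc : IsPreconnected (g '' S')) : IsPreconnected S' := by
  classical
  set E := hg.homeo with hE
  set ψ : T → ℝ := fun p => if h : p ∈ g '' I01 then (E.symm ⟨p, h⟩ : ℝ) else 0 with hψ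
  have hψcont : ContinuousOn ψ (g '' I01) := by
    rw [continuousOn_iff_continuous_restrict]
    have : (g '' I01).domRestrict ψ = fun p => (E.symm p : ℝ) := by
      funext p
      simp only [domRestrict_apply, hψ, dif_pos p.2]
    rw [this]
    exact continuous_subtype_val.comp E.symm.continuous
  have hψg : ∀ t ∈ I01, ψ (g t) = t := by
    intro t ht
    have h1 : g t ∈ g '' I01 := mem_image_of_mem _ ht
    have h2 : E ⟨t, ht⟩ = ⟨g t, h1⟩ := by
      apply Subtype.ext
      exact hg.homeo_apply ⟨t, ht⟩
    simp only [hψ, dif_pos h1, ← h2, Homeomorph.symm_apply_apply]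
  have him : ψ '' (g '' S') = S' := by
    apply Set.Subset.antisymm
    · rintro r ⟨p, ⟨t, ht, rfl⟩, rfl⟩
      rw [hψg t (hS' ht)]
      exact ht
    · intro t ht
      exact ⟨g t, mem_image_of_mem _ ht, hψg t (hS' ht)⟩
  rw [← him]
  exact hpc.image ψ (hψcont.mono (image_mono hS'))

variable (hT : IsTreeSpace T)

include hT in
/-- An arc with endpoint `w` lying inside another arc occupies a one-sided
interval next to `w` in the coordinates of the bigger arc. -/
theorem std {β : ℝ → T} (hβ : ArcP β) {g : ℝ → T} (hg : ArcP g)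
    (hsub : β '' I01 ⊆ g '' I01) :
    ∃ c d : ℝ, c ∈ I01 ∧ d ∈ I01 ∧ c ≠ d ∧ g c = β 0 ∧
      g '' uIcc c d = β '' I01 := by
  have hconv : ∀ p ∈ β '' I01, ∀ q ∈ β '' I01, treeArc hT p q ⊆ β '' I01 :=
    fun p hp q hq => treeArc_subset_arc hT hβ hp hq
  obtain ⟨u, v, hu, hv, huv, hS⟩ := interval_of_convex hT hg hsub hβ.image_closed
    (⟨β 0, mem_image_of_mem _ (left_mem_Icc.2 zero_le_one)⟩) hconv
  have hne01 : β 0 ≠ β 1 := by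
    intro h
    have := hβ.inj (left_mem_Icc.2 zero_le_one) (right_mem_Icc.2 zero_le_one) h
    norm_num at this
  have huvlt : u < v := by
    rcases eq_or_lt_of_le huv with rfl | h
    · exfalso
      apply hne01
      have h0 : β 0 ∈ g '' Icc u u := hS ▸ mem_image_of_mem _ (left_mem_Icc.2 zero_le_one)
      have h1 : β 1 ∈ g '' Icc u u := hS ▸ mem_image_of_mem _ (right_mem_Icc.2 zero_le_one)
      rw [Icc_self, image_singleton] at h0 h1
      rw [mem_singleton_iff] at h0 h1
      rw [h0, h1]
    · exact h
  obtain ⟨c, hc, hcw⟩ : ∃ c ∈ Icc u v, g c = β 0 := by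
    have : β 0 ∈ g '' Icc u v := hS ▸ mem_image_of_mem _ (left_mem_Icc.2 zero_le_one)
    obtain ⟨c, hc, hcw⟩ := this
    exact ⟨c, hc, hcw⟩
  have hcI : c ∈ I01 := ⟨le_trans hu.1 hc.1, le_trans hc.2 hv.2⟩
  have hcuv : c = u ∨ c = v := by
    by_contra hcon
    push_neg at hcon
    have hclt : u < c ∧ c < v :=
      ⟨lt_of_le_of_ne hc.1 (Ne.symm hcon.1), lt_of_le_of_ne hc.2 hcon.2⟩
    -- β '' I01 minus the point β 0, in two coordinates
    have him1 : β '' Ioc 0 1 = β '' I01 \ {β 0} := by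
      apply Set.Subset.antisymm
      · rintro p ⟨t, ht, rfl⟩
        refine ⟨mem_image_of_mem _ ⟨ht.1.le, ht.2⟩, ?_⟩
        simp only [mem_singleton_iff]
        intro h
        have := hβ.inj ⟨ht.1.le, ht.2⟩ (left_mem_Icc.2 zero_le_one) h
        exact absurd this (ne_of_gt ht.1)
      · rintro p ⟨⟨t, ht, rfl⟩, hp⟩
        simp only [mem_singleton_iff] at hp
        refine mem_image_of_mem _ ⟨?_, ht.2⟩
        rcases eq_or_lt_of_le ht.1 with h | h
        · exact absurd (by rw [← h]) hp
        · exact h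
    have him2 : g '' (Icc u v \ {c}) = β '' I01 \ {β 0} := by
      apply Set.Subset.antisymm
      · rintro p ⟨t, ⟨ht, htc⟩, rfl⟩
        have htI : t ∈ I01 := ⟨le_trans hu.1 ht.1, le_trans ht.2 hv.2⟩
        refine ⟨hS ▸ mem_image_of_mem _ ht, ?_⟩
        simp only [mem_singleton_iff] at htc ⊢
        intro h
        exact htc (hg.inj htI hcI (by rw [h, hcw]))
      · rintro p ⟨hp, hp2⟩
        have := hS ▸ hp
        obtain ⟨t, ht, rfl⟩ := hS.symm ▸ hp
        have htI : t ∈ I01 := ⟨le_trans hu.1 ht.1, le_trans ht.2 hv.2⟩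
        refine ⟨t, ⟨ht, ?_⟩, rfl⟩
        simp only [mem_singleton_iff] at hp2 ⊢
        intro h
        exact hp2 (by rw [h, hcw])
    have hpc : IsPreconnected (Icc u v \ {c}) := by
      apply preconn_pullback hg (fun t ht => ⟨le_trans hu.1 ht.1.1, le_trans ht.1.2 hv.2⟩)
      rw [him2, ← him1]
      exact isPreconnected_Ioc.image _ hβ.cont.continuousOn
    have := hpc.ordConnected
    have hcmem : c ∈ Icc u v \ {c} := by
      apply this.out ⟨left_mem_Icc.2 huv, by simp only [mem_singleton_iff]; exact hclt.1.ne⟩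
        ⟨right_mem_Icc.2 huv, by simp only [mem_singleton_iff]; exact hclt.2.ne'⟩
      exact hc
    exact hcmem.2 rfl
  rcases hcuv with rfl | rfl
  · refine ⟨c, v, hcI, hv, ne_of_lt huvlt, hcw, ?_⟩
    rw [uIcc_of_le huvlt.le, hS]
  · refine ⟨c, u, hcI, hu, (ne_of_lt huvlt).symm, hcw, ?_⟩
    rw [uIcc_of_ge huvlt.le, hS]

/-- Two one-sided intervals on the same side of the same point of the same arc
overlap in more than the point. -/
theorem overlap {g : ℝ → T} (hg : ArcP g) {c d d' : ℝ}
    (hc : c ∈ I01) (hd : d ∈ I01) (hd' : d' ∈ I01)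
    (hside : (c < d ∧ c < d') ∨ (d < c ∧ d' < c))
    (hdisj : g '' uIcc c d ∩ g '' uIcc c d' ⊆ {g c}) : False := by
  rcases hside with ⟨h1, h2⟩ | ⟨h1, h2⟩
  · set m : ℝ := min d d' with hm
    have hmc : c < m := lt_min h1 h2
    have hmem : g m ∈ g '' uIcc c d ∩ g '' uIcc c d' := by
      constructor
      · exact mem_image_of_mem _ (by rw [uIcc_of_le h1.le]; exact ⟨hmc.le, min_le_left _ _⟩)
      · exact mem_image_of_mem _ (by rw [uIcc_of_le h2.le]; exact ⟨hmc.le, min_le_right _ _⟩)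
    have := hdisj hmem
    simp only [mem_singleton_iff] at this
    have hmI : m ∈ I01 := ⟨le_trans hc.1 hmc.le, le_trans (min_le_left _ _) hd.2⟩
    exact absurd (hg.inj hmI hc this) (ne_of_gt hmc)
  · set m : ℝ := max d d' with hm
    have hmc : m < c := max_lt h1 h2
    have hmem : g m ∈ g '' uIcc c d ∩ g '' uIcc c d' := by
      constructor
      · exact mem_image_of_mem _ (by rw [uIcc_of_ge h1.le]; exact ⟨le_max_left _ _, hmc.le⟩)
      · exact mem_image_of_mem _ (by rw [uIcc_of_ge h2.le]; exact ⟨le_max_right _ _, hmc.le⟩)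
    have := hdisj hmem
    simp only [mem_singleton_iff] at this
    have hmI : m ∈ I01 := ⟨le_trans hd.1 (le_max_left _ _), le_trans hmc.le hc.2⟩
    exact absurd (hg.inj hmI hc this) (ne_of_lt hmc)

end TreeAux
namespace TreeAux

variable {T : Type*} [MetricSpace T]

local notation "I01" => Set.Icc (0:ℝ) 1

open Set

variable (hT : IsTreeSpace T)

section Branch

variable {s : Finset (Set T)} {g : Set T → ℝ → T}
  (hg : ∀ A ∈ s, ArcP (g A) ∧ (g A) '' I01 = A)

include hT hg

/-- Either `w` is an endpoint of the overlap interval of `A1` and `A2`, or a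
one-sided piece of the leg at `w` on `A1` can be re-expressed as a leg on `A2`. -/
theorem transfer {A1 A2 : Set T} (hA1 : A1 ∈ s) (hA2 : A2 ∈ s) {w : T} (hw2 : w ∈ A2)
    {c d : ℝ} (hc : c ∈ I01) (hd : d ∈ I01) (hcd : c ≠ d) (hcw : g A1 c = w) :
    (w ∈ A1 ∩ A2 ∧ ∀ u v, u ∈ I01 → v ∈ I01 → u ≤ v →
        A1 ∩ A2 = g A1 '' Icc u v → w = g A1 u ∨ w = g A1 v)
    ∨ (∃ c2 d2 : ℝ, c2 ∈ I01 ∧ d2 ∈ I01 ∧ c2 ≠ d2 ∧ g A2 c2 = w ∧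
        g A2 '' uIcc c2 d2 ⊆ g A1 '' uIcc c d) := by
  obtain ⟨hg1, hg1im⟩ := hg A1 hA1
  obtain ⟨hg2, hg2im⟩ := hg A2 hA2
  have hw1 : w ∈ A1 := by
    have h9 : g A1 c ∈ g A1 '' I01 := mem_image_of_mem _ hc
    rw [hg1im, hcw] at h9
    exact h9
  have hconv : ∀ p ∈ A1 ∩ A2, ∀ q ∈ A1 ∩ A2, treeArc hT p q ⊆ A1 ∩ A2 := by
    intro p hp q hq
    apply subset_inter
    · rw [← hg1im] at hp hq ⊢
      exact treeArc_subset_arc hT hg1 hp.1 hq.1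
    · rw [← hg2im] at hp hq ⊢
      exact treeArc_subset_arc hT hg2 hp.2 hq.2
  have hcl : IsClosed (A1 ∩ A2) :=
    (arc_closed hg hA1).inter (arc_closed hg hA2)
  obtain ⟨a, b, ha, hb, hab, hD⟩ := interval_of_convex hT hg1
    (by rw [hg1im]; exact inter_subset_left) hcl ⟨w, hw1, hw2⟩ hconv
  have hcab : c ∈ Icc a b := by
    have : w ∈ g A1 '' Icc a b := hD ▸ ⟨hw1, hw2⟩
    obtain ⟨t, ht, htw⟩ := this
    have htI : t ∈ I01 := ⟨le_trans ha.1 ht.1, le_trans ht.2 hb.2⟩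
    rwa [hg1.inj htI hc (by rw [htw, hcw])] at ht
  by_cases hends : c = a ∨ c = b
  · left
    refine ⟨⟨hw1, hw2⟩, ?_⟩
    intro u v hu hv huv hD'
    obtain ⟨hua, hvb⟩ := image_Icc_inj hg1 hu hv ha hb huv hab (by rw [← hD', hD])
    rcases hends with rfl | rfl
    · exact Or.inl (by rw [hua, hcw])
    · exact Or.inr (by rw [hvb, hcw])
  · right
    push_neg at hends
    have hacb : a < c ∧ c < b :=
      ⟨lt_of_le_of_ne hcab.1 (Ne.symm hends.1), lt_of_le_of_ne hcab.2 hends.2⟩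
    rcases lt_or_gt_of_ne hcd with hcd' | hcd'
    · -- leg towards larger parameters
      set m : ℝ := min d b with hm
      have hcm : c < m := lt_min hcd' hacb.2
      have hmI : m ∈ I01 := ⟨le_trans hc.1 hcm.le, le_trans (min_le_right _ _) hb.2⟩
      obtain ⟨hβ, hβim, hβ0, hβ1⟩ := hg1.affine hc hmI (ne_of_lt hcm)
      have hMsub : g A1 '' uIcc c m ⊆ A2 := by
        rw [uIcc_of_le hcm.le]
        intro p hp
        have : p ∈ g A1 '' Icc a b := by
          apply image_mono (Icc_subset_Icc hacb.1.le (min_le_right _ _)) hp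
        rw [← hD] at this
        exact this.2
      obtain ⟨c2, d2, hc2, hd2, hc2d2, hc2w, him⟩ := std hT hβ hg2 (by
        rw [hβim, ← hg2im] at *
        exact hβim ▸ (by rw [hβim]; exact hMsub.trans (by rw [hg2im])))
      refine ⟨c2, d2, hc2, hd2, hc2d2, by rw [hc2w, hβ0, hcw], ?_⟩
      rw [him, hβim]
      apply image_mono
      rw [uIcc_of_le hcm.le, uIcc_of_le hcd'.le]
      exact Icc_subset_Icc le_rfl (min_le_left _ _)
    · -- leg towards smaller parameters
      set m : ℝ := max d a with hm
      have hcm : m < c := max_lt hcd' hacb.1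
      have hmI : m ∈ I01 := ⟨le_trans ha.1 (le_max_right _ _), le_trans hcm.le hc.2⟩
      obtain ⟨hβ, hβim, hβ0, hβ1⟩ := hg1.affine hc hmI (ne_of_gt hcm)
      have hMsub : g A1 '' uIcc c m ⊆ A2 := by
        rw [uIcc_of_ge hcm.le]
        intro p hp
        have : p ∈ g A1 '' Icc a b := by
          apply image_mono (Icc_subset_Icc (le_max_right _ _) hacb.2.le) hp
        rw [← hD] at this
        exact this.2
      obtain ⟨c2, d2, hc2, hd2, hc2d2, hc2w, him⟩ := std hT hβ hg2 (by
        rw [hβim]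
        exact hMsub.trans (by rw [hg2im]))
      refine ⟨c2, d2, hc2, hd2, hc2d2, by rw [hc2w, hβ0, hcw], ?_⟩
      rw [him, hβim]
      apply image_mono
      rw [uIcc_of_ge hcm.le, uIcc_of_ge hcd'.le]
      exact Icc_subset_Icc (le_max_left _ _) le_rfl

/-- Three legs at a point `w`, pairwise meeting only at `w`, force `w` to be an
endpoint of the overlap interval of two of the covering arcs. -/
theorem three_legs {w : T} {A0 A1 A2 : Set T} {c0 d0 c1 d1 c2 d2 : ℝ}
    (hA0 : A0 ∈ s) (hA1 : A1 ∈ s) (hA2 : A2 ∈ s)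
    (hc0 : c0 ∈ I01) (hd0 : d0 ∈ I01) (hc1 : c1 ∈ I01) (hd1 : d1 ∈ I01)
    (hc2 : c2 ∈ I01) (hd2 : d2 ∈ I01)
    (hcd0 : c0 ≠ d0) (hcd1 : c1 ≠ d1) (hcd2 : c2 ≠ d2)
    (hw0 : g A0 c0 = w) (hw1 : g A1 c1 = w) (hw2 : g A2 c2 = w)
    (h01 : g A0 '' uIcc c0 d0 ∩ g A1 '' uIcc c1 d1 ⊆ {w})
    (h02 : g A0 '' uIcc c0 d0 ∩ g A2 '' uIcc c2 d2 ⊆ {w})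
    (h12 : g A1 '' uIcc c1 d1 ∩ g A2 '' uIcc c2 d2 ⊆ {w}) :
    ∃ A B : Set T, A ∈ s ∧ B ∈ s ∧ w ∈ A ∩ B ∧ ∀ u v : ℝ, u ∈ I01 → v ∈ I01 → u ≤ v →
      A ∩ B = g A '' Icc u v → w = g A u ∨ w = g A v := by
  obtain ⟨hg0, hg0im⟩ := hg A0 hA0
  have hwA0 : w ∈ A0 := by
    have h9 : g A0 c0 ∈ g A0 '' I01 := mem_image_of_mem _ hc0
    rw [hg0im, hw0] at h9
    exact h9
  -- transfer leg 1 to A0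
  rcases transfer hT hg hA1 hA0 hwA0 hc1 hd1 hcd1 hw1 with ⟨hmem, hend⟩ | ⟨e1, f1, he1, hf1, hef1, hew1, hsub1⟩
  · exact ⟨A1, A0, hA1, hA0, hmem, hend⟩
  rcases transfer hT hg hA2 hA0 hwA0 hc2 hd2 hcd2 hw2 with ⟨hmem, hend⟩ | ⟨e2, f2, he2, hf2, hef2, hew2, hsub2⟩
  · exact ⟨A2, A0, hA2, hA0, hmem, hend⟩
  -- now all three legs are on A0; derive a contradiction by pigeonhole on sides
  exfalso
  have he1c0 : e1 = c0 := hg0.inj he1 hc0 (by rw [hew1, hw0])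
  have he2c0 : e2 = c0 := hg0.inj he2 hc0 (by rw [hew2, hw0])
  rw [he1c0] at hew1 hsub1 he1 hef1
  rw [he2c0] at hew2 hsub2 he2 hef2
  have k01 : g A0 '' uIcc c0 d0 ∩ g A0 '' uIcc c0 f1 ⊆ {w} :=
    fun p hp => h01 ⟨hp.1, hsub1 hp.2⟩
  have k02 : g A0 '' uIcc c0 d0 ∩ g A0 '' uIcc c0 f2 ⊆ {w} :=
    fun p hp => h02 ⟨hp.1, hsub2 hp.2⟩
  have k12 : g A0 '' uIcc c0 f1 ∩ g A0 '' uIcc c0 f2 ⊆ {w} :=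
    fun p hp => h12 ⟨hsub1 hp.1, hsub2 hp.2⟩
  rw [← hw0] at k01 k02 k12
  rcases lt_or_gt_of_ne hcd0 with s0 | s0 <;>
    rcases lt_or_gt_of_ne hef1 with s1 | s1 <;>
      rcases lt_or_gt_of_ne hef2 with s2 | s2
  · exact overlap hg0 hc0 hd0 hf1 (Or.inl ⟨s0, s1⟩) k01
  · exact overlap hg0 hc0 hd0 hf1 (Or.inl ⟨s0, s1⟩) k01
  · exact overlap hg0 hc0 hd0 hf2 (Or.inl ⟨s0, s2⟩) k02
  · exact overlap hg0 hc0 hf1 hf2 (Or.inr ⟨s1, s2⟩) k12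
  · exact overlap hg0 hc0 hf1 hf2 (Or.inl ⟨s1, s2⟩) k12
  · exact overlap hg0 hc0 hd0 hf2 (Or.inr ⟨s0, s2⟩) k02
  · exact overlap hg0 hc0 hd0 hf1 (Or.inr ⟨s0, s1⟩) k01
  · exact overlap hg0 hc0 hd0 hf1 (Or.inr ⟨s0, s1⟩) k01

end Branch

end TreeAux
namespace TreeAux

variable {T : Type*} [MetricSpace T]

local notation "I01" => Set.Icc (0:ℝ) 1

open Set

variable (hT : IsTreeSpace T)

variable {s : Finset (Set T)} {g : Set T → ℝ → T}
  (hg : ∀ A ∈ s, ArcP (g A) ∧ (g A) '' I01 = A)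
  (hcov : ⋃₀ (s : Set (Set T)) = Set.univ)

include hT hg hcov in
/-- A point at which three arcs meet pairwise only in that point must be an
"endpoint of an overlap interval" point. -/
theorem branch_in_W (W : Set T)
    (hW : ∀ A B : Set T, A ∈ s → B ∈ s → ∀ u v : ℝ, u ∈ I01 → v ∈ I01 → u ≤ v →
      A ∩ B = g A '' Icc u v → g A u ∈ W ∧ g A v ∈ W)
    {w : T} {β0 β1 β2 : ℝ → T}
    (hβ0 : ArcP β0) (hβ1 : ArcP β1) (hβ2 : ArcP β2)
    (h00 : β0 0 = w) (h10 : β1 0 = w) (h20 : β2 0 = w)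
    (hp01 : β0 '' I01 ∩ β1 '' I01 ⊆ {w})
    (hp02 : β0 '' I01 ∩ β2 '' I01 ⊆ {w})
    (hp12 : β1 '' I01 ∩ β2 '' I01 ⊆ {w}) : w ∈ W := by
  -- shrink each leg into a covering arc and standardize
  have hleg : ∀ β : ℝ → T, ArcP β → β 0 = w →
      ∃ (A : Set T) (c d : ℝ), A ∈ s ∧ c ∈ I01 ∧ d ∈ I01 ∧ c ≠ d ∧ g A c = w ∧
        g A '' uIcc c d ⊆ β '' I01 := by
    intro β hβ hβw
    obtain ⟨A, hAs, δ, hδpos, hδ1, hδsub⟩ := cover_right hT hg hcov hβ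
      (left_mem_Icc.2 zero_le_one) one_pos
    obtain ⟨hβ', hβ'im, hβ'0, hβ'1⟩ := hβ.affine (left_mem_Icc.2 zero_le_one)
      (⟨by linarith, by linarith⟩ : (0:ℝ) + δ ∈ I01) (by intro h; linarith)
    obtain ⟨hgA, hgAim⟩ := hg A hAs
    have hsubA : (fun u : ℝ => β (0 + u * (0 + δ - 0))) '' I01 ⊆ g A '' I01 := by
      rw [hβ'im, uIcc_of_le (by linarith), hgAim]
      simpa using hδsub
    obtain ⟨c, d, hc, hd, hcd, hcw, him⟩ := std hT hβ' hgA hsubA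
    refine ⟨A, c, d, hAs, hc, hd, hcd, ?_, ?_⟩
    · rw [hcw, hβ'0, hβw]
    · rw [him, hβ'im, uIcc_of_le (by linarith : (0:ℝ) ≤ 0 + δ)]
      exact (image_mono (by intro t ht; exact ⟨ht.1, by linarith [ht.2]⟩))
  obtain ⟨A0, c0, d0, hA0, hc0, hd0, hcd0, hw0, hsub0⟩ := hleg β0 hβ0 h00
  obtain ⟨A1, c1, d1, hA1, hc1, hd1, hcd1, hw1, hsub1⟩ := hleg β1 hβ1 h10
  obtain ⟨A2, c2, d2, hA2, hc2, hd2, hcd2, hw2, hsub2⟩ := hleg β2 hβ2 h20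
  obtain ⟨A, B, hAs, hBs, hwAB, hend⟩ := three_legs hT hg hA0 hA1 hA2 hc0 hd0 hc1 hd1 hc2 hd2
    hcd0 hcd1 hcd2 hw0 hw1 hw2
    (fun p hp => hp01 ⟨hsub0 hp.1, hsub1 hp.2⟩)
    (fun p hp => hp02 ⟨hsub0 hp.1, hsub2 hp.2⟩)
    (fun p hp => hp12 ⟨hsub1 hp.1, hsub2 hp.2⟩)
  obtain ⟨hgA, hgAim⟩ := hg A hAs
  obtain ⟨hgB, hgBim⟩ := hg B hBs
  have hconv : ∀ p ∈ A ∩ B, ∀ q ∈ A ∩ B, treeArc hT p q ⊆ A ∩ B := by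
    intro p hp q hq
    apply subset_inter
    · have h9 := treeArc_subset_arc hT hgA (p := p) (q := q)
        (by rw [hgAim]; exact hp.1) (by rw [hgAim]; exact hq.1)
      rwa [hgAim] at h9
    · have h9 := treeArc_subset_arc hT hgB (p := p) (q := q)
        (by rw [hgBim]; exact hp.2) (by rw [hgBim]; exact hq.2)
      rwa [hgBim] at h9
  obtain ⟨u, v, hu, hv, huv, hD⟩ := interval_of_convex hT hgA
    (by rw [hgAim]; exact inter_subset_left)
    ((arc_closed hg hAs).inter (arc_closed hg hBs)) ⟨w, hwAB⟩ hconv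
  obtain ⟨hu', hv'⟩ := hW A B hAs hBs u v hu hv huv hD
  rcases hend u v hu hv huv hD with h | h
  · rwa [h]
  · rwa [h]

end TreeAux
namespace TreeAux

variable {T : Type*} [MetricSpace T]

local notation "I01" => Set.Icc (0:ℝ) 1

open Set Filter

variable (hT : IsTreeSpace T)

theorem tendsto_of_finite {L : Set ℕ} (hL : L.Finite) (x : T) (xs : ℕ → T) :
    Tendsto xs (atTop ⊓ 𝓟 L) (𝓝 x) := by
  rcases hL.bddAbove with ⟨N, hN⟩
  have hbot : (atTop ⊓ 𝓟 L : Filter ℕ) = ⊥ := by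
    rw [← Filter.empty_mem_iff_bot]
    rw [Filter.mem_inf_iff]
    refine ⟨Set.Ioi N, Filter.Ioi_mem_atTop N, L, Filter.mem_principal_self L, ?_⟩
    symm
    apply Set.eq_empty_iff_forall_notMem.2
    rintro n ⟨h1, h2⟩
    exact absurd (hN h2) (not_le.2 h1)
  rw [hbot]
  exact tendsto_bot

include hT in
theorem chain_converges {x : T} {xs : ℕ → T} (hxne : ∀ n, x ≠ xs n) {L : Set ℕ}
    (hchain : ∀ n ∈ L, ∀ m ∈ L, n < m → treeArc hT x (xs m) ⊆ treeArc hT x (xs n)) :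
    ∃ l : T, Tendsto xs (atTop ⊓ 𝓟 L) (𝓝 l) := by
  classical
  by_cases hLne : ∃ n, n ∈ L
  · set n0 : ℕ := Nat.find hLne with hn0
    have hn0L : n0 ∈ L := Nat.find_spec hLne
    have hn0min : ∀ m ∈ L, n0 ≤ m := fun m hm => Nat.find_min' hLne hm
    obtain ⟨γ, hγ, hγim, hγ0, hγ1⟩ := exists_arcP_treeArc hT (hxne n0)
    have hsubP : ∀ m ∈ L, xs m ∈ γ '' I01 := by
      intro m hm
      rcases eq_or_lt_of_le (hn0min m hm) with h | h
      · rw [hγim, ← h]; exact right_mem_treeArc hT x (xs n0)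
      · rw [hγim]
        exact hchain n0 hn0L m hm h (right_mem_treeArc hT x (xs m))
    have hτ : ∀ m : ℕ, ∃ t : ℝ, m ∈ L → t ∈ I01 ∧ γ t = xs m := by
      intro m
      by_cases hm : m ∈ L
      · obtain ⟨t, ht, htm⟩ := hsubP m hm
        exact ⟨t, fun _ => ⟨ht, htm⟩⟩
      · exact ⟨0, fun h => absurd h hm⟩
    choose τ hτspec using hτ
    have hinit : ∀ m ∈ L, treeArc hT x (xs m) = γ '' Icc 0 (τ m) := by
      intro m hm
      obtain ⟨htI, htm⟩ := hτspec m hm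
      have := treeArc_params hT hγ (left_mem_Icc.2 zero_le_one) htI
      rw [hγ0, htm, uIcc_of_le htI.1] at this
      exact this
    have hanti : ∀ a ∈ L, ∀ b ∈ L, a ≤ b → τ b ≤ τ a := by
      intro a ha b hb hab
      rcases eq_or_lt_of_le hab with rfl | h
      · exact le_refl _
      · have hsub := hchain a ha b hb h
        rw [hinit a ha, hinit b hb] at hsub
        have : γ (τ b) ∈ γ '' Icc 0 (τ a) :=
          hsub (mem_image_of_mem _ (right_mem_Icc.2 (hτspec b hb).1.1))
        obtain ⟨r, hr, hrb⟩ := this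
        have hrI : r ∈ I01 := ⟨hr.1, le_trans hr.2 (hτspec a ha).1.2⟩
        rw [← hγ.inj hrI (hτspec b hb).1 hrb]
        exact hr.2
    set tL : Set ℝ := τ '' L with htL
    have htLne : tL.Nonempty := ⟨τ n0, mem_image_of_mem _ hn0L⟩
    have htLbdd : BddBelow tL := ⟨0, by rintro t ⟨m, hm, rfl⟩; exact (hτspec m hm).1.1⟩
    set t0 : ℝ := sInf tL with ht0
    refine ⟨γ t0, ?_⟩
    rw [Metric.tendsto_nhds]
    intro ε hε
    have hcont : ContinuousAt γ t0 := hγ.cont.continuousAt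
    rw [Metric.continuousAt_iff] at hcont
    obtain ⟨η, hη, hcont⟩ := hcont ε hε
    obtain ⟨y, hy, hylt⟩ : ∃ y ∈ tL, y < t0 + η := exists_lt_of_csInf_lt htLne (by linarith)
    obtain ⟨m0, hm0L, rfl⟩ := hy
    have hev : {m : ℕ | m0 ≤ m} ∩ L ⊆ {m | dist (xs m) (γ t0) < ε} := by
      rintro m ⟨hm1, hm2⟩
      have h1 : τ m ≤ τ m0 := hanti m0 hm0L m hm2 hm1
      have h2 : t0 ≤ τ m := csInf_le htLbdd (mem_image_of_mem _ hm2)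
      have h3 : dist (τ m) t0 < η := by
        rw [Real.dist_eq, abs_lt]
        constructor <;> [linarith; linarith]
      have := hcont h3
      rwa [(hτspec m hm2).2] at this
    apply Filter.mem_of_superset _ hev
    exact Filter.inter_mem_inf (Filter.mem_atTop m0) (Filter.mem_principal_self L)
  · push_neg at hLne
    have : L = ∅ := Set.eq_empty_iff_forall_notMem.2 hLne
    refine ⟨x, ?_⟩
    rw [this, Filter.principal_empty, inf_bot_eq]
    exact tendsto_bot

end TreeAux
namespace TreeAux

variable {T : Type*} [MetricSpace T]

local notation "I01" => Set.Icc (0:ℝ) 1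

open Set Filter

variable (hT : IsTreeSpace T)

include hT in
theorem caseB {x : T} {xs : ℕ → T} (hxne : ∀ n, x ≠ xs n)
    (hno : ∀ n m : ℕ, n < m → xs n ∉ treeArc hT x (xs m))
    {s : Finset (Set T)} {g : Set T → ℝ → T}
    (hg : ∀ A ∈ s, ArcP (g A) ∧ (g A) '' I01 = A)
    (hcov : ⋃₀ (s : Set (Set T)) = Set.univ) :
    ∃ (k : ℕ) (L : Fin k → Set ℕ),
      (⋃ i, L i) = Set.univ ∧
      (∀ i j, i ≠ j → Disjoint (L i) (L j)) ∧
      (∀ i, ∀ m ∈ L i, ∀ n ∈ L i, n < m →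
        treeArc hT x (xs m) ⊆ treeArc hT x (xs n)) ∧
      (∀ i, ∃ l : T, Tendsto xs (atTop ⊓ 𝓟 (L i)) (𝓝 l)) := by
  classical
  have hγex : ∀ n : ℕ, ∃ γn : ℝ → T, ArcP γn ∧ γn '' I01 = treeArc hT x (xs n) ∧
      γn 0 = x ∧ γn 1 = xs n := fun n => exists_arcP_treeArc hT (hxne n)
  choose γ hγ hγim hγ0 hγ1 using hγex
  have hEex : ∀ A B : Set T, ∃ Eab : Set T, Eab.Finite ∧ ∀ u v : ℝ, u ∈ I01 → v ∈ I01 →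
      u ≤ v → A ∈ s → B ∈ s → A ∩ B = g A '' Icc u v → g A u ∈ Eab ∧ g A v ∈ Eab := by
    intro A B
    by_cases hAB : A ∈ s ∧ B ∈ s ∧ (A ∩ B).Nonempty
    · obtain ⟨hAs, hBs, hne⟩ := hAB
      obtain ⟨hgA, hgAim⟩ := hg A hAs
      obtain ⟨hgB, hgBim⟩ := hg B hBs
      have hconv : ∀ p ∈ A ∩ B, ∀ q ∈ A ∩ B, treeArc hT p q ⊆ A ∩ B := by
        intro p hp q hq
        apply Set.subset_inter
        · have h9 := treeArc_subset_arc hT hgA (p := p) (q := q)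
            (by rw [hgAim]; exact hp.1) (by rw [hgAim]; exact hq.1)
          rwa [hgAim] at h9
        · have h9 := treeArc_subset_arc hT hgB (p := p) (q := q)
            (by rw [hgBim]; exact hp.2) (by rw [hgBim]; exact hq.2)
          rwa [hgBim] at h9
      obtain ⟨u0, v0, hu0, hv0, huv0, hD0⟩ := interval_of_convex hT hgA
        (by rw [hgAim]; exact inter_subset_left)
        ((arc_closed hg hAs).inter (arc_closed hg hBs)) hne hconv
      refine ⟨{g A u0, g A v0}, (Set.finite_singleton _).insert _, ?_⟩
      intro u v hu hv huv _ _ hD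
      obtain ⟨h1, h2⟩ := image_Icc_inj hgA hu hv hu0 hv0 huv huv0 (hD.symm.trans hD0)
      exact ⟨by rw [h1]; exact Set.mem_insert _ _,
        by rw [h2]; exact Set.mem_insert_of_mem _ rfl⟩
    · refine ⟨∅, Set.finite_empty, ?_⟩
      intro u v hu hv huv hAs hBs hD
      exact absurd ⟨hAs, hBs, ⟨g A u, hD ▸ Set.mem_image_of_mem _ (left_mem_Icc.2 huv)⟩⟩ hAB
  choose E hEfin hEspec using hEex
  set W : Set T := {x} ∪ ⋃ A ∈ (s : Set (Set T)), ⋃ B ∈ (s : Set (Set T)), E A B with hWdef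
  have hWfin : W.Finite := by
    apply (Set.finite_singleton x).union
    apply Set.Finite.biUnion s.finite_toSet
    intro A _
    exact Set.Finite.biUnion s.finite_toSet fun B _ => hEfin A B
  have hxW : x ∈ W := Or.inl rfl
  have hWspec : ∀ A B : Set T, A ∈ s → B ∈ s → ∀ u v : ℝ, u ∈ I01 → v ∈ I01 → u ≤ v →
      A ∩ B = g A '' Icc u v → g A u ∈ W ∧ g A v ∈ W := by
    intro A B hAs hBs u v hu hv huv hD
    obtain ⟨h1, h2⟩ := hEspec A B u v hu hv huv hAs hBs hD
    exact ⟨Or.inr (Set.mem_biUnion hAs (Set.mem_biUnion hBs h1)),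
      Or.inr (Set.mem_biUnion hAs (Set.mem_biUnion hBs h2))⟩
  set Kf : ℕ → Set ℝ := fun n => I01 ∩ (γ n) ⁻¹' W with hKf
  have hKcp : ∀ n, IsCompact (Kf n) := fun n =>
    isCompact_Icc.of_isClosed_subset
      (isClosed_Icc.inter (hWfin.isClosed.preimage (hγ n).cont)) inter_subset_left
  have hKne : ∀ n, (Kf n).Nonempty := fun n =>
    ⟨0, left_mem_Icc.2 zero_le_one, by rw [Set.mem_preimage, hγ0]; exact hxW⟩
  set th : ℕ → ℝ := fun n => sSup (Kf n) with hth
  have hthK : ∀ n, th n ∈ Kf n := fun n => (hKcp n).sSup_mem (hKne n)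
  have hthI : ∀ n, th n ∈ I01 := fun n => (hthK n).1
  set v : ℕ → T := fun n => γ n (th n) with hv
  have hvW : ∀ n, v n ∈ W := fun n => (hthK n).2
  have hle : ∀ n t, t ∈ I01 → γ n t ∈ W → t ≤ th n := fun n t ht htW =>
    le_csSup (hKcp n).bddAbove ⟨ht, htW⟩
  have hinit : ∀ n t, t ∈ I01 → treeArc hT x (γ n t) = γ n '' Icc 0 t := by
    intro n t ht
    have h9 := treeArc_params hT (hγ n) (left_mem_Icc.2 zero_le_one) ht
    rw [hγ0, uIcc_of_le ht.1] at h9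
    exact h9
  have hcolex : ∀ n, ∃ col : (T × Set T × Bool) ⊕ T,
      (th n = 1 ∧ col = Sum.inr (v n)) ∨
      (∃ (A : Set T) (σ : Bool) (c d : ℝ), col = Sum.inl (v n, A, σ) ∧ A ∈ s ∧
        c ∈ I01 ∧ d ∈ I01 ∧ c ≠ d ∧ ((σ = true ∧ c < d) ∨ (σ = false ∧ d < c)) ∧
        g A c = v n ∧ g A '' uIcc c d ⊆ treeArc hT x (xs n) ∧
        (∀ p ∈ g A '' uIcc c d, p ∈ treeArc hT x (v n) → p = v n)) := by
    intro n
    by_cases hth1 : th n = 1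
    · exact ⟨Sum.inr (v n), Or.inl ⟨hth1, rfl⟩⟩
    · have hthlt : th n < 1 := lt_of_le_of_ne (hthI n).2 hth1
      obtain ⟨A, hAs, δ, hδpos, hδ1, hδsub⟩ := cover_right hT hg hcov (hγ n) (hthI n) hthlt
      have hthδ : th n + δ ∈ I01 := ⟨by linarith [(hthI n).1], hδ1⟩
      obtain ⟨hβ, hβim, hβ0, hβ1⟩ := (hγ n).affine (hthI n) hthδ (by linarith)
      obtain ⟨hgA, hgAim⟩ := hg A hAs
      have hsubA : (fun u : ℝ => γ n (th n + u * (th n + δ - th n))) '' I01 ⊆ g A '' I01 := by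
        rw [hβim, uIcc_of_le (by linarith), hgAim]
        exact hδsub
      obtain ⟨c, d, hc, hd, hcd, hcw, him⟩ := std hT hβ hgA hsubA
      have hcw' : g A c = v n := by rw [hcw]; exact hβ0
      have hlegP : g A '' uIcc c d ⊆ treeArc hT x (xs n) := by
        rw [him, hβim, uIcc_of_le (by linarith), ← hγim n]
        exact Set.image_mono (fun t ht => ⟨le_trans (hthI n).1 ht.1, le_trans ht.2 hδ1⟩)
      have hlast : ∀ p ∈ g A '' uIcc c d, p ∈ treeArc hT x (v n) → p = v n := by
        intro p hp hpv
        rw [him, hβim, uIcc_of_le (by linarith)] at hp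
        obtain ⟨r, hr, rfl⟩ := hp
        have hrI : r ∈ I01 := ⟨le_trans (hthI n).1 hr.1, le_trans hr.2 hδ1⟩
        rw [hinit n (th n) (hthI n)] at hpv
        obtain ⟨r', hr', hrr'⟩ := hpv
        have hr'I : r' ∈ I01 := ⟨hr'.1, le_trans hr'.2 (hthI n).2⟩
        have heq : r' = r := (hγ n).inj hr'I hrI hrr'
        have heq2 : r = th n := le_antisymm (heq ▸ hr'.2) hr.1
        rw [heq2]
      rcases lt_or_gt_of_ne hcd with h | h
      · exact ⟨Sum.inl (v n, A, true), Or.inr ⟨A, true, c, d, rfl, hAs, hc, hd, hcd,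
          Or.inl ⟨rfl, h⟩, hcw', hlegP, hlast⟩⟩
      · exact ⟨Sum.inl (v n, A, false), Or.inr ⟨A, false, c, d, rfl, hAs, hc, hd, hcd,
          Or.inr ⟨rfl, h⟩, hcw', hlegP, hlast⟩⟩
  choose col hcolspec using hcolex
  have hchain : ∀ n m, n < m → col n = col m →
      treeArc hT x (xs m) ⊆ treeArc hT x (xs n) := by
    intro n m hnm hcoleq
    by_contra hnot
    have hymPn : xs m ∉ treeArc hT x (xs n) := by
      intro h
      apply hnot
      have h9 := treeArc_subset_arc hT (hγ n) (p := x) (q := xs m)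
        (by rw [hγim n]; exact left_mem_treeArc hT x (xs n)) (by rw [hγim n]; exact h)
      rwa [hγim n] at h9
    have hynPm : xs n ∉ treeArc hT x (xs m) := hno n m hnm
    have hSconv : ∀ p ∈ treeArc hT x (xs n) ∩ treeArc hT x (xs m),
        ∀ q ∈ treeArc hT x (xs n) ∩ treeArc hT x (xs m),
        treeArc hT p q ⊆ treeArc hT x (xs n) ∩ treeArc hT x (xs m) := by
      intro p hp q hq
      apply Set.subset_inter
      · have h9 := treeArc_subset_arc hT (hγ n) (p := p) (q := q)
          (by rw [hγim n]; exact hp.1) (by rw [hγim n]; exact hq.1)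
        rwa [hγim n] at h9
      · have h9 := treeArc_subset_arc hT (hγ m) (p := p) (q := q)
          (by rw [hγim m]; exact hp.2) (by rw [hγim m]; exact hq.2)
        rwa [hγim m] at h9
    have hxS : x ∈ treeArc hT x (xs n) ∩ treeArc hT x (xs m) :=
      ⟨left_mem_treeArc hT x (xs n), left_mem_treeArc hT x (xs m)⟩
    obtain ⟨a, b, ha, hb, hab, hD⟩ := interval_of_convex hT (hγ n)
      (by rw [hγim n]; exact inter_subset_left)
      ((treeArc_isClosed hT x (xs n)).inter (treeArc_isClosed hT x (xs m)))
      ⟨x, hxS⟩ hSconv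
    have ha0 : a = 0 := by
      obtain ⟨r, hr, hrx⟩ : x ∈ γ n '' Icc a b := hD ▸ hxS
      have hrI : r ∈ I01 := ⟨le_trans ha.1 hr.1, le_trans hr.2 hb.2⟩
      have hr0 : r = 0 := (hγ n).inj hrI (left_mem_Icc.2 zero_le_one) (by rw [hrx, hγ0])
      exact le_antisymm (by rw [← hr0]; exact hr.1) ha.1
    subst ha0
    set w : T := γ n b with hwdef
    have hwS : w ∈ treeArc hT x (xs n) ∩ treeArc hT x (xs m) :=
      hD ▸ Set.mem_image_of_mem _ (right_mem_Icc.2 hab)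
    have hSarc : treeArc hT x (xs n) ∩ treeArc hT x (xs m) = treeArc hT x w := by
      rw [hD]; exact (hinit n b hb).symm
    have hwnen : w ≠ xs n := fun h => hynPm (h ▸ hwS.2)
    have hwnem : w ≠ xs m := fun h => hymPn (h ▸ hwS.1)
    have hblt : b < 1 := lt_of_le_of_ne hb.2 (fun h => hwnen (by rw [hwdef, h, hγ1 n]))
    obtain ⟨b', hb'I, hb'w⟩ : ∃ b' ∈ I01, γ m b' = w := by
      have h9 : w ∈ γ m '' I01 := by rw [hγim m]; exact hwS.2
      obtain ⟨b', h1, h2⟩ := h9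
      exact ⟨b', h1, h2⟩
    have hb'lt : b' < 1 :=
      lt_of_le_of_ne hb'I.2 (fun h => hwnem (by rw [← hb'w, h, hγ1 m]))
    have hSarcm : treeArc hT x w = γ m '' Icc 0 b' := by rw [← hb'w, hinit m b' hb'I]
    have hSnm : γ n '' Icc 0 b = γ m '' Icc 0 b' := (hD.symm.trans hSarc).trans hSarcm
    have hmeet_n : ∀ p, p ∈ γ n '' Icc 0 b → p ∈ γ n '' Icc b 1 → p = w := by
      rintro p ⟨r, hr, rfl⟩ ⟨r', hr', hrr'⟩
      have hrI : r ∈ I01 := ⟨hr.1, le_trans hr.2 hb.2⟩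
      have hr'I : r' ∈ I01 := ⟨le_trans hb.1 hr'.1, hr'.2⟩
      have : r' = r := (hγ n).inj hr'I hrI hrr'
      have hrb : r = b := le_antisymm hr.2 (by rw [← this]; exact hr'.1)
      rw [hrb]
    have hmeet_m : ∀ p, p ∈ γ m '' Icc 0 b' → p ∈ γ m '' Icc b' 1 → p = w := by
      rintro p ⟨r, hr, rfl⟩ ⟨r', hr', hrr'⟩
      have hrI : r ∈ I01 := ⟨hr.1, le_trans hr.2 hb'I.2⟩
      have hr'I : r' ∈ I01 := ⟨le_trans hb'I.1 hr'.1, hr'.2⟩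
      have : r' = r := (hγ m).inj hr'I hrI hrr'
      have hrb : r = b' := le_antisymm hr.2 (by rw [← this]; exact hr'.1)
      rw [hrb, hb'w]
    rcases hcolspec n with ⟨hth1n, hcoln⟩ |
      ⟨A, σ, c, d, hcoln, hAs, hc, hd, hcd, hσ, hcv, hsubPn, hlastn⟩
    · rcases hcolspec m with ⟨hth1m, hcolm⟩ | ⟨A', σ', c', d', hcolm, _⟩
      · rw [hcoln, hcolm] at hcoleq
        have hvnm : v n = v m := by simpa using hcoleq
        have h1 : v n = xs n := by show γ n (th n) = xs n; rw [hth1n, hγ1 n]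
        have h2 : v m = xs m := by show γ m (th m) = xs m; rw [hth1m, hγ1 m]
        exact hynPm (by rw [← h1, hvnm, h2]; exact right_mem_treeArc hT x (xs m))
      · rw [hcoln, hcolm] at hcoleq
        exact absurd hcoleq (by simp)
    · rcases hcolspec m with ⟨hth1m, hcolm⟩ |
        ⟨A', σ', c', d', hcolm, hAs', hc', hd', hcd', hσ', hcv', hsubPm, hlastm⟩
      · rw [hcoln, hcolm] at hcoleq
        exact absurd hcoleq (by simp)
      · rw [hcoln, hcolm] at hcoleq
        simp only [Sum.inl.injEq, Prod.mk.injEq] at hcoleq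
        obtain ⟨hvnm, hAA', hσσ'⟩ := hcoleq
        rw [← hAA'] at hcv' hsubPm hlastm hAs'
        rw [← hσσ'] at hσ'
        have hwW : w ∈ W := by
          by_cases hwx : w = x
          · rw [hwx]; exact hxW
          · have hb0 : b ≠ 0 := fun h => hwx (by rw [hwdef, h, hγ0 n])
            have hb'0 : b' ≠ 0 := fun h => hwx (by rw [← hb'w, h, hγ0 m])
            obtain ⟨hL0, hL0im, hL00, _⟩ :=
              (hγ n).affine hb (left_mem_Icc.2 zero_le_one) hb0
            obtain ⟨hL1, hL1im, hL10, _⟩ :=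
              (hγ n).affine hb (right_mem_Icc.2 zero_le_one) (ne_of_lt hblt)
            obtain ⟨hL2, hL2im, hL20, _⟩ :=
              (hγ m).affine hb'I (right_mem_Icc.2 zero_le_one) (ne_of_lt hb'lt)
            have him0 : (fun u : ℝ => γ n (b + u * (0 - b))) '' I01 = γ n '' Icc 0 b := by
              rw [hL0im, uIcc_comm, uIcc_of_le hab]
            have him1 : (fun u : ℝ => γ n (b + u * (1 - b))) '' I01 = γ n '' Icc b 1 := by
              rw [hL1im, uIcc_of_le hblt.le]
            have him2 : (fun u : ℝ => γ m (b' + u * (1 - b'))) '' I01 = γ m '' Icc b' 1 := by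
              rw [hL2im, uIcc_of_le hb'lt.le]
            apply branch_in_W hT hg hcov W hWspec hL0 hL1 hL2 hL00 hL10
              (by rw [hL20]; exact hb'w)
            · rw [him0, him1]
              rintro p ⟨h1, h2⟩
              exact hmeet_n p h1 h2
            · rw [him0, him2, hSnm]
              rintro p ⟨h1, h2⟩
              exact hmeet_m p h1 h2
            · rw [him1, him2]
              rintro p ⟨h1, h2⟩
              have hpPn : p ∈ treeArc hT x (xs n) := by
                rw [← hγim n]
                exact Set.image_mono (Icc_subset_Icc hb.1 le_rfl) h1
              have hpPm : p ∈ treeArc hT x (xs m) := by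
                rw [← hγim m]
                exact Set.image_mono (Icc_subset_Icc hb'I.1 le_rfl) h2
              have : p ∈ γ n '' Icc 0 b := hD ▸ ⟨hpPn, hpPm⟩
              exact hmeet_n p this h1
        have hbth : b ≤ th n := hle n b hb hwW
        have hvnS : v n ∈ treeArc hT x (xs n) ∩ treeArc hT x (xs m) := by
          constructor
          · rw [← hγim n]; exact Set.mem_image_of_mem _ (hthI n)
          · rw [hvnm, ← hγim m]; exact Set.mem_image_of_mem _ (hthI m)
        have hthb : th n ≤ b := by
          obtain ⟨r, hr, hrv⟩ : v n ∈ γ n '' Icc 0 b := hD ▸ hvnS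
          have hrI : r ∈ I01 := ⟨hr.1, le_trans hr.2 hb.2⟩
          have : r = th n := (hγ n).inj hrI (hthI n) hrv
          rw [← this]; exact hr.2
        have hbeq : b = th n := le_antisymm hbth hthb
        have hwv : w = v n := by rw [hwdef, hbeq]
        obtain ⟨hgA, hgAim⟩ := hg A hAs
        have hcc' : c = c' := hgA.inj hc hc' (by rw [hcv, hcv', hvnm])
        have hSv : treeArc hT x (xs n) ∩ treeArc hT x (xs m) = treeArc hT x (v n) := by
          rw [hSarc, hwv]
        rcases hσ with ⟨hσt, hcdlt⟩ | ⟨hσf, hcdgt⟩ <;>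
          rcases hσ' with ⟨hσt', hcdlt'⟩ | ⟨hσf', hcdgt'⟩
        · -- both legs to the right of c
          rw [← hcc'] at hcdlt'
          set q : T := g A (min d d') with hqdef
          have hcmin : c < min d d' := lt_min hcdlt hcdlt'
          have hqn : q ∈ g A '' uIcc c d := by
            rw [uIcc_of_le hcdlt.le]
            exact Set.mem_image_of_mem _ ⟨hcmin.le, min_le_left _ _⟩
          have hqm : q ∈ g A '' uIcc c' d' := by
            rw [← hcc', uIcc_of_le hcdlt'.le]
            exact Set.mem_image_of_mem _ ⟨hcmin.le, min_le_right _ _⟩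
          have hqv : q ∈ treeArc hT x (v n) := hSv ▸ ⟨hsubPn hqn, hsubPm hqm⟩
          have := hlastn q hqn hqv
          rw [hqdef, ← hcv] at this
          have hminI : min d d' ∈ I01 := ⟨le_trans hc.1 hcmin.le, le_trans (min_le_left _ _) hd.2⟩
          exact absurd (hgA.inj hminI hc this) (ne_of_gt hcmin)
        · rw [hσt] at hσf'; simp at hσf'
        · rw [hσf] at hσt'; simp at hσt'
        · rw [← hcc'] at hcdgt'
          set q : T := g A (max d d') with hqdef
          have hcmax : max d d' < c := max_lt hcdgt hcdgt'
          have hqn : q ∈ g A '' uIcc c d := by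
            rw [uIcc_of_ge hcdgt.le]
            exact Set.mem_image_of_mem _ ⟨le_max_left _ _, hcmax.le⟩
          have hqm : q ∈ g A '' uIcc c' d' := by
            rw [← hcc', uIcc_of_ge hcdgt'.le]
            exact Set.mem_image_of_mem _ ⟨le_max_right _ _, hcmax.le⟩
          have hqv : q ∈ treeArc hT x (v n) := hSv ▸ ⟨hsubPn hqn, hsubPm hqm⟩
          have := hlastn q hqn hqv
          rw [hqdef, ← hcv] at this
          have hmaxI : max d d' ∈ I01 := ⟨le_trans hd.1 (le_max_left _ _), le_trans hcmax.le hc.2⟩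
          exact absurd (hgA.inj hmaxI hc this) (ne_of_lt hcmax)
  -- assemble the partition from the finitely many colors
  set R : Set ((T × Set T × Bool) ⊕ T) := Set.range col with hR
  have hRfin : R.Finite := by
    apply Set.Finite.subset (Set.Finite.union
      ((hWfin.prod ((s.finite_toSet).prod (Set.finite_univ (α := Bool)))).image Sum.inl)
      (hWfin.image Sum.inr))
    rintro _ ⟨n, rfl⟩
    rcases hcolspec n with ⟨h1, h2⟩ | ⟨A, σ, c, d, h2, hAs, _⟩
    · rw [h2]
      exact Or.inr ⟨v n, hvW n, rfl⟩
    · rw [h2]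
      exact Or.inl ⟨(v n, A, σ), ⟨hvW n, hAs, Set.mem_univ _⟩, rfl⟩
  haveI hfin : Fintype ↥R := hRfin.fintype
  set e := Fintype.equivFin ↥R with he
  refine ⟨Fintype.card ↥R, fun i => {n | col n = (e.symm i : ↥R).1}, ?_, ?_, ?_, ?_⟩
  · ext n
    simp only [Set.mem_iUnion, Set.mem_univ, iff_true]
    refine ⟨e ⟨col n, Set.mem_range_self n⟩, ?_⟩
    show col n = (e.symm (e ⟨col n, Set.mem_range_self n⟩) : ↥R).1
    rw [Equiv.symm_apply_apply]
  · intro i j hij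
    rw [Set.disjoint_left]
    intro n h1 h2
    apply hij
    apply e.symm.injective
    apply Subtype.ext
    rw [← h1, ← h2]
  · intro i m hm n hn hnm
    exact hchain n m hnm (hn.trans hm.symm)
  · intro i
    apply chain_converges hT hxne
    intro n hn m hm hnm
    exact hchain n m hnm (hn.trans hm.symm)

end TreeAux
/-- a sequence consistent with `x` splits into finitely many
arc-monotone, convergent subsequences. -/
theorem consistent_sequence_partition {T : Type*} [MetricSpace T]
    (hT : IsTreeSpace T) (x : T) (xs : ℕ → T)
    (hcons : ∀ m n : ℕ, n < m → xs m ∈ Comp ({xs n}ᶜ) x) :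
    ∃ (k : ℕ) (L : Fin k → Set ℕ),
      (⋃ i, L i) = Set.univ ∧
      (∀ i j, i ≠ j → Disjoint (L i) (L j)) ∧
      (∀ i, ∀ m ∈ L i, ∀ n ∈ L i, n < m →
        treeArc hT x (xs m) ⊆ treeArc hT x (xs n)) ∧
      (∀ i, ∃ l : T, Tendsto xs (atTop ⊓ 𝓟 (L i)) (𝓝 l)) := by
  classical
  by_cases hxs : ∃ n, xs n = x
  · -- the sequence hits `x`; from that moment on it is constantly `x`
    set N : ℕ := Nat.find hxs with hNdef
    have hN : xs N = x := Nat.find_spec hxs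
    have hafter : ∀ m, N ≤ m → xs m = x := by
      intro m hm
      rcases eq_or_lt_of_le hm with h | h
      · rw [← h]; exact hN
      · have h9 := hcons m N h
        rw [hN] at h9
        have hxx : x ∉ ({x}ᶜ : Set T) := by simp
        have hcomp : Comp ({x}ᶜ : Set T) x = {x} := by
          unfold Comp
          rw [if_neg hxx]
        rw [hcomp] at h9
        exact h9
    set LA : Fin (N+1) → Set ℕ := fun i => if (i : ℕ) = N then Set.Ici N else {(i : ℕ)}
      with hLAdef
    have hLAval : ∀ i : Fin (N+1), LA i = if (i : ℕ) = N then Set.Ici N else {(i : ℕ)} :=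
      fun i => rfl
    refine ⟨N + 1, LA, ?_, ?_, ?_, ?_⟩
    · ext n
      simp only [Set.mem_iUnion, Set.mem_univ, iff_true]
      by_cases hn : N ≤ n
      · refine ⟨⟨N, Nat.lt_succ_self N⟩, ?_⟩
        rw [hLAval, if_pos rfl]
        exact hn
      · refine ⟨⟨n, by omega⟩, ?_⟩
        rw [hLAval, if_neg (by simp; omega)]
        exact Set.mem_singleton n
    · intro i j hij
      rw [Set.disjoint_left]
      intro n h1 h2
      rw [hLAval] at h1
      rw [hLAval] at h2
      by_cases hi : (i : ℕ) = N <;> by_cases hj : (j : ℕ) = N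
      · exact hij (Fin.ext (hi.trans hj.symm))
      · rw [if_pos hi] at h1
        rw [if_neg hj] at h2
        rw [Set.mem_Ici] at h1
        rw [Set.mem_singleton_iff] at h2
        have : (j : ℕ) < N + 1 := j.2
        omega
      · rw [if_neg hi] at h1
        rw [if_pos hj] at h2
        rw [Set.mem_Ici] at h2
        rw [Set.mem_singleton_iff] at h1
        have : (i : ℕ) < N + 1 := i.2
        omega
      · rw [if_neg hi] at h1
        rw [if_neg hj] at h2
        rw [Set.mem_singleton_iff] at h1
        rw [Set.mem_singleton_iff] at h2
        exact hij (Fin.ext (h1 ▸ h2 ▸ rfl))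
    · intro i m hm n hn hnm
      rw [hLAval] at hm hn
      by_cases hi : (i : ℕ) = N
      · rw [if_pos hi] at hm hn
        rw [hafter m hm, hafter n hn]
      · rw [if_neg hi] at hm hn
        rw [Set.mem_singleton_iff] at hm hn
        omega
    · intro i
      rw [hLAval]
      by_cases hi : (i : ℕ) = N
      · refine ⟨x, ?_⟩
        rw [if_pos hi]
        apply Filter.Tendsto.congr' _ (tendsto_const_nhds (x := x))
        apply Filter.eventually_of_mem (Filter.mem_inf_of_right
          (Filter.mem_principal_self (Set.Ici N)))
        intro m hm
        exact (hafter m hm).symm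
      · refine ⟨x, ?_⟩
        rw [if_neg hi]
        exact TreeAux.tendsto_of_finite (Set.finite_singleton _) x xs
  · -- the sequence avoids `x`
    push_neg at hxs
    have hxne : ∀ n, x ≠ xs n := fun n => (hxs n).symm
    rcases hT.finiteArcs with ⟨x', hx'⟩ | ⟨s, hs, hcov⟩
    · exfalso
      apply hxs 0
      have h1 : xs 0 ∈ ({x'} : Set T) := by rw [← hx']; trivial
      have h2 : x ∈ ({x'} : Set T) := by rw [← hx']; trivial
      rw [Set.mem_singleton_iff] at h1 h2
      rw [h1, h2]
    · have hgex : ∀ A : Set T, ∃ γA : ℝ → T,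
          A ∈ s → TreeAux.ArcP γA ∧ γA '' Set.Icc (0:ℝ) 1 = A := by
        intro A
        by_cases hA : A ∈ s
        · obtain ⟨γA, h1, h2⟩ := TreeAux.exists_arcP_of_isArc (hs A hA)
          exact ⟨γA, fun _ => ⟨h1, h2⟩⟩
        · exact ⟨fun _ => x, fun h => absurd h hA⟩
      choose g hgspec using hgex
      have hg : ∀ A ∈ s, TreeAux.ArcP (g A) ∧ (g A) '' Set.Icc (0:ℝ) 1 = A :=
        fun A hA => hgspec A hA
      have hno : ∀ n m : ℕ, n < m → xs n ∉ treeArc hT x (xs m) := by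
        intro n m hnm
        have h9 := hcons m n hnm
        have hmem : x ∈ ({xs n}ᶜ : Set T) := by
          simp only [Set.mem_compl_iff, Set.mem_singleton_iff]
          exact hxne n
        have hcomp : Comp ({xs n}ᶜ : Set T) x = connectedComponentIn ({xs n}ᶜ : Set T) x := by
          unfold Comp
          rw [if_pos hmem]
        rw [hcomp] at h9
        exact TreeAux.cutpoint hT hg hcov (hxs n) h9
      exact TreeAux.caseB hT hxne hno hg hcov
end
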